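/- arXiv:2210.12411 — 10 statements merged into one kernel-verified Lean document; each statement's English description precedes it below -/
import Mathlib

section
/- Let a_n denote the number of maximal Riviera configurations of length n, let A be the explicit 6×6 transfer matrix and let a be the vector (0,0,1,1,1,0). Then for every n ≥ 3 one has a_n = aᵀ · A^{n−3} · a (the dot product of a with the vector A^{n−3}·a). -/
/-- A Riviera configuration of length `n`: zero-padded outside `{0, …, n−1}`. -/
def RivieraConfig (n : ℕ) (c : ℤ → Bool) : Prop :=
  ∀ j : ℤ, j < 0 ∨ (n : ℤ) ≤ j → c j = false

/-- Permissibility: no occupied lot has both neighbors occupied. -/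
def RivieraPermissible (c : ℤ → Bool) : Prop :=
  ¬ ∃ i : ℤ, c (i - 1) = true ∧ c i = true ∧ c (i + 1) = true

/-- Maximality: permissible and no house can be added. -/
def RivieraMaximal (n : ℕ) (c : ℤ → Bool) : Prop :=
  RivieraPermissible c ∧
    ∀ j : ℤ, 0 ≤ j → j < (n : ℤ) → c j = false →
      ¬ RivieraPermissible (Function.update c j true)

/-- The 6×6 transfer matrix of the Riviera model. -/
def transferA : Matrix (Fin 6) (Fin 6) ℕ :=
  !![0,1,0,0,0,0;
     0,0,1,0,0,0;
     0,0,0,1,0,0;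
     1,0,0,0,1,0;
     0,0,1,0,0,1;
     0,0,0,0,1,0]

/-- zero at j is covered -/
def Cov (c : ℤ → Bool) (j : ℤ) : Prop :=
  (c (j-2) = true ∧ c (j-1) = true) ∨ (c (j-1) = true ∧ c (j+1) = true) ∨
    (c (j+1) = true ∧ c (j+2) = true)

lemma riv_maximal_iff (n : ℕ) (c : ℤ → Bool)
    (hperm : RivieraPermissible c) :
    RivieraMaximal n c ↔
      ∀ j : ℤ, 0 ≤ j → j < (n:ℤ) → c j = false → Cov c j := by
  constructor
  · rintro ⟨-, hmax⟩ j h0 h1 hz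
    have h := hmax j h0 h1 hz
    rw [RivieraPermissible, not_not] at h
    obtain ⟨i, t1, t2, t3⟩ := h
    rcases eq_or_ne i j with rfl | hij
    · refine Or.inr (Or.inl ⟨?_, ?_⟩)
      · rwa [Function.update_of_ne (by omega)] at t1
      · rwa [Function.update_of_ne (by omega)] at t3
    · rcases eq_or_ne i (j+1) with rfl | hij1
      · refine Or.inr (Or.inr ⟨?_, ?_⟩)
        · rwa [Function.update_of_ne (by omega)] at t2
        · rwa [show (j+1)+1 = j+2 by ring, Function.update_of_ne (by omega)] at t3
      · rcases eq_or_ne i (j-1) with rfl | hij2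
        · refine Or.inl ⟨?_, ?_⟩
          · rwa [show (j-1)-1 = j-2 by ring, Function.update_of_ne (by omega)] at t1
          · rwa [Function.update_of_ne (by omega)] at t2
        · exact absurd ⟨i, by rwa [Function.update_of_ne (by omega)] at t1,
            by rwa [Function.update_of_ne (by omega)] at t2,
            by rwa [Function.update_of_ne (by omega)] at t3⟩ hperm
  · intro h
    refine ⟨hperm, fun j h0 h1 hz hp => ?_⟩
    rcases h j h0 h1 hz with ⟨p1, p2⟩ | ⟨p1, p2⟩ | ⟨p1, p2⟩
    · exact hp ⟨j-1, by rwa [show (j-1)-1 = j-2 by ring, Function.update_of_ne (by omega)],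
        by rwa [Function.update_of_ne (by omega)], by rw [show (j-1)+1 = j by ring, Function.update_self]⟩
    · exact hp ⟨j, by rwa [Function.update_of_ne (by omega)], by rw [Function.update_self],
        by rwa [Function.update_of_ne (by omega)]⟩
    · exact hp ⟨j+1, by rw [show (j+1)-1 = j by ring, Function.update_self],
        by rwa [Function.update_of_ne (by omega)],
        by rwa [show (j+1)+1 = j+2 by ring, Function.update_of_ne (by omega)]⟩

/-- Prefix-viability predicate: the word occupies positions `[0,k)`, has no
triple, all zeros up to `k-3` are covered, window not `000`, and the `100`
window invariant. -/
def Pref (k : ℕ) (c : ℤ → Bool) : Prop :=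
  (∀ j : ℤ, j < 0 ∨ (k:ℤ) ≤ j → c j = false) ∧
  (∀ i : ℤ, ¬(c (i-1) = true ∧ c i = true ∧ c (i+1) = true)) ∧
  (∀ j : ℤ, 0 ≤ j → j + 3 ≤ (k:ℤ) → c j = false → Cov c j) ∧
  ¬(c ((k:ℤ)-3) = false ∧ c ((k:ℤ)-2) = false ∧ c ((k:ℤ)-1) = false) ∧
  ((c ((k:ℤ)-3) = true ∧ c ((k:ℤ)-2) = false ∧ c ((k:ℤ)-1) = false) → c ((k:ℤ)-4) = true)

def win (k : ℕ) (c : ℤ → Bool) : Bool × Bool × Bool :=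
  (c ((k:ℤ)-3), c ((k:ℤ)-2), c ((k:ℤ)-1))

noncomputable def cnt (k : ℕ) (s : Bool × Bool × Bool) : ℕ :=
  Nat.card {c : ℤ → Bool // Pref k c ∧ win k c = s}

lemma finite_subtype (k : ℕ) (P : (ℤ → Bool) → Prop)
    (hP : ∀ c, P c → ∀ j : ℤ, j < 0 ∨ (k:ℤ) ≤ j → c j = false) :
    Finite {c : ℤ → Bool // P c} := by
  apply Finite.of_injective (f := fun c => (fun i : Fin k => c.1 (i.1 : ℤ)))
  rintro ⟨c, hc⟩ ⟨d, hd⟩ h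
  apply Subtype.ext
  funext j
  show c j = d j
  simp only at h
  by_cases hj : 0 ≤ j ∧ j < (k:ℤ)
  · have := congrFun h ⟨j.toNat, by omega⟩
    simpa [show ((j.toNat : ℕ) : ℤ) = j by omega] using this
  · rw [hP c hc j (by omega), hP d hd j (by omega)]

lemma card_split (k : ℕ) (P : (ℤ → Bool) → Prop)
    (hP : ∀ c, P c → ∀ j : ℤ, j < 0 ∨ (k:ℤ) ≤ j → c j = false) (m : ℤ) :
    Nat.card {c : ℤ → Bool // P c} =
      Nat.card {c : ℤ → Bool // P c ∧ c m = false} +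
        Nat.card {c : ℤ → Bool // P c ∧ c m = true} := by
  have f1 : Finite {c : ℤ → Bool // P c ∧ c m = false} :=
    finite_subtype k _ (fun c hc => hP c hc.1)
  have f2 : Finite {c : ℤ → Bool // P c ∧ c m = true} :=
    finite_subtype k _ (fun c hc => hP c hc.1)
  rw [← Nat.card_sum]
  apply Nat.card_congr
  exact
  { toFun := fun s => if h : s.1 m = true then Sum.inr ⟨s.1, s.2, h⟩
      else Sum.inl ⟨s.1, s.2, by simpa using h⟩
    invFun := Sum.elim (fun s => ⟨s.1, s.2.1⟩) (fun s => ⟨s.1, s.2.1⟩)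
    left_inv := by rintro ⟨c, hc⟩; by_cases h : c m = true <;> simp [h]
    right_inv := by rintro (⟨c, hc, h⟩ | ⟨c, hc, h⟩) <;> simp [h] }

lemma win_eq (k : ℕ) (c : ℤ → Bool) {s1 s2 s3 : Bool} (h : win k c = (s1,s2,s3)) :
    c ((k:ℤ)-3) = s1 ∧ c ((k:ℤ)-2) = s2 ∧ c ((k:ℤ)-1) = s3 := by
  rw [win, Prod.ext_iff, Prod.ext_iff] at h; exact ⟨h.1, h.2.1, h.2.2⟩

lemma win_succ (k : ℕ) (c : ℤ → Bool) :
    win (k+1) c = (c ((k:ℤ)-2), c ((k:ℤ)-1), c (k:ℤ)) := by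
  rw [win, show (((k+1):ℕ):ℤ)-3 = (k:ℤ)-2 by push_cast; ring,
    show (((k+1):ℕ):ℤ)-2 = (k:ℤ)-1 by push_cast; ring,
    show (((k+1):ℕ):ℤ)-1 = (k:ℤ) by push_cast; ring]

lemma step_fwd (k : ℕ) (hk : 3 ≤ k) (x b1 b2 b : Bool) (c : ℤ → Bool)
    (H5 : ¬(x = false ∧ b1 = false ∧ b2 = false))
    (hp : Pref (k+1) c) (hw : win (k+1) c = (b1,b2,b)) (hx : c ((k:ℤ)-3) = x) :
    Pref k (Function.update c (k:ℤ) false) ∧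
      win k (Function.update c (k:ℤ) false) = (x,b1,b2) := by
  obtain ⟨pad, ntr, cov, -, hinv⟩ := hp
  rw [win_succ, Prod.ext_iff, Prod.ext_iff] at hw
  obtain ⟨e1, e2, e3⟩ : c ((k:ℤ)-2) = b1 ∧ c ((k:ℤ)-1) = b2 ∧ c (k:ℤ) = b :=
    ⟨hw.1, hw.2.1, hw.2.2⟩
  have toc : ∀ y : ℤ, Function.update c (k:ℤ) false y = true → c y = true := by
    intro y hy
    by_cases hyk : y = (k:ℤ)
    · subst hyk; rw [Function.update_self] at hy; exact absurd hy (by simp)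
    · rwa [Function.update_of_ne hyk] at hy
  refine ⟨⟨?_, ?_, ?_, ?_, ?_⟩, ?_⟩
  · intro j hj
    by_cases hjk : j = (k:ℤ)
    · subst hjk; exact Function.update_self _ _ _
    · rw [Function.update_of_ne hjk]; exact pad j (by push_cast; omega)
  · rintro i ⟨t1, t2, t3⟩
    exact ntr i ⟨toc _ t1, toc _ t2, toc _ t3⟩
  · intro j h0 h3 hz
    rw [Function.update_of_ne (by omega)] at hz
    have hcov := cov j h0 (by push_cast; omega) hz
    unfold Cov at hcov ⊢
    rwa [Function.update_of_ne (by omega : j-2 ≠ (k:ℤ)),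
      Function.update_of_ne (by omega : j-1 ≠ (k:ℤ)),
      Function.update_of_ne (by omega : j+1 ≠ (k:ℤ)),
      Function.update_of_ne (by omega : j+2 ≠ (k:ℤ))]
  · rw [Function.update_of_ne (by omega : (k:ℤ)-3 ≠ (k:ℤ)),
      Function.update_of_ne (by omega : (k:ℤ)-2 ≠ (k:ℤ)),
      Function.update_of_ne (by omega : (k:ℤ)-1 ≠ (k:ℤ)), hx, e1, e2]
    exact H5
  · rw [Function.update_of_ne (by omega : (k:ℤ)-3 ≠ (k:ℤ)),
      Function.update_of_ne (by omega : (k:ℤ)-2 ≠ (k:ℤ)),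
      Function.update_of_ne (by omega : (k:ℤ)-1 ≠ (k:ℤ)),
      Function.update_of_ne (by omega : (k:ℤ)-4 ≠ (k:ℤ))]
    rintro ⟨i1, i2, i3⟩
    have hcov := cov ((k:ℤ)-2) (by omega) (by push_cast; omega) i2
    rcases hcov with ⟨l1, l2⟩ | ⟨s1, s2⟩ | ⟨r1, r2⟩
    · rwa [show (k:ℤ)-2-2 = (k:ℤ)-4 by ring] at l1
    · rw [show (k:ℤ)-2+1 = (k:ℤ)-1 by ring] at s2
      rw [s2] at i3; exact absurd i3 (by simp)
    · rw [show (k:ℤ)-2+1 = (k:ℤ)-1 by ring] at r1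
      rw [r1] at i3; exact absurd i3 (by simp)
  · rw [win, Function.update_of_ne (by omega : (k:ℤ)-3 ≠ (k:ℤ)),
      Function.update_of_ne (by omega : (k:ℤ)-2 ≠ (k:ℤ)),
      Function.update_of_ne (by omega : (k:ℤ)-1 ≠ (k:ℤ)), hx, e1, e2]

lemma step_bwd (k : ℕ) (hk : 3 ≤ k) (x b1 b2 b : Bool) (c : ℤ → Bool)
    (H1 : ¬(b1 = true ∧ b2 = true ∧ b = true))
    (H2 : b1 = false → (x = true ∨ (b2 = true ∧ b = true)))
    (H3 : ¬(b1 = false ∧ b2 = false ∧ b = false))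
    (H4 : b1 = true → b2 = false → b = false → x = true)
    (hp : Pref k c) (hw : win k c = (x,b1,b2)) :
    Pref (k+1) (Function.update c (k:ℤ) b) ∧
      win (k+1) (Function.update c (k:ℤ) b) = (b1,b2,b) ∧
      Function.update c (k:ℤ) b ((k:ℤ)-3) = x := by
  obtain ⟨pad, ntr, cov, -, hinv⟩ := hp
  obtain ⟨e0, e1, e2⟩ := win_eq _ _ hw
  have hcK : c (k:ℤ) = false := pad _ (by omega)
  have tod : ∀ y : ℤ, y ≠ (k:ℤ) → Function.update c (k:ℤ) b y = c y := by
    intro y hy; exact Function.update_of_ne hy _ _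
  refine ⟨⟨?_, ?_, ?_, ?_, ?_⟩, ?_, ?_⟩
  · intro j hj
    rw [tod j (by push_cast at hj ⊢; omega)]
    exact pad j (by push_cast at hj ⊢; omega)
  · rintro i ⟨t1, t2, t3⟩
    by_cases h1 : i - 1 = (k:ℤ)
    · rw [show i = (k:ℤ)+1 by omega, tod _ (by omega)] at t2
      rw [pad _ (by omega)] at t2; exact absurd t2 (by simp)
    · by_cases h2 : i = (k:ℤ)
      · rw [show i+1 = (k:ℤ)+1 by omega, tod _ (by omega), pad _ (by omega)] at t3
        exact absurd t3 (by simp)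
      · by_cases h3 : i + 1 = (k:ℤ)
        · rw [show i-1 = (k:ℤ)-2 by omega, tod _ (by omega), e1] at t1
          rw [show i = (k:ℤ)-1 by omega, tod _ (by omega), e2] at t2
          rw [h3, Function.update_self] at t3
          exact H1 ⟨t1, t2, t3⟩
        · exact ntr i ⟨by rwa [tod _ h1] at t1, by rwa [tod _ h2] at t2,
            by rwa [tod _ h3] at t3⟩
  · intro j h0 h3 hz
    push_cast at h3
    by_cases hj : j + 3 ≤ (k:ℤ)
    · rw [tod _ (by omega)] at hz
      have hcov := cov j h0 hj hz
      unfold Cov at hcov ⊢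
      rwa [tod _ (by omega : j-2 ≠ (k:ℤ)), tod _ (by omega : j-1 ≠ (k:ℤ)),
        tod _ (by omega : j+1 ≠ (k:ℤ)), tod _ (by omega : j+2 ≠ (k:ℤ))]
    · have hj2 : j = (k:ℤ)-2 := by omega
      subst hj2
      rw [tod _ (by omega), e1] at hz
      rcases H2 hz with hx1 | ⟨hb2, hb⟩
      · rcases Bool.eq_false_or_eq_true b2 with h2t | h2f
        · right; left
          constructor
          · rw [show (k:ℤ)-2-1 = (k:ℤ)-3 by ring, tod _ (by omega), e0, hx1]
          · rw [show (k:ℤ)-2+1 = (k:ℤ)-1 by ring, tod _ (by omega), e2, h2t]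
        · -- window (1,0,0): use invariant
          have h4 : c ((k:ℤ)-4) = true := hinv ⟨by rw [e0, hx1], by rw [e1, hz], by rw [e2, h2f]⟩
          left
          constructor
          · rw [show (k:ℤ)-2-2 = (k:ℤ)-4 by ring, tod _ (by omega)]; exact h4
          · rw [show (k:ℤ)-2-1 = (k:ℤ)-3 by ring, tod _ (by omega), e0, hx1]
      · right; right
        constructor
        · rw [show (k:ℤ)-2+1 = (k:ℤ)-1 by ring, tod _ (by omega), e2, hb2]
        · rw [show (k:ℤ)-2+2 = (k:ℤ) by ring, Function.update_self, hb]
  · rw [show (((k+1):ℕ):ℤ)-3 = (k:ℤ)-2 by push_cast; ring,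
      show (((k+1):ℕ):ℤ)-2 = (k:ℤ)-1 by push_cast; ring,
      show (((k+1):ℕ):ℤ)-1 = (k:ℤ) by push_cast; ring,
      tod _ (by omega), tod _ (by omega), Function.update_self, e1, e2]
    exact H3
  · rw [show (((k+1):ℕ):ℤ)-3 = (k:ℤ)-2 by push_cast; ring,
      show (((k+1):ℕ):ℤ)-2 = (k:ℤ)-1 by push_cast; ring,
      show (((k+1):ℕ):ℤ)-1 = (k:ℤ) by push_cast; ring,
      show (((k+1):ℕ):ℤ)-4 = (k:ℤ)-3 by push_cast; ring,
      tod _ (by omega), tod _ (by omega), Function.update_self, e1, e2]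
    rintro ⟨i1, i2, i3⟩
    rw [tod _ (by omega), e0, H4 i1 i2 i3]
  · rw [win_succ, tod _ (by omega), tod _ (by omega), Function.update_self, e1, e2]
  · rw [tod _ (by omega), e0]

lemma card_step (k : ℕ) (hk : 3 ≤ k) (x b1 b2 b : Bool)
    (H1 : ¬(b1 = true ∧ b2 = true ∧ b = true))
    (H2 : b1 = false → (x = true ∨ (b2 = true ∧ b = true)))
    (H3 : ¬(b1 = false ∧ b2 = false ∧ b = false))
    (H4 : b1 = true → b2 = false → b = false → x = true)
    (H5 : ¬(x = false ∧ b1 = false ∧ b2 = false)) :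
    Nat.card {c : ℤ → Bool //
        (Pref (k+1) c ∧ win (k+1) c = (b1,b2,b)) ∧ c ((k:ℤ)-3) = x}
      = cnt k (x,b1,b2) := by
  apply Nat.card_congr
  refine
  { toFun := fun s => ⟨Function.update s.1 (k:ℤ) false,
      step_fwd k hk x b1 b2 b s.1 H5 s.2.1.1 s.2.1.2 s.2.2⟩
    invFun := fun s => ⟨Function.update s.1 (k:ℤ) b,
      ⟨⟨(step_bwd k hk x b1 b2 b s.1 H1 H2 H3 H4 s.2.1 s.2.2).1,
        (step_bwd k hk x b1 b2 b s.1 H1 H2 H3 H4 s.2.1 s.2.2).2.1⟩,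
        (step_bwd k hk x b1 b2 b s.1 H1 H2 H3 H4 s.2.1 s.2.2).2.2⟩⟩
    left_inv := ?_
    right_inv := ?_ }
  · rintro ⟨c, ⟨hp, hw⟩, hx⟩
    apply Subtype.ext
    show Function.update (Function.update c _ false) _ b = c
    have e3 : c (k:ℤ) = b := by
      have h := hw; rw [win_succ, Prod.ext_iff, Prod.ext_iff] at h; exact h.2.2
    rw [Function.update_idem, ← e3, Function.update_eq_self]
  · rintro ⟨c, hp, hw⟩
    apply Subtype.ext
    have e3 : c (k:ℤ) = false := hp.1 _ (by omega)
    show Function.update (Function.update c _ b) _ false = c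
    rw [Function.update_idem, ← e3, Function.update_eq_self]

lemma card_dead (k : ℕ) (hk : 3 ≤ k) (x b1 b2 b : Bool)
    (H : (x = false ∧ b1 = false ∧ b2 = false ∧ b = true) ∨
         (x = true ∧ b1 = true ∧ b2 = true) ∨
         (x = false ∧ b1 = true ∧ b2 = false ∧ b = false) ∨
         (x = false ∧ b1 = false ∧ b2 = true ∧ b = false)) :
    Nat.card {c : ℤ → Bool //
        (Pref (k+1) c ∧ win (k+1) c = (b1,b2,b)) ∧ c ((k:ℤ)-3) = x} = 0 := by
  have : IsEmpty {c : ℤ → Bool //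
      (Pref (k+1) c ∧ win (k+1) c = (b1,b2,b)) ∧ c ((k:ℤ)-3) = x} := by
    constructor
    rintro ⟨c, ⟨hp, hw⟩, hx⟩
    obtain ⟨pad, ntr, cov, -, hinv⟩ := hp
    rw [win_succ, Prod.ext_iff, Prod.ext_iff] at hw
    obtain ⟨e1, e2, e3⟩ : c ((k:ℤ)-2) = b1 ∧ c ((k:ℤ)-1) = b2 ∧ c (k:ℤ) = b :=
      ⟨hw.1, hw.2.1, hw.2.2⟩
    rcases H with ⟨q0, q1, q2, q3⟩ | ⟨q0, q1, q2⟩ | ⟨q0, q1, q2, q3⟩ | ⟨q0, q1, q2, q3⟩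
    · -- x=0, window 001 : zero at k-2 uncoverable
      rcases cov ((k:ℤ)-2) (by omega) (by push_cast; omega) (by rw [e1, q1]) with
        ⟨l1, l2⟩ | ⟨s1, s2⟩ | ⟨r1, r2⟩
      · rw [show (k:ℤ)-2-1 = (k:ℤ)-3 by ring, hx, q0] at l2; exact absurd l2 (by simp)
      · rw [show (k:ℤ)-2-1 = (k:ℤ)-3 by ring, hx, q0] at s1; exact absurd s1 (by simp)
      · rw [show (k:ℤ)-2+1 = (k:ℤ)-1 by ring, e2, q2] at r1; exact absurd r1 (by simp)
    · -- x=1, b1=b2=1 : triple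
      exact ntr ((k:ℤ)-2) ⟨by rw [show (k:ℤ)-2-1 = (k:ℤ)-3 by ring, hx, q0],
        by rw [e1, q1], by rw [show (k:ℤ)-2+1 = (k:ℤ)-1 by ring, e2, q2]⟩
    · -- window 100 invariant violated
      have := hinv ⟨by rw [show (((k+1):ℕ):ℤ)-3 = (k:ℤ)-2 by push_cast; ring, e1, q1],
        by rw [show (((k+1):ℕ):ℤ)-2 = (k:ℤ)-1 by push_cast; ring, e2, q2],
        by rw [show (((k+1):ℕ):ℤ)-1 = (k:ℤ) by push_cast; ring, e3, q3]⟩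
      rw [show (((k+1):ℕ):ℤ)-4 = (k:ℤ)-3 by push_cast; ring, hx, q0] at this
      exact absurd this (by simp)
    · -- x=0, window 010, append 0 : zero at k-2 uncoverable
      rcases cov ((k:ℤ)-2) (by omega) (by push_cast; omega) (by rw [e1, q1]) with
        ⟨l1, l2⟩ | ⟨s1, s2⟩ | ⟨r1, r2⟩
      · rw [show (k:ℤ)-2-1 = (k:ℤ)-3 by ring, hx, q0] at l2; exact absurd l2 (by simp)
      · rw [show (k:ℤ)-2-1 = (k:ℤ)-3 by ring, hx, q0] at s1; exact absurd s1 (by simp)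
      · rw [show (k:ℤ)-2+2 = (k:ℤ) by ring, e3, q3] at r2; exact absurd r2 (by simp)
  exact Nat.card_of_isEmpty

lemma win3 (c : ℤ → Bool) : win 3 c = (c 0, c 1, c 2) := by
  rw [win, show ((3:ℕ):ℤ)-3 = 0 by norm_num, show ((3:ℕ):ℤ)-2 = 1 by norm_num,
    show ((3:ℕ):ℤ)-1 = 2 by norm_num]

lemma cnt3_one (s1 s2 s3 : Bool)
    (hs : ¬(s1 = true ∧ s2 = true ∧ s3 = true))
    (hcov : s1 = false → s2 = true ∧ s3 = true)
    (h0 : ¬(s1 = false ∧ s2 = false ∧ s3 = false))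
    (hinvOK : ¬(s1 = true ∧ s2 = false ∧ s3 = false)) :
    cnt 3 (s1,s2,s3) = 1 := by
  classical
  set c0 : ℤ → Bool := fun j => if j = 0 then s1 else if j = 1 then s2 else if j = 2 then s3 else false with hc0
  have ev : c0 0 = s1 ∧ c0 1 = s2 ∧ c0 2 = s3 := by
    refine ⟨?_, ?_, ?_⟩ <;> simp [hc0]
  have mem : ∀ y : ℤ, c0 y = true → (0 ≤ y ∧ y ≤ 2) := by
    intro y hy
    by_contra h
    rw [hc0] at hy
    simp only at hy
    rw [if_neg (by omega), if_neg (by omega), if_neg (by omega)] at hy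
    exact absurd hy (by simp)
  have hpref : Pref 3 c0 ∧ win 3 c0 = (s1, s2, s3) := by
    refine ⟨⟨?_, ?_, ?_, ?_, ?_⟩, ?_⟩
    · intro j hj
      rw [hc0]
      simp only
      rw [if_neg (by omega), if_neg (by omega), if_neg (by omega)]
    · rintro i ⟨t1, t2, t3⟩
      have m1 := mem _ t1; have m2 := mem _ t2; have m3 := mem _ t3
      have : i = 1 := by omega
      subst this
      rw [show (1:ℤ)-1 = 0 by norm_num, ev.1] at t1
      rw [ev.2.1] at t2
      rw [show (1:ℤ)+1 = 2 by norm_num, ev.2.2] at t3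
      exact hs ⟨t1, t2, t3⟩
    · intro j hj0 hj3 hz
      have : j = 0 := by push_cast at hj3; omega
      subst this
      rw [ev.1] at hz
      obtain ⟨p2, p3⟩ := hcov hz
      right; right
      rw [show (0:ℤ)+1 = 1 by norm_num, show (0:ℤ)+2 = 2 by norm_num, ev.2.1, ev.2.2]
      exact ⟨p2, p3⟩
    · rw [show ((3:ℕ):ℤ)-3 = 0 by norm_num, show ((3:ℕ):ℤ)-2 = 1 by norm_num,
        show ((3:ℕ):ℤ)-1 = 2 by norm_num, ev.1, ev.2.1, ev.2.2]
      exact h0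
    · rw [show ((3:ℕ):ℤ)-3 = 0 by norm_num, show ((3:ℕ):ℤ)-2 = 1 by norm_num,
        show ((3:ℕ):ℤ)-1 = 2 by norm_num, ev.1, ev.2.1, ev.2.2]
      intro h; exact absurd h hinvOK
    · rw [win3, ev.1, ev.2.1, ev.2.2]
  haveI : Unique {c : ℤ → Bool // Pref 3 c ∧ win 3 c = (s1,s2,s3)} := by
    refine ⟨⟨⟨c0, hpref⟩⟩, ?_⟩
    rintro ⟨c, hp, hw⟩
    apply Subtype.ext
    rw [win3, Prod.ext_iff, Prod.ext_iff] at hw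
    obtain ⟨w1, w2, w3⟩ : c 0 = s1 ∧ c 1 = s2 ∧ c 2 = s3 := ⟨hw.1, hw.2.1, hw.2.2⟩
    show c = c0
    funext j
    rcases eq_or_ne j 0 with rfl | hj0
    · rw [w1, ev.1]
    rcases eq_or_ne j 1 with rfl | hj1
    · rw [w2, ev.2.1]
    rcases eq_or_ne j 2 with rfl | hj2
    · rw [w3, ev.2.2]
    rw [hp.1 j (by omega), hc0]
    simp only
    rw [if_neg hj0, if_neg hj1, if_neg hj2]
  exact Nat.card_unique

lemma cnt3_zero (s1 s2 s3 : Bool)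
    (H : (s1 = true ∧ s2 = false ∧ s3 = false) ∨
         (s1 = false ∧ ¬(s2 = true ∧ s3 = true))) :
    cnt 3 (s1,s2,s3) = 0 := by
  have : IsEmpty {c : ℤ → Bool // Pref 3 c ∧ win 3 c = (s1,s2,s3)} := by
    constructor
    rintro ⟨c, hp, hw⟩
    obtain ⟨pad, ntr, cov, w0, hinv⟩ := hp
    rw [win3, Prod.ext_iff, Prod.ext_iff] at hw
    obtain ⟨w1, w2, w3⟩ : c 0 = s1 ∧ c 1 = s2 ∧ c 2 = s3 := ⟨hw.1, hw.2.1, hw.2.2⟩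
    rcases H with ⟨q1, q2, q3⟩ | ⟨q1, q2⟩
    · -- window 100: invariant forces c (-1) = true, contradicting padding
      have := hinv ⟨by rw [show ((3:ℕ):ℤ)-3 = 0 by norm_num, w1, q1],
        by rw [show ((3:ℕ):ℤ)-2 = 1 by norm_num, w2, q2],
        by rw [show ((3:ℕ):ℤ)-1 = 2 by norm_num, w3, q3]⟩
      rw [show ((3:ℕ):ℤ)-4 = -1 by norm_num, pad (-1) (by omega)] at this
      exact absurd this (by simp)
    · -- s1 = 0, zero at 0 not coverable
      rcases cov 0 le_rfl (by norm_num) (by rw [w1, q1]) with ⟨l1, l2⟩ | ⟨p1, p2⟩ | ⟨r1, r2⟩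
      · rw [show (0:ℤ)-1 = -1 by norm_num, pad (-1) (by omega)] at l2
        exact absurd l2 (by simp)
      · rw [show (0:ℤ)-1 = -1 by norm_num, pad (-1) (by omega)] at p1
        exact absurd p1 (by simp)
      · rw [show (0:ℤ)+2 = 2 by norm_num, w3] at r2
        rw [show (0:ℤ)+1 = 1 by norm_num] at r1
        rw [w2] at r1
        exact q2 ⟨r1, r2⟩
  exact Nat.card_of_isEmpty

lemma cons_val_five' {α : Type*} (x : α) (u : Fin 5 → α) : Matrix.vecCons x u 5 = u 4 := rfl

lemma cnt_split (k : ℕ) (t : Bool × Bool × Bool) :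
    cnt (k+1) t =
      Nat.card {c : ℤ → Bool //
        (Pref (k+1) c ∧ win (k+1) c = t) ∧ c ((k:ℤ)-3) = false} +
      Nat.card {c : ℤ → Bool //
        (Pref (k+1) c ∧ win (k+1) c = t) ∧ c ((k:ℤ)-3) = true} :=
  card_split (k+1) _ (fun c hc => hc.1.1) _

noncomputable def vv (k : ℕ) : Fin 6 → ℕ :=
  ![cnt k (true,false,false), cnt k (false,false,true), cnt k (false,true,true),
    cnt k (true,true,false), cnt k (true,false,true), cnt k (false,true,false)]

def transferA' : Matrix (Fin 6) (Fin 6) ℕ :=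
  !![0,1,0,0,0,0;
     0,0,1,0,0,0;
     0,0,0,1,0,0;
     1,0,0,0,1,0;
     0,0,1,0,0,1;
     0,0,0,0,1,0]

lemma vv_succ (k : ℕ) (hk : 3 ≤ k) :
    vv (k+1) = Matrix.vecMul (vv k) transferA' := by
  have r0 : cnt (k+1) (true,false,false) = cnt k (true,true,false) := by
    rw [cnt_split, card_dead k hk false true false false (by tauto),
      card_step k hk true true false false (by simp) (by simp) (by simp) (by simp) (by simp)]
    omega
  have r1 : cnt (k+1) (false,false,true) = cnt k (true,false,false) := by
    rw [cnt_split, card_dead k hk false false false true (by tauto),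
      card_step k hk true false false true (by simp) (by simp) (by simp) (by simp) (by simp)]
    omega
  have r2 : cnt (k+1) (false,true,true) =
      cnt k (false,false,true) + cnt k (true,false,true) := by
    rw [cnt_split,
      card_step k hk false false true true (by simp) (by simp) (by simp) (by simp) (by simp),
      card_step k hk true false true true (by simp) (by simp) (by simp) (by simp) (by simp)]
  have r3 : cnt (k+1) (true,true,false) = cnt k (false,true,true) := by
    rw [cnt_split, card_dead k hk true true true false (by tauto),
      card_step k hk false true true false (by simp) (by simp) (by simp) (by simp) (by simp)]
    omega
  have r4 : cnt (k+1) (true,false,true) =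
      cnt k (false,true,false) + cnt k (true,true,false) := by
    rw [cnt_split,
      card_step k hk false true false true (by simp) (by simp) (by simp) (by simp) (by simp),
      card_step k hk true true false true (by simp) (by simp) (by simp) (by simp) (by simp)]
  have r5 : cnt (k+1) (false,true,false) = cnt k (true,false,true) := by
    rw [cnt_split, card_dead k hk false false true false (by tauto),
      card_step k hk true false true false (by simp) (by simp) (by simp) (by simp) (by simp)]
    omega
  funext i
  fin_cases i <;>
    simp [vv, Matrix.vecMul, dotProduct, transferA', Fin.sum_univ_six, cons_val_five', Matrix.vecHead, Matrix.vecTail,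
      r0, r1, r2, r3, r4, r5] <;>
    omega

lemma vv_base : vv 3 = ![0,0,1,1,1,0] := by
  funext i
  fin_cases i
  · exact cnt3_zero _ _ _ (by tauto)
  · exact cnt3_zero _ _ _ (by tauto)
  · exact cnt3_one _ _ _ (by simp) (by simp) (by simp) (by simp)
  · exact cnt3_one _ _ _ (by simp) (by simp) (by simp) (by simp)
  · exact cnt3_one _ _ _ (by simp) (by simp) (by simp) (by simp)
  · exact cnt3_zero _ _ _ (by tauto)

lemma max_iff_pref (n : ℕ) (hn : 3 ≤ n) (c : ℤ → Bool) :
    (RivieraConfig n c ∧ RivieraMaximal n c) ↔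
      (Pref n c ∧ (win n c = (false,true,true) ∨ win n c = (true,true,false) ∨
        win n c = (true,false,true))) := by
  constructor
  · rintro ⟨hconf, hmax⟩
    have hperm := hmax.1
    have cover := (riv_maximal_iff n c hperm).mp hmax
    have ntr : ∀ i : ℤ, ¬(c (i-1) = true ∧ c i = true ∧ c (i+1) = true) := by
      intro i h; exact hperm ⟨i, h⟩
    have hn2 : Cov c ((n:ℤ)-2) ∨ c ((n:ℤ)-2) = true := by
      rcases Bool.eq_false_or_eq_true (c ((n:ℤ)-2)) with h | h
      · right; exact h
      · left; exact cover _ (by omega) (by omega) h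
    have hn1 : Cov c ((n:ℤ)-1) ∨ c ((n:ℤ)-1) = true := by
      rcases Bool.eq_false_or_eq_true (c ((n:ℤ)-1)) with h | h
      · right; exact h
      · left; exact cover _ (by omega) (by omega) h
    have hpad : ∀ j : ℤ, (n:ℤ) ≤ j → c j = false := fun j hj => hconf j (Or.inr hj)
    -- window cannot be 000 / 001 : the zero at n-2 would be uncoverable
    have hW : ¬(c ((n:ℤ)-3) = false ∧ c ((n:ℤ)-2) = false) := by
      rintro ⟨h3, h2⟩
      rcases hn2 with (⟨l1, l2⟩ | ⟨s1, s2⟩ | ⟨r1, r2⟩) | h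
      · rw [show (n:ℤ)-2-1 = (n:ℤ)-3 by ring, h3] at l2; exact absurd l2 (by simp)
      · rw [show (n:ℤ)-2-1 = (n:ℤ)-3 by ring, h3] at s1; exact absurd s1 (by simp)
      · rw [show (n:ℤ)-2+2 = (n:ℤ) by ring, hpad _ le_rfl] at r2; exact absurd r2 (by simp)
      · rw [h2] at h; exact absurd h (by simp)
    -- window cannot be x10-with-zero-at-end patterns 010, 100
    have hV : c ((n:ℤ)-1) = false → (c ((n:ℤ)-3) = true ∧ c ((n:ℤ)-2) = true) := by
      intro h1
      rcases hn1 with (⟨l1, l2⟩ | ⟨s1, s2⟩ | ⟨r1, r2⟩) | h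
      · rw [show (n:ℤ)-1-2 = (n:ℤ)-3 by ring] at l1
        rw [show (n:ℤ)-1-1 = (n:ℤ)-2 by ring] at l2
        exact ⟨l1, l2⟩
      · rw [show (n:ℤ)-1+1 = (n:ℤ) by ring, hpad _ le_rfl] at s2; exact absurd s2 (by simp)
      · rw [show (n:ℤ)-1+1 = (n:ℤ) by ring, hpad _ le_rfl] at r1; exact absurd r1 (by simp)
      · rw [h1] at h; exact absurd h (by simp)
    refine ⟨⟨hconf, ntr, fun j h0 h3 hz => cover j h0 (by omega) hz, ?_, ?_⟩, ?_⟩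
    · rintro ⟨h1, h2, h3⟩; exact hW ⟨h1, h2⟩
    · rintro ⟨h1, h2, h3⟩
      exact absurd (hV h3).2 (by rw [h2]; simp)
    · -- determine the window
      rcases Bool.eq_false_or_eq_true (c ((n:ℤ)-1)) with h1 | h1
      · rcases Bool.eq_false_or_eq_true (c ((n:ℤ)-2)) with h2 | h2
        · rcases Bool.eq_false_or_eq_true (c ((n:ℤ)-3)) with h3 | h3
          · exact absurd ⟨by rw [show (n:ℤ)-2-1 = (n:ℤ)-3 by ring]; exact h3, h2,
              by rw [show (n:ℤ)-2+1 = (n:ℤ)-1 by ring]; exact h1⟩ (ntr ((n:ℤ)-2))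
          · left; rw [win, h3, h2, h1]
        · rcases Bool.eq_false_or_eq_true (c ((n:ℤ)-3)) with h3 | h3
          · right; right; rw [win, h3, h2, h1]
          · exact absurd ⟨h3, h2⟩ hW
      · obtain ⟨g3, g2⟩ := hV h1
        right; left; rw [win, g3, g2, h1]
  · rintro ⟨⟨pad, ntr, cov, -, -⟩, hacc⟩
    have hperm : RivieraPermissible c := by rintro ⟨i, h⟩; exact ntr i h
    refine ⟨pad, (riv_maximal_iff n c hperm).mpr ?_⟩
    intro j h0 h1 hz
    by_cases hj : j + 3 ≤ (n:ℤ)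
    · exact cov j h0 hj hz
    · rcases hacc with hw | hw | hw <;> obtain ⟨e1, e2, e3⟩ := win_eq _ _ hw
      · -- 011
        rcases eq_or_ne j ((n:ℤ)-2) with rfl | hne
        · rw [e2] at hz; exact absurd hz (by simp)
        · have : j = (n:ℤ)-1 := by omega
          subst this; rw [e3] at hz; exact absurd hz (by simp)
      · -- 110
        rcases eq_or_ne j ((n:ℤ)-2) with rfl | hne
        · rw [e2] at hz; exact absurd hz (by simp)
        · have : j = (n:ℤ)-1 := by omega
          subst this
          left
          rw [show (n:ℤ)-1-2 = (n:ℤ)-3 by ring, show (n:ℤ)-1-1 = (n:ℤ)-2 by ring, e1, e2]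
          exact ⟨rfl, rfl⟩
      · -- 101
        rcases eq_or_ne j ((n:ℤ)-2) with rfl | hne
        · right; left
          rw [show (n:ℤ)-2-1 = (n:ℤ)-3 by ring, show (n:ℤ)-2+1 = (n:ℤ)-1 by ring, e1, e3]
          exact ⟨rfl, rfl⟩
        · have : j = (n:ℤ)-1 := by omega
          subst this; rw [e3] at hz; exact absurd hz (by simp)

lemma card3 (n : ℕ) (hn : 3 ≤ n) :
    Nat.card {c : ℤ → Bool // RivieraConfig n c ∧ RivieraMaximal n c} =
      cnt n (false,true,true) + cnt n (true,true,false) + cnt n (true,false,true) := by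
  rw [Nat.card_congr (Equiv.subtypeEquivRight (fun c => max_iff_pref n hn c))]
  haveI F1 : Finite {c : ℤ → Bool // Pref n c ∧ win n c = (false,true,true)} :=
    finite_subtype n _ (fun c hc => hc.1.1)
  haveI F2 : Finite {c : ℤ → Bool // Pref n c ∧ win n c = (true,true,false)} :=
    finite_subtype n _ (fun c hc => hc.1.1)
  haveI F3 : Finite {c : ℤ → Bool // Pref n c ∧ win n c = (true,false,true)} :=
    finite_subtype n _ (fun c hc => hc.1.1)
  have E : {c : ℤ → Bool // Pref n c ∧ (win n c = (false,true,true) ∨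
      win n c = (true,true,false) ∨ win n c = (true,false,true))} ≃
      ({c : ℤ → Bool // Pref n c ∧ win n c = (false,true,true)} ⊕
        ({c : ℤ → Bool // Pref n c ∧ win n c = (true,true,false)} ⊕
          {c : ℤ → Bool // Pref n c ∧ win n c = (true,false,true)})) :=
  { toFun := fun s =>
      if h1 : win n s.1 = (false,true,true) then Sum.inl ⟨s.1, s.2.1, h1⟩
      else if h2 : win n s.1 = (true,true,false) then Sum.inr (Sum.inl ⟨s.1, s.2.1, h2⟩)
      else Sum.inr (Sum.inr ⟨s.1, s.2.1, by
        rcases s.2.2 with h | h | h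
        · exact absurd h h1
        · exact absurd h h2
        · exact h⟩)
    invFun := Sum.elim (fun s => ⟨s.1, s.2.1, Or.inl s.2.2⟩)
      (Sum.elim (fun s => ⟨s.1, s.2.1, Or.inr (Or.inl s.2.2)⟩)
        (fun s => ⟨s.1, s.2.1, Or.inr (Or.inr s.2.2)⟩))
    left_inv := by
      rintro ⟨c, hp, hacc⟩
      by_cases h1 : win n c = (false,true,true)
      · simp [h1]
      · by_cases h2 : win n c = (true,true,false) <;> simp [h1, h2]
    right_inv := by
      rintro (⟨c, hp, hw⟩ | ⟨c, hp, hw⟩ | ⟨c, hp, hw⟩) <;> simp [hw] }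
  rw [Nat.card_congr E, Nat.card_sum, Nat.card_sum, cnt, cnt, cnt]
  omega

open Matrix in
lemma vv_pow (m : ℕ) : vv (3+m) = Matrix.vecMul (vv 3) (transferA' ^ m) := by
  induction m with
  | zero => simp
  | succ m ih =>
    rw [show 3+(m+1) = (3+m)+1 by omega, vv_succ (3+m) (by omega), ih, pow_succ,
      ← Matrix.vecMul_vecMul]

open Matrix in
theorem rivieraCount_eq_transferMatrix_form (n : ℕ) (hn : 3 ≤ n) :
    Nat.card {c : ℤ → Bool // RivieraConfig n c ∧ RivieraMaximal n c} =
      ![0,0,1,1,1,0] ⬝ᵥ (transferA ^ (n - 3)).mulVec ![0,0,1,1,1,0] := by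
  have hnn : 3 + (n-3) = n := by omega
  have hv : vv n = Matrix.vecMul ![0,0,1,1,1,0] (transferA ^ (n-3)) := by
    conv_lhs => rw [← hnn]
    rw [vv_pow, vv_base]
    rfl
  calc Nat.card {c : ℤ → Bool // RivieraConfig n c ∧ RivieraMaximal n c}
      = cnt n (false,true,true) + cnt n (true,true,false) + cnt n (true,false,true) :=
        card3 n hn
    _ = vv n 2 + vv n 3 + vv n 4 := rfl
    _ = dotProduct (vv n) ![0,0,1,1,1,0] := by
        simp [dotProduct, Fin.sum_univ_six, cons_val_five', Matrix.vecHead,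
          Matrix.vecTail]
    _ = dotProduct (Matrix.vecMul ![0,0,1,1,1,0] (transferA ^ (n-3)))
          ![0,0,1,1,1,0] := by rw [hv]
    _ = ![0,0,1,1,1,0] ⬝ᵥ (transferA ^ (n - 3)).mulVec ![0,0,1,1,1,0] :=
        (Matrix.dotProduct_mulVec _ _ _).symm
end

section
/- For every n ≥ 2, the number of maximal cyclic Riviera configurations of length n (configurations on ℤ/nℤ with periodic boundary conditions) equals the trace of A^n, where A is the explicit 6×6 transfer matrix. -/
/-- Permissibility for cyclic Riviera configurations:
no occupied lot has both (cyclic) neighbors occupied. -/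
def CyclicPermissible {n : ℕ} (c : ZMod n → Bool) : Prop :=
  ¬ ∃ i : ZMod n, c (i - 1) = true ∧ c i = true ∧ c (i + 1) = true

/-- Maximality for cyclic Riviera configurations. -/
def CyclicMaximal {n : ℕ} (c : ZMod n → Bool) : Prop :=
  CyclicPermissible c ∧
    ∀ j : ZMod n, c j = false → ¬ CyclicPermissible (Function.update c j true)

namespace CRAux

def matB : Matrix (Fin 8) (Fin 8) ℕ :=
  !![0,1,0,0,0,0,0,0;
     0,0,1,0,0,0,0,0;
     0,0,0,1,0,0,0,0;
     1,0,0,0,0,0,0,1;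
     0,0,0,0,0,1,1,0;
     0,0,0,0,1,0,0,0;
     0,0,0,1,0,0,0,0;
     0,0,0,0,0,1,1,0]

def matU : Matrix (Fin 8) (Fin 6) ℕ :=
  !![1,0,0,0,0,0;
     0,1,0,0,0,0;
     0,0,1,0,0,0;
     0,0,0,1,0,0;
     0,0,0,0,1,0;
     0,0,0,0,0,1;
     0,0,1,0,0,0;
     0,0,0,0,1,0]

def matV : Matrix (Fin 6) (Fin 8) ℕ :=
  !![0,1,0,0,0,0,0,0;
     0,0,1,0,0,0,0,0;
     0,0,0,1,0,0,0,0;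
     1,0,0,0,0,0,0,1;
     0,0,0,0,0,1,1,0;
     0,0,0,0,1,0,0,0]

def d0 : Fin 8 → Bool := ![true, true, false, false, false, true, true, true]
def d1 : Fin 8 → Bool := ![true, false, false, true, true, false, false, true]
def d2 : Fin 8 → Bool := ![false, false, true, true, false, true, true, false]
def d3 : Fin 8 → Bool := ![false, true, true, false, true, false, true, true]

def enc : Bool → Bool → Bool → Bool → Fin 8
  | true, true, false, false => 0
  | true, false, false, true => 1
  | false, false, true, true => 2
  | false, true, true, false => 3
  | false, true, false, true => 4
  | true, false, true, false => 5
  | true, false, true, true => 6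
  | true, true, false, true => 7
  | _, _, _, _ => 0

def Eb : Bool → Bool → Bool → Bool → Bool → Bool
  | false, false, true, true, false => true
  | false, true, false, true, false => true
  | false, true, false, true, true => true
  | false, true, true, false, false => true
  | false, true, true, false, true => true
  | true, false, false, true, true => true
  | true, false, true, false, true => true
  | true, false, true, true, false => true
  | true, true, false, false, true => true
  | true, true, false, true, false => true
  | true, true, false, true, true => true
  | _, _, _, _, _ => false

def Lb (b0 b1 b2 b3 b4 : Bool) : Bool :=
  !(b1 && b2 && b3) && (b2 || ((b0 && b1) || (b1 && b3) || (b3 && b4)))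

lemma matUV : matU * matV = matB := by
  ext i j; fin_cases i <;> fin_cases j <;> decide

lemma matVU : matV * matU = transferA := by
  ext i j; fin_cases i <;> fin_cases j <;> decide

lemma key7 : ∀ b0 b1 b2 b3 b4 b5 b6 : Bool,
    Lb b0 b1 b2 b3 b4 = true → Lb b1 b2 b3 b4 b5 = true → Lb b2 b3 b4 b5 b6 = true →
    Eb b1 b2 b3 b4 b5 = true := by decide

lemma key5 : ∀ b0 b1 b2 b3 b4 : Bool, Eb b0 b1 b2 b3 b4 = true →
    Lb b0 b1 b2 b3 b4 = true := by decide

lemma keyEnc : ∀ b0 b1 b2 b3 b4 : Bool, Eb b0 b1 b2 b3 b4 = true →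
    matB (enc b0 b1 b2 b3) (enc b1 b2 b3 b4) = 1 ∧ d0 (enc b0 b1 b2 b3) = b0 := by decide

lemma keyDec : ∀ s t : Fin 8, matB s t = 1 →
    d0 t = d1 s ∧ d1 t = d2 s ∧ d2 t = d3 s ∧
    Eb (d0 s) (d1 s) (d2 s) (d3 s) (d3 t) = true ∧
    enc (d0 s) (d1 s) (d2 s) (d3 s) = s := by
  intro s t; fin_cases s <;> fin_cases t <;> decide

lemma bool_intro : ∀ b0 b1 b2 b3 b4 : Bool,
    ¬(b1 = true ∧ b2 = true ∧ b3 = true) →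
    (b2 = false → ((b0 && b1) || (b1 && b3) || (b3 && b4)) = true) →
    Lb b0 b1 b2 b3 b4 = true := by decide

lemma bool_perm : ∀ b0 b1 b2 b3 b4 : Bool, Lb b0 b1 b2 b3 b4 = true →
    b1 = true → b2 = true → b3 = true → False := by decide

lemma bool_D : ∀ b0 b1 b2 b3 b4 : Bool, Lb b0 b1 b2 b3 b4 = true → b2 = false →
    ((b0 && b1) || (b1 && b3) || (b3 && b4)) = true := by decide

lemma maximal_iff {n : ℕ} (hn : 2 ≤ n) (c : ZMod n → Bool) :
    CyclicMaximal c ↔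
      ∀ j : ZMod n, Lb (c (j-2)) (c (j-1)) (c j) (c (j+1)) (c (j+2)) = true := by
  haveI : Fact (1 < n) := ⟨hn⟩
  have hone : (1 : ZMod n) ≠ 0 := one_ne_zero
  constructor
  · rintro ⟨hp, hm⟩ j
    apply bool_intro
    · rintro ⟨h1, h2, h3⟩
      exact hp ⟨j, h1, h2, h3⟩
    · intro hj
      have hnp : ∃ i : ZMod n, Function.update c j true (i-1) = true ∧
          Function.update c j true i = true ∧ Function.update c j true (i+1) = true :=
        not_not.mp (hm j hj)
      obtain ⟨i, h1, h2, h3⟩ := hnp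
      have hxl : ∀ x : ZMod n, Function.update c j true x = true → x = j ∨ c x = true := by
        intro x hx
        by_cases hxe : x = j
        · exact Or.inl hxe
        · right; rwa [Function.update_of_ne hxe] at hx
      rcases hxl _ h2 with hij | hci
      · subst hij
        have hl : c (i - 1) = true := by
          rcases hxl _ h1 with hh | hh
          · exact absurd (sub_eq_self.mp hh) hone
          · exact hh
        have hr : c (i + 1) = true := by
          rcases hxl _ h3 with hh | hh
          · exact absurd (add_eq_left.mp hh) hone
          · exact hh
        simp [hl, hr]
      · rcases hxl _ h1 with h1j | hc1
        · have hi : i = j + 1 := by rwa [sub_eq_iff_eq_add] at h1j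
          rcases hxl _ h3 with h3j | hc3
          · have h20 : (2 : ZMod n) = 0 := by linear_combination h3j - hi
            have hmid : c (j - 1) = true := by
              have he : j - 1 = j + 1 := by linear_combination -h20
              rw [he, ← hi]; exact hci
            have hr : c (j + 1) = true := by rw [← hi]; exact hci
            simp [hmid, hr]
          · have ha : c (j + 1) = true := by rw [← hi]; exact hci
            have hb : c (j + 2) = true := by
              rw [hi, show j + 1 + 1 = j + 2 from by ring] at hc3; exact hc3
            simp [ha, hb]
        · rcases hxl _ h3 with h3j | hc3
          · have hi : i = j - 1 := eq_sub_iff_add_eq.mpr h3j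
            have ha : c (j - 1) = true := by rw [← hi]; exact hci
            have hb : c (j - 2) = true := by
              rw [hi, show j - 1 - 1 = j - 2 from by ring] at hc1; exact hc1
            simp [ha, hb]
          · exact absurd ⟨i, hc1, hci, hc3⟩ hp
  · intro h
    refine ⟨?_, ?_⟩
    · rintro ⟨i, h1, h2, h3⟩
      exact bool_perm _ _ _ _ _ (h i) h1 h2 h3
    · intro j hj hpu
      have hD := bool_D _ _ _ _ _ (h j) hj
      apply hpu
      have hu : ∀ x : ZMod n, c x = true → Function.update c j true x = true := by
        intro x hx
        by_cases hxe : x = j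
        · rw [hxe]; simp
        · rwa [Function.update_of_ne hxe]
      have huj : Function.update c j true j = true := by simp
      rw [Bool.or_eq_true, Bool.or_eq_true, Bool.and_eq_true, Bool.and_eq_true,
        Bool.and_eq_true] at hD
      rcases hD with (⟨ha, hb⟩ | ⟨ha, hb⟩) | ⟨ha, hb⟩
      · exact ⟨j - 1, by rw [show j-1-1 = j-2 from by ring]; exact hu _ ha, hu _ hb,
          by rw [show j-1+1 = j from by ring]; exact huj⟩
      · exact ⟨j, hu _ ha, huj, hu _ hb⟩
      · exact ⟨j + 1, by rw [show j+1-1 = j from by ring]; exact huj, hu _ ha,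
          by rw [show j+1+1 = j+2 from by ring]; exact hu _ hb⟩

lemma max_iff_E {n : ℕ} (hn : 2 ≤ n) (c : ZMod n → Bool) :
    CyclicMaximal c ↔
      ∀ i : ZMod n, Eb (c i) (c (i+1)) (c (i+2)) (c (i+3)) (c (i+4)) = true := by
  rw [maximal_iff hn]
  constructor
  · intro h i
    have h1 := h (i + 1)
    have h2 := h (i + 2)
    have h3 := h (i + 3)
    rw [show i+1-2 = i-1 from by ring, show i+1-1 = i from by ring,
      show i+1+1 = i+2 from by ring, show i+1+2 = i+3 from by ring] at h1
    rw [show i+2-2 = i from by ring, show i+2-1 = i+1 from by ring,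
      show i+2+1 = i+3 from by ring, show i+2+2 = i+4 from by ring] at h2
    rw [show i+3-2 = i+1 from by ring, show i+3-1 = i+2 from by ring,
      show i+3+1 = i+4 from by ring, show i+3+2 = i+5 from by ring] at h3
    exact key7 (c (i-1)) (c i) (c (i+1)) (c (i+2)) (c (i+3)) (c (i+4)) (c (i+5)) h1 h2 h3
  · intro h j
    have hh := h (j - 2)
    rw [show j-2+1 = j-1 from by ring, show j-2+2 = j from by ring,
      show j-2+3 = j+1 from by ring, show j-2+4 = j+2 from by ring] at hh
    exact key5 _ _ _ _ _ hh

/-- Equivalence between admissible configurations and closed walks in `matB`. -/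
def windowEquiv (n : ℕ) :
    {c : ZMod n → Bool // ∀ i, Eb (c i) (c (i+1)) (c (i+2)) (c (i+3)) (c (i+4)) = true} ≃
    {f : ZMod n → Fin 8 // ∀ i, matB (f i) (f (i+1)) = 1} where
  toFun := fun x => ⟨fun i => enc (x.1 i) (x.1 (i+1)) (x.1 (i+2)) (x.1 (i+3)), by
    obtain ⟨c, hc⟩ := x
    intro i
    have h := (keyEnc _ _ _ _ _ (hc i)).1
    simp only
    rw [show i+1+1 = i+2 from by ring, show i+1+2 = i+3 from by ring,
      show i+1+3 = i+4 from by ring]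
    exact h⟩
  invFun := fun x => ⟨fun i => d0 (x.1 i), by
    obtain ⟨f, hf⟩ := x
    intro i
    simp only
    have k0 := keyDec _ _ (hf i)
    have k1 := keyDec _ _ (hf (i+1))
    have k2 := keyDec _ _ (hf (i+2))
    have k3 := keyDec _ _ (hf (i+3))
    rw [show i+1+1 = i+2 from by ring] at k1
    rw [show i+2+1 = i+3 from by ring] at k2
    rw [show i+3+1 = i+4 from by ring] at k3
    obtain ⟨a1, b1, c1, e1, -⟩ := k0
    obtain ⟨a2, b2, c2, -, -⟩ := k1
    obtain ⟨a3, b3, c3, -, -⟩ := k2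
    obtain ⟨a4, -, -, -, -⟩ := k3
    rw [a1, a2, b1, a3, b2, c1, a4, b3, c2]
    exact e1⟩
  left_inv := by
    rintro ⟨c, hc⟩
    apply Subtype.ext
    funext i
    exact (keyEnc _ _ _ _ _ (hc i)).2
  right_inv := by
    rintro ⟨f, hf⟩
    apply Subtype.ext
    funext i
    simp only
    have k0 := keyDec _ _ (hf i)
    have k1 := keyDec _ _ (hf (i+1))
    have k2 := keyDec _ _ (hf (i+2))
    rw [show i+1+1 = i+2 from by ring] at k1
    rw [show i+2+1 = i+3 from by ring] at k2
    obtain ⟨a1, b1, c1, -, e0⟩ := k0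
    obtain ⟨a2, b2, -, -, -⟩ := k1
    obtain ⟨a3, -, -, -, -⟩ := k2
    rw [a1, a2, b1, a3, b2, c1]
    exact e0

def condB : (m : ℕ) → Fin 8 → Fin 8 → (Fin m → Fin 8) → Bool
  | 0, a, b, _ => a == b
  | m+1, a, b, g => (matB a (g 0) == 1) && condB m (g 0) b (Fin.tail g)

lemma condB_iff : ∀ (m : ℕ) (a b : Fin 8) (g : Fin m → Fin 8),
    condB m a b g = true ↔
      ((Fin.cons a g : Fin (m+1) → Fin 8) (Fin.last m) = b ∧
        ∀ i : Fin m, matB ((Fin.cons a g : Fin (m+1) → Fin 8) i.castSucc)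
          ((Fin.cons a g : Fin (m+1) → Fin 8) i.succ) = 1) := by
  intro m
  induction m with
  | zero =>
    intro a b g
    simp only [condB, beq_iff_eq]
    constructor
    · intro h
      refine ⟨?_, fun i => i.elim0⟩
      rw [show (Fin.last 0) = 0 from rfl, Fin.cons_zero]
      exact h
    · rintro ⟨h, -⟩
      rw [show (Fin.last 0) = 0 from rfl, Fin.cons_zero] at h
      exact h
  | succ m ih =>
    intro a b g
    simp only [condB]
    rw [Bool.and_eq_true, beq_iff_eq, ih (g 0) b (Fin.tail g), Fin.cons_self_tail]
    constructor
    · rintro ⟨h0, hl, he⟩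
      refine ⟨?_, ?_⟩
      · rw [← Fin.succ_last, Fin.cons_succ]; exact hl
      · intro i
        refine Fin.cases ?_ ?_ i
        · simpa [Fin.castSucc_zero, Fin.cons_zero, Fin.cons_succ] using h0
        · intro j
          rw [← Fin.succ_castSucc, Fin.cons_succ, Fin.cons_succ]
          exact he j
    · rintro ⟨hl, he⟩
      refine ⟨?_, ?_, ?_⟩
      · have h0 := he 0
        simpa [Fin.castSucc_zero, Fin.cons_zero, Fin.cons_succ] using h0
      · rw [← Fin.succ_last, Fin.cons_succ] at hl; exact hl
      · intro j
        have hj := he j.succ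
        rw [← Fin.succ_castSucc, Fin.cons_succ, Fin.cons_succ] at hj
        exact hj

lemma matB_pow_apply : ∀ (m : ℕ) (a b : Fin 8),
    (matB ^ m) a b = ∑ g : Fin m → Fin 8, if condB m a b g = true then 1 else 0 := by
  intro m
  induction m with
  | zero =>
    intro a b
    simp [condB, Matrix.one_apply, Finset.sum_const, beq_iff_eq]
  | succ m ih =>
    intro a b
    rw [pow_succ', Matrix.mul_apply]
    have hB : ∀ s t : Fin 8, matB s t = if matB s t = 1 then 1 else 0 := by
      intro s t; fin_cases s <;> fin_cases t <;> decide
    calc ∑ c, matB a c * (matB ^ m) c b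
        = ∑ c, ∑ g : Fin m → Fin 8, matB a c * (if condB m c b g = true then 1 else 0) := by
          simp_rw [ih, Finset.mul_sum]
      _ = ∑ p : Fin 8 × (Fin m → Fin 8),
            matB a p.1 * (if condB m p.1 b p.2 = true then 1 else 0) := by
          rw [Fintype.sum_prod_type]
      _ = ∑ g : Fin (m+1) → Fin 8, (if condB (m+1) a b g = true then 1 else 0) := by
          apply Fintype.sum_equiv (Fin.consEquiv (fun _ : Fin (m+1) => Fin 8))
          rintro ⟨x, gg⟩
          have hcons : (Fin.consEquiv (fun _ : Fin (m+1) => Fin 8)) (x, gg)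
              = (Fin.cons x gg : Fin (m+1) → Fin 8) := rfl
          rw [hcons]
          simp only [condB, Fin.cons_zero, Fin.tail_cons]
          by_cases h1 : matB a x = 1
          · simp [h1]
          · have h0 : matB a x = 0 := by
              have hh := hB a x; rw [if_neg h1] at hh; exact hh
            simp [h0]

def emb {n : ℕ} [NeZero n] (i : ZMod n) : Fin (n+1) :=
  ⟨i.val, Nat.lt_succ_of_lt (ZMod.val_lt i)⟩

lemma cons_eval {n : ℕ} [NeZero n] (f : ZMod n → Fin 8) (j : Fin (n+1)) :
    (Fin.cons (f 0) (fun k : Fin n => f ((k : ℕ) + 1)) : Fin (n+1) → Fin 8) j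
      = f ((j : ℕ) : ZMod n) := by
  induction j using Fin.cases with
  | zero => simp
  | succ k => simp [Fin.cons_succ, Fin.val_succ]

/-- Equivalence between closed walks (as cyclic functions) and based walks. -/
def walkEquiv (n : ℕ) [NeZero n] [Fact (1 < n)] :
    {f : ZMod n → Fin 8 // ∀ i, matB (f i) (f (i+1)) = 1} ≃
    {p : Fin 8 × (Fin n → Fin 8) // condB n p.1 p.1 p.2 = true} where
  toFun := fun x => ⟨(x.1 0, fun j => x.1 ((j : ℕ) + 1)), by
    obtain ⟨f, hf⟩ := x
    rw [condB_iff]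
    constructor
    · rw [cons_eval]
      simp [Fin.val_last, ZMod.natCast_self]
    · intro i
      rw [cons_eval, cons_eval]
      have h1 : ((i.castSucc : Fin (n+1)) : ℕ) = (i : ℕ) := Fin.coe_castSucc i
      have h2 : ((i.succ : Fin (n+1)) : ℕ) = (i : ℕ) + 1 := Fin.val_succ i
      rw [h1, h2]
      have hh := hf (((i : ℕ) : ZMod n))
      rw [Nat.cast_add, Nat.cast_one]
      exact hh⟩
  invFun := fun x => ⟨fun i => (Fin.cons x.1.1 x.1.2 : Fin (n+1) → Fin 8) (emb i), by
    obtain ⟨⟨a, g⟩, h⟩ := x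
    rw [condB_iff] at h
    obtain ⟨hl, he⟩ := h
    intro i
    simp only
    have hvlt : i.val < n := ZMod.val_lt i
    have h1 : (i+1).val = (i.val + 1) % n := by rw [ZMod.val_add, ZMod.val_one]
    by_cases hc : i.val + 1 < n
    · have h2 : (i+1).val = i.val + 1 := by rw [h1]; exact Nat.mod_eq_of_lt hc
      have e1 : emb i = Fin.castSucc (⟨i.val, hvlt⟩ : Fin n) := rfl
      have e2 : emb (i+1) = Fin.succ (⟨i.val, hvlt⟩ : Fin n) := by
        apply Fin.ext; simp [emb, h2, Fin.val_succ]
      rw [e1, e2]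
      exact he ⟨i.val, hvlt⟩
    · have hceq : i.val + 1 = n := by omega
      have h2 : (i+1).val = 0 := by rw [h1, hceq, Nat.mod_self]
      have e2 : emb (i+1) = 0 := by apply Fin.ext; simp [emb, h2]
      rw [e2, Fin.cons_zero]
      have e3 : Fin.succ (⟨i.val, hvlt⟩ : Fin n) = Fin.last n := by
        apply Fin.ext; simp [Fin.val_succ, Fin.val_last, hceq]
      have hh := he ⟨i.val, hvlt⟩
      rw [e3, hl] at hh
      have e1 : emb i = Fin.castSucc (⟨i.val, hvlt⟩ : Fin n) := rfl
      rw [e1]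
      exact hh⟩
  left_inv := by
    rintro ⟨f, hf⟩
    apply Subtype.ext
    funext i
    simp only
    rw [cons_eval]
    congr 1
    exact ZMod.natCast_rightInverse i
  right_inv := by
    rintro ⟨⟨a, g⟩, h⟩
    rw [condB_iff] at h
    obtain ⟨hl, he⟩ := h
    dsimp only at hl he
    apply Subtype.ext
    refine Prod.ext ?_ ?_
    · show (Fin.cons a g : Fin (n+1) → Fin 8) (emb 0) = a
      have e0 : emb (0 : ZMod n) = 0 := by apply Fin.ext; simp [emb, ZMod.val_zero]
      rw [e0, Fin.cons_zero]
    · funext j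
      show (Fin.cons a g : Fin (n+1) → Fin 8) (emb (((j : ℕ) : ZMod n) + 1)) = g j
      have hv : (((j : ℕ) : ZMod n) + 1).val = (j.val + 1) % n := by
        rw [ZMod.val_add, ZMod.val_one, ZMod.val_natCast, Nat.mod_eq_of_lt j.isLt]
      by_cases hc : j.val + 1 < n
      · have e1 : emb (((j : ℕ) : ZMod n) + 1) = Fin.succ j := by
          apply Fin.ext; simp [emb, hv, Nat.mod_eq_of_lt hc, Fin.val_succ]
        rw [e1, Fin.cons_succ]
      · have hceq : j.val + 1 = n := by omega
        have e1 : emb (((j : ℕ) : ZMod n) + 1) = 0 := by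
          apply Fin.ext; simp [emb, hv, hceq]
        rw [e1, Fin.cons_zero]
        have e3 : Fin.succ j = Fin.last n := by
          apply Fin.ext; simp [Fin.val_succ, Fin.val_last, hceq]
        have hcs := Fin.cons_succ (α := fun _ : Fin (n+1) => Fin 8) a g j
        rw [e3, hl] at hcs
        exact hcs

end CRAux

open CRAux in
theorem cyclicRivieraCount_eq_trace_pow (n : ℕ) (hn : 2 ≤ n) :
    Nat.card {c : ZMod n → Bool // CyclicMaximal c} = Matrix.trace (transferA ^ n) := by
  haveI : NeZero n := ⟨by omega⟩
  haveI : Fact (1 < n) := ⟨hn⟩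
  rw [Nat.card_congr (((Equiv.subtypeEquivRight (fun c => max_iff_E hn c)).trans
    (windowEquiv n)).trans (walkEquiv n))]
  rw [Nat.card_eq_fintype_card]
  obtain ⟨k, rfl⟩ : ∃ k, n = k + 1 := ⟨n - 1, by omega⟩
  have hpow : ∀ m : ℕ, (matU * matV) ^ (m + 1) = matU * ((matV * matU) ^ m * matV) := by
    intro m
    induction m with
    | zero => rw [zero_add, pow_one, pow_zero, Matrix.one_mul]
    | succ m ihm => rw [pow_succ, ihm, pow_succ]; simp only [Matrix.mul_assoc]
  have htr : Matrix.trace (transferA ^ (k + 1)) = Matrix.trace (matB ^ (k + 1)) := by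
    rw [← matVU, ← matUV, hpow k, Matrix.trace_mul_comm, Matrix.mul_assoc, ← pow_succ]
  rw [htr]
  rw [Fintype.card_subtype, Finset.card_filter]
  rw [Fintype.sum_prod_type]
  simp_rw [← matB_pow_apply]
  rw [Matrix.trace]
  simp [Matrix.diag]
end

section
/- Let b_n denote the number of maximal Riviera configurations of length n with the no-sun boundary condition. Then for every n ≥ 3 one has b_n = bᵀ · A^{n−3} · d, where A is the explicit 6×6 transfer matrix, b = (1,0,1,0,1,1) and d = (0,1,0,1,1,1). -/
/-- Permissibility with the no-sun boundary condition on `{0, …, n−1}`: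
every occupied lot has an unoccupied neighbor *inside the tract*. -/
def NoSunPermissible (n : ℕ) (c : ℕ → Bool) : Prop :=
  ∀ i : ℕ, i < n → c i = true →
    (1 ≤ i ∧ c (i - 1) = false) ∨ (i + 2 ≤ n ∧ c (i + 1) = false)

/-- Maximality with the no-sun boundary condition. -/
def NoSunMaximal (n : ℕ) (c : ℕ → Bool) : Prop :=
  NoSunPermissible n c ∧
    ∀ j : ℕ, j < n → c j = false →
      ¬ NoSunPermissible n (Function.update c j true)

/-- local characterization -/
def LocalP (k : ℕ) (c : ℕ → Bool) : Prop :=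
  (c 0 ≠ c 1) ∧ (c (k+1) ≠ c (k+2)) ∧
  (∀ i, i + 3 ≤ k + 3 → ¬(c i = c (i+1) ∧ c (i+1) = c (i+2))) ∧
  (∀ i, i + 4 ≤ k + 3 → c i = false → c (i+3) = false → c (i+1) = c (i+2))

lemma perm_update (n j : ℕ) (c : ℕ → Bool) (h : NoSunPermissible n c)
    (h0 : (1 ≤ j ∧ c (j-1) = false) ∨ (j+2 ≤ n ∧ c (j+1) = false))
    (hleft : 1 ≤ j → c (j-1) = true → 2 ≤ j ∧ c (j-2) = false)
    (hright : j+2 ≤ n → c (j+1) = true → j+3 ≤ n ∧ c (j+2) = false) :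
    NoSunPermissible n (Function.update c j true) := by
  intro i hi hci
  rcases eq_or_ne i j with rfl | hij
  · rcases h0 with ⟨h1, h2⟩ | ⟨h1, h2⟩
    · exact Or.inl ⟨h1, by rwa [Function.update_of_ne (by omega)]⟩
    · exact Or.inr ⟨h1, by rwa [Function.update_of_ne (by omega)]⟩
  · have hci' : c i = true := by rwa [Function.update_of_ne hij] at hci
    rcases h i hi hci' with ⟨h1, h2⟩ | ⟨h1, h2⟩
    · rcases eq_or_ne (i-1) j with hj' | hj'
      · have hi_eq : i = j + 1 := by omega
        obtain ⟨h3, h4⟩ := hright (by omega) (by rwa [← hi_eq])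
        refine Or.inr ⟨by omega, ?_⟩
        rw [Function.update_of_ne (by omega), show i + 1 = j + 2 by omega]
        exact h4
      · exact Or.inl ⟨h1, by rwa [Function.update_of_ne hj']⟩
    · rcases eq_or_ne (i+1) j with hj' | hj'
      · obtain ⟨h3, h4⟩ := hleft (by omega) (by rwa [show j - 1 = i by omega])
        refine Or.inl ⟨by omega, ?_⟩
        rw [Function.update_of_ne (by omega), show i - 1 = j - 2 by omega]
        exact h4
      · exact Or.inr ⟨h1, by rwa [Function.update_of_ne hj']⟩

lemma bool_eq_or_ne (a b : Bool) : a = b ∨ (a = true ∧ b = false) ∨ (a = false ∧ b = true) := by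
  cases a <;> cases b <;> simp

lemma maximal_local (k : ℕ) (c : ℕ → Bool) (h : NoSunMaximal (k+3) c) : LocalP k c := by
  obtain ⟨hp, hm⟩ := h
  refine ⟨?_, ?_, ?_, ?_⟩
  · -- c 0 ≠ c 1
    intro he
    cases hc0 : c 0 with
    | true =>
        rcases hp 0 (by omega) hc0 with ⟨h1, _⟩ | ⟨_, h2⟩
        · omega
        · rw [← he, hc0] at h2; exact Bool.noConfusion h2
    | false =>
        refine hm 0 (by omega) hc0 (perm_update _ _ _ hp ?_ ?_ ?_)
        · exact Or.inr ⟨by omega, by rw [← he]; exact hc0⟩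
        · intro h1; omega
        · intro _ h1; rw [← he, hc0] at h1; exact Bool.noConfusion h1
  · -- c (k+1) ≠ c (k+2)
    intro he
    cases hc2 : c (k+2) with
    | true =>
        rcases hp (k+2) (by omega) hc2 with ⟨_, h2⟩ | ⟨h1, _⟩
        · rw [show k+2-1 = k+1 by omega, he, hc2] at h2; exact Bool.noConfusion h2
        · omega
    | false =>
        refine hm (k+2) (by omega) hc2 (perm_update _ _ _ hp ?_ ?_ ?_)
        · exact Or.inl ⟨by omega, by rw [show k+2-1 = k+1 by omega, he]; exact hc2⟩
        · intro _ h1; rw [show k+2-1 = k+1 by omega, he, hc2] at h1; exact Bool.noConfusion h1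
        · intro h1; omega
  · -- no triples
    intro i hi ⟨he1, he2⟩
    cases hc : c (i+1) with
    | true =>
        rcases hp (i+1) (by omega) hc with ⟨_, h2⟩ | ⟨_, h2⟩
        · rw [show i+1-1 = i by omega] at h2; rw [he1, hc] at h2; exact Bool.noConfusion h2
        · rw [show i+1+1 = i+2 by omega] at h2; rw [← he2, hc] at h2; exact Bool.noConfusion h2
    | false =>
        refine hm (i+1) (by omega) hc (perm_update _ _ _ hp ?_ ?_ ?_)
        · exact Or.inl ⟨by omega, by rw [show i+1-1 = i by omega, he1]; exact hc⟩
        · intro _ h1; rw [show i+1-1 = i by omega, he1, hc] at h1; exact Bool.noConfusion h1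
        · intro _ h1; rw [show i+1+1 = i+2 by omega, ← he2, hc] at h1; exact Bool.noConfusion h1
  · -- forbidden 4-patterns
    intro i hi h0 h3
    rcases bool_eq_or_ne (c (i+1)) (c (i+2)) with he | ⟨ha, hb⟩ | ⟨ha, hb⟩
    · exact he
    · -- 0 1 0 0 : update at i+2
      exfalso
      refine hm (i+2) (by omega) hb (perm_update _ _ _ hp ?_ ?_ ?_)
      · exact Or.inr ⟨by omega, by rw [show i+2+1 = i+3 by omega]; exact h3⟩
      · intro _ _; exact ⟨by omega, by rw [show i+2-2 = i by omega]; exact h0⟩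
      · intro _ h1; rw [show i+2+1 = i+3 by omega, h3] at h1; exact Bool.noConfusion h1
    · -- 0 0 1 0 : update at i+1
      exfalso
      refine hm (i+1) (by omega) ha (perm_update _ _ _ hp ?_ ?_ ?_)
      · exact Or.inl ⟨by omega, by rw [show i+1-1 = i by omega]; exact h0⟩
      · intro _ h1; rw [show i+1-1 = i by omega, h0] at h1; exact Bool.noConfusion h1
      · intro _ _; refine ⟨by omega, ?_⟩; rw [show i+1+2 = i+3 by omega]; exact h3

lemma local_maximal (k : ℕ) (c : ℕ → Bool) (h : LocalP k c) : NoSunMaximal (k+3) c := by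
  obtain ⟨h1, h2, h3, h4⟩ := h
  have hperm : NoSunPermissible (k+3) c := by
    intro i hi hci
    rcases Nat.eq_zero_or_pos i with rfl | hpos
    · refine Or.inr ⟨by omega, ?_⟩
      cases hc1 : c 1 with
      | true => exact absurd (hci.trans hc1.symm) h1
      | false => rfl
    · cases hprev : c (i-1) with
      | false => exact Or.inl ⟨hpos, rfl⟩
      | true =>
        rcases eq_or_ne i (k+2) with rfl | hne
        · exact absurd (by rw [show k+2-1 = k+1 by omega] at hprev; rw [hprev, hci]) h2
        · have hw := h3 (i-1) (by omega)
          rw [show i-1+1 = i by omega, show i-1+2 = i+1 by omega] at hw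
          refine Or.inr ⟨by omega, ?_⟩
          cases hnext : c (i+1) with
          | true => exact absurd ⟨hprev.trans hci.symm, hci.trans hnext.symm⟩ hw
          | false => rfl
  refine ⟨hperm, ?_⟩
  intro j hj hcj hperm'
  have hj' := hperm' j hj (by rw [Function.update_self])
  rcases hj' with ⟨hl1, hl2⟩ | ⟨hr1, hr2⟩
  · -- left neighbor (j-1) is false
    have hl2' : c (j-1) = false := by rwa [Function.update_of_ne (by omega)] at hl2
    rcases eq_or_ne j 1 with rfl | hne1
    · rw [show (1:ℕ)-1 = 0 from rfl] at hl2'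
      exact h1 (by rw [hl2', hcj])
    · rcases eq_or_ne j (k+2) with rfl | hne2
      · exact h2 (by rw [show k+2-1 = k+1 by omega] at hl2'; rw [hl2', hcj])
      · -- j ≥ 2 and j ≤ k+1
        have hjk : j ≤ k + 1 := by omega
        have hj2 : 2 ≤ j := by omega
        have hnext : c (j+1) = true := by
          cases hnext : c (j+1) with
          | true => rfl
          | false =>
            exfalso
            have := h3 (j-1) (by omega)
            rw [show j-1+1 = j by omega, show j-1+2 = j+1 by omega] at this
            exact this ⟨hl2'.trans hcj.symm, hcj.trans hnext.symm⟩
        have hj1 := hperm' (j+1) (by omega) (by rwa [Function.update_of_ne (by omega)])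
        rcases hj1 with ⟨_, hx⟩ | ⟨hx1, hx2⟩
        · rw [show j+1-1 = j by omega, Function.update_self] at hx; exact Bool.noConfusion hx
        · have hx2' : c (j+2) = false := by
            rwa [show j+1+1 = j+2 by omega, Function.update_of_ne (by omega)] at hx2
          have := h4 (j-1) (by omega) hl2' (by rwa [show j-1+3 = j+2 by omega])
          rw [show j-1+1 = j by omega, show j-1+2 = j+1 by omega, hcj, hnext] at this
          exact Bool.noConfusion this
  · -- right neighbor (j+1) is false
    have hr2' : c (j+1) = false := by rwa [Function.update_of_ne (by omega)] at hr2
    rcases Nat.eq_zero_or_pos j with rfl | hpos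
    · exact h1 (by rw [hcj, hr2'])
    · have hprev : c (j-1) = true := by
        cases hprev : c (j-1) with
        | true => rfl
        | false =>
          exfalso
          have := h3 (j-1) (by omega)
          rw [show j-1+1 = j by omega, show j-1+2 = j+1 by omega] at this
          exact this ⟨hprev.trans hcj.symm, hcj.trans hr2'.symm⟩
      have hjm := hperm' (j-1) (by omega) (by rwa [Function.update_of_ne (by omega)])
      rcases hjm with ⟨hx1, hx2⟩ | ⟨_, hx⟩
      · have hj2 : 2 ≤ j := by omega
        have hx2' : c (j-2) = false := by
          rwa [show j-1-1 = j-2 by omega, Function.update_of_ne (by omega)] at hx2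
        have := h4 (j-2) (by omega) hx2' (by rwa [show j-2+3 = j+1 by omega])
        rw [show j-2+1 = j-1 by omega, show j-2+2 = j by omega, hprev, hcj] at this
        exact Bool.noConfusion this
      · rw [show j-1+1 = j by omega, Function.update_self] at hx; exact Bool.noConfusion hx


def wfun : Bool → Bool → Bool → Option (Fin 6)
  | true, false, false => some 0
  | false, false, true => some 1
  | false, true, true => some 2
  | true, true, false => some 3
  | true, false, true => some 4
  | false, true, false => some 5
  | _, _, _ => none

def L0 : Fin 6 → Bool := ![true,false,false,true,true,false]
def L1 : Fin 6 → Bool := ![false,false,true,true,false,true]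
def L2 : Fin 6 → Bool := ![false,true,true,false,true,false]
def bv : Fin 6 → ℕ := ![1,0,1,0,1,1]
def dv : Fin 6 → ℕ := ![0,1,0,1,1,1]

def winf (c : ℕ → Bool) (i : ℕ) : Option (Fin 6) := wfun (c i) (c (i+1)) (c (i+2))

def EdgeO : Option (Fin 6) → Option (Fin 6) → Prop
  | some s, some t => transferA s t = 1
  | _, _ => False

def ChainP (k : ℕ) (s : Fin 6) (c : ℕ → Bool) : Prop :=
  (∀ i, i + 1 ≤ k → EdgeO (winf c i) (winf c (i+1))) ∧ winf c 0 = some s ∧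
  ∃ t, winf c k = some t ∧ dv t = 1

-- finite checks
lemma wf_letters : ∀ (a b c : Bool) (s : Fin 6), wfun a b c = some s →
    a = L0 s ∧ b = L1 s ∧ c = L2 s := by decide
lemma wf_L : ∀ s : Fin 6, wfun (L0 s) (L1 s) (L2 s) = some s := by decide
lemma wf_edge : ∀ s t : Fin 6, transferA s t = 1 → wfun (L0 s) (L0 t) (L1 t) = some s := by
  intro s t; fin_cases s <;> fin_cases t <;> decide
lemma wf_live : ∀ a b c : Bool, ¬(a = b ∧ b = c) → ∃ s, wfun a b c = some s := by decide
lemma wf_notriple : ∀ (a b c : Bool) (s : Fin 6), wfun a b c = some s → ¬(a = b ∧ b = c) := by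
  decide
lemma wf_b : ∀ (a b c : Bool) (s : Fin 6), wfun a b c = some s → (bv s = 1 ↔ ¬(a = b)) := by decide
lemma wf_d : ∀ (a b c : Bool) (s : Fin 6), wfun a b c = some s → (dv s = 1 ↔ ¬(b = c)) := by decide
lemma wf_edge_fwd : ∀ (a b c d : Bool) (s t : Fin 6), wfun a b c = some s → wfun b c d = some t →
    (a = false → d = false → b = c) → transferA s t = 1 := by
  intro a b c d s t; revert a b c d; fin_cases s <;> fin_cases t <;> decide
lemma wf_edge_bwd : ∀ (a b c d : Bool) (s t : Fin 6), wfun a b c = some s → wfun b c d = some t →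
    transferA s t = 1 → (a = false → d = false → b = c) := by
  intro a b c d s t; revert a b c d; fin_cases s <;> fin_cases t <;> decide
lemma hA01 : ∀ s t : Fin 6, transferA s t = 0 ∨ transferA s t = 1 := by
  intro s t; fin_cases s <;> fin_cases t <;> decide

lemma edgeO_elim {o1 o2} (h : EdgeO o1 o2) :
    ∃ s t, o1 = some s ∧ o2 = some t ∧ transferA s t = 1 := by
  match o1, o2, h with
  | some s, some t, h => exact ⟨s, t, rfl, rfl, h⟩

lemma local_iff_chain (k : ℕ) (c : ℕ → Bool) :
    LocalP k c ↔ ∃ s, bv s = 1 ∧ ChainP k s c := by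
  constructor
  · rintro ⟨h1, h2, h3, h4⟩
    obtain ⟨s, hs⟩ := wf_live _ _ _ (h3 0 (by omega))
    refine ⟨s, (wf_b _ _ _ _ hs).mpr h1, ?_, hs, ?_⟩
    · intro i hi
      obtain ⟨u, hu⟩ := wf_live _ _ _ (h3 i (by omega))
      obtain ⟨v, hv⟩ := wf_live (c (i+1)) (c (i+2)) (c (i+3)) (h3 (i+1) (by omega))
      have : EdgeO (some u) (some v) :=
        wf_edge_fwd _ _ _ _ _ _ hu hv (h4 i (by omega))
      rw [winf, winf, hu]
      rw [show c (i+1+1) = c (i+2) from rfl, show c (i+1+2) = c (i+3) from rfl, hv]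
      exact this
    · obtain ⟨t, ht⟩ := wf_live (c k) (c (k+1)) (c (k+2)) (h3 k (by omega))
      exact ⟨t, ht, (wf_d _ _ _ _ ht).mpr h2⟩
  · rintro ⟨s, hb, hch, hw0, t, hwk, hd⟩
    have hlive : ∀ i, i + 3 ≤ k + 3 → ∃ u, winf c i = some u := by
      intro i hi
      rcases eq_or_ne i k with rfl | hne
      · exact ⟨t, hwk⟩
      · obtain ⟨u, v, hu, hv, _⟩ := edgeO_elim (hch i (by omega))
        exact ⟨u, hu⟩
    refine ⟨(wf_b _ _ _ _ hw0).mp hb, (wf_d _ _ _ _ hwk).mp hd, ?_, ?_⟩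
    · intro i hi
      obtain ⟨u, hu⟩ := hlive i hi
      exact wf_notriple _ _ _ _ hu
    · intro i hi hc0 hc3
      obtain ⟨u, v, hu, hv, he⟩ := edgeO_elim (hch i (by omega))
      rw [winf, show c (i+1+1) = c (i+2) from rfl, show c (i+1+2) = c (i+3) from rfl] at hv
      exact wf_edge_bwd _ _ _ _ _ _ hu hv he hc0 hc3


def Supp (N : ℕ) (c : ℕ → Bool) : Prop := ∀ j, N ≤ j → c j = false

lemma hdv01 : ∀ s : Fin 6, dv s = 0 ∨ dv s = 1 := by decide

def StP (m : ℕ) (s : Fin 6) (c : ℕ → Bool) : Prop := Supp (m+3) c ∧ ChainP m s c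

def shiftB (c : ℕ → Bool) : ℕ → Bool := fun k => c (k+1)
def consB (a : Bool) (c : ℕ → Bool) : ℕ → Bool := fun k => Nat.casesOn k a c

lemma winf_cons0 (a : Bool) (c : ℕ → Bool) : winf (consB a c) 0 = wfun a (c 0) (c 1) := rfl
lemma winf_consS (a : Bool) (c : ℕ → Bool) (i : ℕ) : winf (consB a c) (i+1) = winf c i := rfl
lemma winf_shift (c : ℕ → Bool) (i : ℕ) : winf (shiftB c) i = winf c (i+1) := rfl

lemma finite_supp (N : ℕ) (P : (ℕ → Bool) → Prop) (hP : ∀ c, P c → Supp N c) :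
    Finite {c // P c} := by
  apply Finite.of_injective (fun x : {c // P c} => (fun i : Fin N => x.1 i))
  intro x y hxy
  apply Subtype.ext; funext j
  by_cases hj : j < N
  · exact congrFun hxy ⟨j, hj⟩
  · rw [hP _ x.2 j (by omega), hP _ y.2 j (by omega)]

lemma card_sigma' {ι : Type} [Fintype ι] (F : ι → Type) [∀ i, Finite (F i)] :
    Nat.card (Σ i, F i) = ∑ i, Nat.card (F i) := by
  classical
  haveI : ∀ i, Fintype (F i) := fun i => Fintype.ofFinite _
  simp [Nat.card_eq_fintype_card, Fintype.card_sigma]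

lemma sum_edge (s : Fin 6) (w : Fin 6 → ℕ) :
    ∑ x : {t : Fin 6 // transferA s t = 1}, w x.1 = transferA.mulVec w s := by
  classical
  have h1 : transferA.mulVec w s = ∑ t : Fin 6, transferA s t * w t := by
    simp [Matrix.mulVec, dotProduct]
  rw [h1, ← Finset.sum_filter_add_sum_filter_not Finset.univ (fun t => transferA s t = 1)]
  have h2 : ∑ t ∈ Finset.univ.filter (fun t => ¬ transferA s t = 1),
      transferA s t * w t = 0 := by
    apply Finset.sum_eq_zero
    intro t ht
    rcases hA01 s t with h | h
    · rw [h, zero_mul]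
    · exact absurd h (Finset.mem_filter.mp ht).2
  rw [h2, add_zero]
  rw [← Finset.sum_subtype (Finset.univ.filter (fun t => transferA s t = 1))
    (by intro x; simp) (fun t => w t)]
  apply Finset.sum_congr rfl
  intro t ht
  rw [(Finset.mem_filter.mp ht).2, one_mul]

lemma count_St (m : ℕ) (s : Fin 6) :
    Nat.card {c : ℕ → Bool // StP m s c} = (transferA ^ m).mulVec dv s := by
  induction m generalizing s with
  | zero =>
    rw [pow_zero, Matrix.one_mulVec]
    rcases hdv01 s with hd | hd
    · haveI : IsEmpty {c : ℕ → Bool // StP 0 s c} := by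
        refine ⟨fun x => ?_⟩
        obtain ⟨c, _, _, hw0, t, hwt, hdt⟩ := x
        rw [hw0] at hwt
        rw [Option.some.inj hwt] at hd
        omega
      rw [Nat.card_of_isEmpty, hd]
    · rw [hd]
      set c₀ : ℕ → Bool := fun j => if j = 0 then L0 s else if j = 1 then L1 s
        else if j = 2 then L2 s else false with hc₀
      have hw : winf c₀ 0 = some s := by
        have e0 : c₀ 0 = L0 s := rfl
        have e1 : c₀ 1 = L1 s := rfl
        have e2 : c₀ 2 = L2 s := rfl
        rw [winf, e0, e1, e2, wf_L]
      have he : StP 0 s c₀ := by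
        refine ⟨?_, ?_, hw, ⟨s, hw, hd⟩⟩
        · intro j hj
          simp only [hc₀]
          rw [if_neg (by omega), if_neg (by omega), if_neg (by omega)]
        · intro i hi; omega
      have huniq : ∀ x : {c : ℕ → Bool // StP 0 s c}, x = ⟨c₀, he⟩ := by
        rintro ⟨c, hsupp, _, hw0, _⟩
        obtain ⟨e0, e1, e2⟩ := wf_letters _ _ _ _ hw0
        apply Subtype.ext; funext j
        show c j = c₀ j
        match j with
        | 0 => rw [e0]; rfl
        | 1 => rw [e1]; rfl
        | 2 => rw [e2]; rfl
        | (j+3) =>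
          rw [hsupp (j+3) (by omega)]
          show false = c₀ (j+3)
          simp only [hc₀]
          rw [if_neg (by omega), if_neg (by omega), if_neg (by omega)]
      haveI : Nonempty {c : ℕ → Bool // StP 0 s c} := ⟨⟨c₀, he⟩⟩
      haveI : Subsingleton {c : ℕ → Bool // StP 0 s c} :=
        ⟨fun a b => (huniq a).trans (huniq b).symm⟩
      exact Nat.card_unique
  | succ m ih =>
    classical
    have key : ∀ (t : Fin 6), transferA s t = 1 → ∀ c, StP m t c →
        StP (m+1) s (consB (L0 s) c) := by
      rintro t ht c ⟨hsupp, hch, hw0, hdac⟩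
      obtain ⟨e0, e1, _⟩ := wf_letters _ _ _ _ hw0
      have h0 : winf (consB (L0 s) c) 0 = some s := by
        rw [winf_cons0, e0, e1]; exact wf_edge s t ht
      refine ⟨?_, ?_, h0, ?_⟩
      · intro j hj
        obtain ⟨j', rfl⟩ : ∃ j', j = j' + 1 := ⟨j - 1, by omega⟩
        exact hsupp j' (by omega)
      · intro i hi
        cases i with
        | zero =>
          have h1 : winf (consB (L0 s) c) 1 = some t := by
            rw [show winf (consB (L0 s) c) 1 = winf c 0 from rfl, hw0]
          rw [show (0:ℕ)+1 = 1 from rfl, h0, h1]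
          exact ht
        | succ i =>
          rw [winf_consS, winf_consS]
          exact hch i (by omega)
      · rw [winf_consS]; exact hdac
    have hbij : Function.Bijective
        (fun x : (Σ t : {t : Fin 6 // transferA s t = 1}, {c : ℕ → Bool // StP m t.1 c}) =>
          (⟨consB (L0 s) x.2.1, key x.1.1 x.1.2 x.2.1 x.2.2⟩ :
            {c : ℕ → Bool // StP (m+1) s c})) := by
      constructor
      · rintro ⟨⟨t, ht⟩, ⟨c, hc⟩⟩ ⟨⟨t', ht'⟩, ⟨c', hc'⟩⟩ h
        simp only [Subtype.mk.injEq] at h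
        have hcc : c = c' := funext fun k => congrFun h (k+1)
        subst hcc
        have htt : t = t' := Option.some.inj (hc.2.2.1.symm.trans hc'.2.2.1)
        subst htt
        rfl
      · rintro ⟨c, hsupp, hch, hw0, hdac⟩
        obtain ⟨u, t, hu, ht1, het⟩ := edgeO_elim (hch 0 (by omega))
        have hus : u = s := Option.some.inj (hu.symm.trans hw0)
        subst hus
        refine ⟨⟨⟨t, het⟩, ⟨shiftB c, ?_, ?_, ?_, ?_⟩⟩, ?_⟩
        · intro j hj; exact hsupp (j+1) (by omega)
        · intro i hi; rw [winf_shift, winf_shift]; exact hch (i+1) (by omega)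
        · rw [winf_shift]; exact ht1
        · rw [winf_shift]; exact hdac
        · apply Subtype.ext
          funext k
          cases k with
          | zero =>
            show L0 u = c 0
            exact (wf_letters _ _ _ _ hw0).1.symm
          | succ k => rfl
    haveI : ∀ t : {t : Fin 6 // transferA s t = 1}, Finite {c : ℕ → Bool // StP m t.1 c} :=
      fun t => finite_supp (m+3) _ (fun c hc => hc.1)
    rw [← Nat.card_eq_of_bijective _ hbij,
      card_sigma' (fun t : {t : Fin 6 // transferA s t = 1} => {c : ℕ → Bool // StP m t.1 c})]
    have : ∀ t : {t : Fin 6 // transferA s t = 1},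
        Nat.card {c : ℕ → Bool // StP m t.1 c} = (transferA ^ m).mulVec dv t.1 :=
      fun t => ih t.1
    rw [Finset.sum_congr rfl (fun t _ => this t)]
    rw [sum_edge s ((transferA ^ m).mulVec dv), Matrix.mulVec_mulVec, ← pow_succ']


open Matrix in
theorem noSunCount_eq_transferMatrix_form (n : ℕ) (hn : 3 ≤ n) :
    Nat.card {c : ℕ → Bool // (∀ j : ℕ, n ≤ j → c j = false) ∧ NoSunMaximal n c} =
      ![1,0,1,0,1,1] ⬝ᵥ (transferA ^ (n - 3)).mulVec ![0,1,0,1,1,1] := by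
  classical
  obtain ⟨k, rfl⟩ : ∃ k, n = k + 3 := ⟨n - 3, by omega⟩
  simp only [Nat.add_sub_cancel]
  have e1 : {c : ℕ → Bool // (∀ j : ℕ, k + 3 ≤ j → c j = false) ∧ NoSunMaximal (k+3) c} ≃
      {c : ℕ → Bool // Supp (k+3) c ∧ LocalP k c} :=
    Equiv.subtypeEquivRight (fun c =>
      and_congr_right fun _ => ⟨maximal_local k c, local_maximal k c⟩)
  rw [Nat.card_congr e1]
  haveI : Finite {c : ℕ → Bool // Supp (k+3) c ∧ LocalP k c} :=
    finite_supp (k+3) _ (fun c hc => hc.1)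
  rw [Nat.card_congr (Equiv.sigmaFiberEquiv
    (fun x : {c : ℕ → Bool // Supp (k+3) c ∧ LocalP k c} => (winf x.1 0).getD 0)).symm]
  rw [card_sigma' (fun s : Fin 6 =>
    {x : {c : ℕ → Bool // Supp (k+3) c ∧ LocalP k c} // (winf x.1 0).getD 0 = s})]
  have hbv01 : ∀ s : Fin 6, bv s = 0 ∨ bv s = 1 := by decide
  have hfib : ∀ s : Fin 6,
      Nat.card {x : {c : ℕ → Bool // Supp (k+3) c ∧ LocalP k c} // (winf x.1 0).getD 0 = s}
        = bv s * ((transferA ^ k).mulVec dv) s := by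
    intro s
    rcases hbv01 s with hb | hb
    · haveI : IsEmpty
          {x : {c : ℕ → Bool // Supp (k+3) c ∧ LocalP k c} // (winf x.1 0).getD 0 = s} := by
        refine ⟨fun x => ?_⟩
        obtain ⟨⟨c, hsup, hloc⟩, hf⟩ := x
        obtain ⟨s', hb', hch'⟩ := (local_iff_chain k c).mp hloc
        rw [hch'.2.1] at hf
        simp only [Option.getD_some] at hf
        rw [hf] at hb'
        omega
      rw [Nat.card_of_isEmpty, hb, zero_mul]
    · rw [hb, one_mul, ← count_St k s]
      apply Nat.card_congr
      refine ⟨fun x => ⟨x.1.1, x.1.2.1, ?_⟩,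
        fun y => ⟨⟨y.1, y.2.1, (local_iff_chain k y.1).mpr ⟨s, hb, y.2.2⟩⟩, ?_⟩,
        fun x => Subtype.ext (Subtype.ext rfl), fun y => Subtype.ext rfl⟩
      · obtain ⟨s', hb', hch'⟩ := (local_iff_chain k x.1.1).mp x.1.2.2
        have hf := x.2
        rw [hch'.2.1] at hf
        simp only [Option.getD_some] at hf
        rwa [hf] at hch'
      · show (winf y.1 0).getD 0 = s
        rw [y.2.2.2.1]
        rfl
  rw [Finset.sum_congr rfl (fun s _ => hfib s)]
  show ∑ s : Fin 6, bv s * ((transferA ^ k).mulVec dv) s = _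
  simp only [dotProduct, bv, dv]
end

section
/- Fix k ≥ 1. Let c be a permissible k-story configuration of length n, let c' be a permissible k-story configuration of length n', and let i ∈ {0,…,n−1} and i' ∈ {0,…,n'−1} be lots such that c(i+t) = c'(i'+t) for every integer t with |t| ≤ 2k (using the zero-padded extensions). If c(i) < k, then the configuration obtained from c by replacing c(i) with c(i)+1 is permissible if and only if the configuration obtained from c' by replacing c'(i') with c'(i')+1 is permissible. (In other words, whether an additional story can be built on a given lot without violating permissibility depends only on the states of the 2k lots immediately to the east and the 2k lots immediately to the west of that lot.) -/
/-- A `k`-story configuration of length `n`: at most `k` stories on each lot,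
zero-padded outside `{0, …, n−1}`. -/
def StoryConfig (k n : ℕ) (c : ℤ → ℕ) : Prop :=
  (∀ j : ℤ, c j ≤ k) ∧ ∀ j : ℤ, j < 0 ∨ (n : ℤ) ≤ j → c j = 0

/-- Story `s` of the house on lot `i` is blocked from the east. -/
def BlockedEast (c : ℤ → ℕ) (i : ℤ) (s : ℕ) : Prop :=
  ∃ j : ℤ, i < j ∧ (s : ℤ) ≤ (c j : ℤ) - (j - i) + 1

/-- Story `s` of the house on lot `i` is blocked from the west. -/
def BlockedWest (c : ℤ → ℕ) (i : ℤ) (s : ℕ) : Prop :=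
  ∃ j : ℤ, j < i ∧ (s : ℤ) ≤ (c j : ℤ) - (i - j) + 1

/-- Permissibility: every story of every house gets sunlight from the east or the west. -/
def StoryPermissible (c : ℤ → ℕ) : Prop :=
  ∀ i : ℤ, ∀ s : ℕ, 1 ≤ s → s ≤ c i → ¬ BlockedEast c i s ∨ ¬ BlockedWest c i s

/-- Maximality: permissible, and adding one more story anywhere breaks permissibility. -/
def StoryMaximal (k n : ℕ) (c : ℤ → ℕ) : Prop :=
  StoryPermissible c ∧
    ∀ i : ℤ, 0 ≤ i → i < (n : ℤ) → c i < k →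
      ¬ StoryPermissible (Function.update c i (c i + 1))


lemma local_bad {k n : ℕ} {c c' : ℤ → ℕ}
    (hc : StoryConfig k n c) (hcP : StoryPermissible c)
    {i i' : ℤ}
    (hagree : ∀ t : ℤ, |t| ≤ 2 * (k : ℤ) → c (i + t) = c' (i' + t))
    (hlt : c i < k)
    (hbad : ¬ StoryPermissible (Function.update c i (c i + 1))) :
    ¬ StoryPermissible (Function.update c' i' (c' i' + 1)) := by
  set d := Function.update c i (c i + 1) with hd
  set d' := Function.update c' i' (c' i' + 1) with hd'
  have hdk : ∀ j : ℤ, d j ≤ k := by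
    intro j
    by_cases h : j = i
    · subst h; simp [hd]; omega
    · simp [hd, Function.update_of_ne h]; exact hc.1 j
  have hkk : (0:ℤ) ≤ 2 * (k:ℤ) := by positivity
  have hagree' : ∀ t : ℤ, |t| ≤ 2 * (k : ℤ) → d (i + t) = d' (i' + t) := by
    intro t ht
    by_cases h0 : t = 0
    · subst h0
      have h := hagree 0 (by simp)
      simp only [add_zero] at h ⊢
      simp [hd, hd', h]
    · have h1 : i + t ≠ i := by omega
      have h2 : i' + t ≠ i' := by omega
      simp [hd, hd', Function.update_of_ne h1, Function.update_of_ne h2, hagree t ht]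
  rw [StoryPermissible] at hbad
  push_neg at hbad
  obtain ⟨j0, s, hs1, hs2, hBE, hBW⟩ := hbad
  obtain ⟨jE, hjE, hE⟩ := hBE
  obtain ⟨jW, hjW, hW⟩ := hBW
  have hs1' : (1:ℤ) ≤ (s:ℤ) := by exact_mod_cast hs1
  have hEb : jE - j0 ≤ (d jE : ℤ) := by omega
  have hWb : j0 - jW ≤ (d jW : ℤ) := by omega
  have hdkE : (d jE : ℤ) ≤ k := by exact_mod_cast hdk jE
  have hdkW : (d jW : ℤ) ≤ k := by exact_mod_cast hdk jW
  -- `|j0 - i| ≤ k`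
  have hj0b : |j0 - i| ≤ (k:ℤ) := by
    by_cases h0 : j0 = i
    · subst h0; simp
    by_cases hEi : jE = i
    · subst hEi; rw [abs_le]; omega
    by_cases hWi : jW = i
    · subst hWi; rw [abs_le]; omega
    · exfalso
      have e0 : d j0 = c j0 := Function.update_of_ne h0 _ _
      have eE : d jE = c jE := Function.update_of_ne hEi _ _
      have eW : d jW = c jW := Function.update_of_ne hWi _ _
      rcases hcP j0 s hs1 (by rw [e0] at hs2; exact hs2) with h | h
      · exact h ⟨jE, hjE, by rw [eE] at hE; exact hE⟩
      · exact h ⟨jW, hjW, by rw [eW] at hW; exact hW⟩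
  rw [abs_le] at hj0b
  have ht0 : |j0 - i| ≤ 2 * (k:ℤ) := by rw [abs_le]; omega
  have htE : |jE - i| ≤ 2 * (k:ℤ) := by rw [abs_le]; omega
  have htW : |jW - i| ≤ 2 * (k:ℤ) := by rw [abs_le]; omega
  have e0 : d j0 = d' (i' + (j0 - i)) := by
    have := hagree' (j0 - i) ht0; rwa [add_sub_cancel] at this
  have eE : d jE = d' (i' + (jE - i)) := by
    have := hagree' (jE - i) htE; rwa [add_sub_cancel] at this
  have eW : d jW = d' (i' + (jW - i)) := by
    have := hagree' (jW - i) htW; rwa [add_sub_cancel] at this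
  intro hP
  rcases hP (i' + (j0 - i)) s hs1 (by rw [← e0]; exact hs2) with h | h
  · exact h ⟨i' + (jE - i), by omega, by rw [← eE]; omega⟩
  · exact h ⟨i' + (jW - i), by omega, by rw [← eW]; omega⟩

theorem story_buildable_is_local (k : ℕ) (hk : 1 ≤ k) (n n' : ℕ) (c c' : ℤ → ℕ)
    (hc : StoryConfig k n c) (hcP : StoryPermissible c)
    (hc' : StoryConfig k n' c') (hc'P : StoryPermissible c')
    (i i' : ℤ) (hi0 : 0 ≤ i) (hin : i < (n : ℤ)) (hi'0 : 0 ≤ i') (hi'n : i' < (n' : ℤ))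
    (hagree : ∀ t : ℤ, |t| ≤ 2 * (k : ℤ) → c (i + t) = c' (i' + t))
    (hlt : c i < k) :
    StoryPermissible (Function.update c i (c i + 1)) ↔
      StoryPermissible (Function.update c' i' (c' i' + 1)) := by
  have hagree' : ∀ t : ℤ, |t| ≤ 2 * (k : ℤ) → c' (i' + t) = c (i + t) :=
    fun t ht => (hagree t ht).symm
  have hlt' : c' i' < k := by
    have := hagree 0 (by positivity); simp at this; omega
  constructor
  · intro h
    by_contra h'
    exact local_bad hc' hc'P hagree' hlt' h' h
  · intro h
    by_contra h'
    exact local_bad hc hcP hagree hlt h' h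
end

section
/- Fix k ≥ 1. Let c be a maximal k-story configuration of length n and c' a maximal k-story configuration of length n', and let i ∈ {0,…,n−1} and i' ∈ {0,…,n'−1} be lots such that c(i+t) = c'(i'+t) for every integer t with 1 ≤ |t| ≤ 2k (using the zero-padded extensions). Then c(i) = c'(i'). (The state of a lot in a maximal configuration is uniquely determined by the states of the 2k lots immediately to its east and the 2k lots immediately to its west.) -/
lemma blockedEast_mono {c d : ℤ → ℕ} (h : ∀ j, d j ≤ c j) {i : ℤ} {s : ℕ}
    (hb : BlockedEast d i s) : BlockedEast c i s := by
  obtain ⟨j, hj, hs⟩ := hb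
  exact ⟨j, hj, by have := h j; omega⟩

lemma blockedWest_mono {c d : ℤ → ℕ} (h : ∀ j, d j ≤ c j) {i : ℤ} {s : ℕ}
    (hb : BlockedWest d i s) : BlockedWest c i s := by
  obtain ⟨j, hj, hs⟩ := hb
  exact ⟨j, hj, by have := h j; omega⟩

lemma perm_mono {c d : ℤ → ℕ} (h : ∀ j, d j ≤ c j) (hc : StoryPermissible c) :
    StoryPermissible d := fun i s h1 h2 =>
  (hc i s h1 (h2.trans (h i))).imp
    (fun h3 hb => h3 (blockedEast_mono h hb))
    (fun h3 hb => h3 (blockedWest_mono h hb))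

/-- A far-away single-site modification (bounded by `k`) does not affect east-blocking. -/
lemma blockedEast_congr {c d : ℤ → ℕ} {k : ℕ} {i j : ℤ} {s : ℕ}
    (heq : ∀ m, m ≠ i → d m = c m) (hdi : d i ≤ k)
    (hfar : (k : ℤ) < |i - j|) (hs : 1 ≤ s)
    (hb : BlockedEast d j s) : BlockedEast c j s := by
  obtain ⟨j0, hj0, hle⟩ := hb
  have hne : j0 ≠ i := by
    rintro rfl
    rcases abs_cases (j0 - j) with ⟨h, _⟩ | ⟨h, _⟩ <;> omega
  rw [heq j0 hne] at hle
  exact ⟨j0, hj0, hle⟩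

lemma blockedWest_congr {c d : ℤ → ℕ} {k : ℕ} {i j : ℤ} {s : ℕ}
    (heq : ∀ m, m ≠ i → d m = c m) (hdi : d i ≤ k)
    (hfar : (k : ℤ) < |i - j|) (hs : 1 ≤ s)
    (hb : BlockedWest d j s) : BlockedWest c j s := by
  obtain ⟨j0, hj0, hle⟩ := hb
  have hne : j0 ≠ i := by
    rintro rfl
    rcases abs_cases (j0 - j) with ⟨h, _⟩ | ⟨h, _⟩ <;> omega
  rw [heq j0 hne] at hle
  exact ⟨j0, hj0, hle⟩

/-- Blocking transfers along an agreement of two configurations on a `2k`-window. -/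
lemma blockedEast_shift {d d' : ℤ → ℕ} {k : ℕ} (hd : ∀ m, d m ≤ k)
    {i i' t : ℤ} (hag : ∀ u : ℤ, |u| ≤ 2 * (k : ℤ) → d (i + u) = d' (i' + u))
    (ht : |t| ≤ (k : ℤ)) {s : ℕ} (hs : 1 ≤ s)
    (hb : BlockedEast d (i + t) s) : BlockedEast d' (i' + t) s := by
  obtain ⟨j0, hj0, hle⟩ := hb
  set u := j0 - i with hu
  have hb1 : j0 - (i + t) ≤ (k : ℤ) := by have := hd j0; omega
  have hu2 : |u| ≤ 2 * (k : ℤ) := by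
    rcases abs_cases t with ⟨h, _⟩ | ⟨h, _⟩ <;> rcases abs_cases u with ⟨h2, _⟩ | ⟨h2, _⟩ <;> omega
  refine ⟨i' + u, by omega, ?_⟩
  rw [← hag u hu2]
  have hju : i + u = j0 := by omega
  rw [hju]
  omega

lemma blockedWest_shift {d d' : ℤ → ℕ} {k : ℕ} (hd : ∀ m, d m ≤ k)
    {i i' t : ℤ} (hag : ∀ u : ℤ, |u| ≤ 2 * (k : ℤ) → d (i + u) = d' (i' + u))
    (ht : |t| ≤ (k : ℤ)) {s : ℕ} (hs : 1 ≤ s)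
    (hb : BlockedWest d (i + t) s) : BlockedWest d' (i' + t) s := by
  obtain ⟨j0, hj0, hle⟩ := hb
  set u := j0 - i with hu
  have hb1 : (i + t) - j0 ≤ (k : ℤ) := by have := hd j0; omega
  have hu2 : |u| ≤ 2 * (k : ℤ) := by
    rcases abs_cases t with ⟨h, _⟩ | ⟨h, _⟩ <;> rcases abs_cases u with ⟨h2, _⟩ | ⟨h2, _⟩ <;> omega
  refine ⟨i' + u, by omega, ?_⟩
  rw [← hag u hu2]
  have hju : i + u = j0 := by omega
  rw [hju]
  omega

/-- Key one-sided lemma: under the agreement hypothesis, `c i` cannot be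
strictly smaller than `c' i'`. -/
lemma story_key (k : ℕ) (n : ℕ) (c c' : ℤ → ℕ)
    (hck : ∀ j, c j ≤ k) (hc'k : ∀ j, c' j ≤ k)
    (hcM : StoryMaximal k n c) (hc'perm : StoryPermissible c')
    (i i' : ℤ) (hi0 : 0 ≤ i) (hin : i < (n : ℤ))
    (hagree : ∀ t : ℤ, 1 ≤ |t| → |t| ≤ 2 * (k : ℤ) → c (i + t) = c' (i' + t)) :
    ¬ (c i < c' i') := by
  intro hlt
  have hciK : c i < k := lt_of_lt_of_le hlt (hc'k i')
  set v := c i + 1 with hv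
  set d := Function.update c i v with hd
  set d' := Function.update c' i' v with hd'
  have hdk : ∀ m, d m ≤ k := by
    intro m
    rcases eq_or_ne m i with rfl | h
    · simp [hd]; omega
    · simp [hd, Function.update_of_ne h]; exact hck m
  have hd'k : ∀ m, d' m ≤ k := by
    intro m
    rcases eq_or_ne m i' with rfl | h
    · simp [hd']; omega
    · simp [hd', Function.update_of_ne h]; exact hc'k m
  -- d' is permissible since d' ≤ c' pointwise
  have hd'perm : StoryPermissible d' := by
    refine perm_mono (fun m => ?_) hc'perm
    rcases eq_or_ne m i' with rfl | h
    · simp [hd']; omega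
    · simp [hd', Function.update_of_ne h]
  -- the two updated configurations agree on the 2k-window
  have hag : ∀ u : ℤ, |u| ≤ 2 * (k : ℤ) → d' (i' + u) = d (i + u) := by
    intro u hu
    rcases eq_or_ne u 0 with rfl | h
    · simp [hd, hd']
    · have h1 : i + u ≠ i := by omega
      have h2 : i' + u ≠ i' := by omega
      rw [hd, hd', Function.update_of_ne h1, Function.update_of_ne h2]
      exact (hagree u (by rcases abs_cases u with ⟨h3, _⟩ | ⟨h3, _⟩ <;> omega) hu).symm
  have hagrev : ∀ u : ℤ, |u| ≤ 2 * (k : ℤ) → d (i + u) = d' (i' + u) :=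
    fun u hu => (hag u hu).symm
  -- transfer permissibility of d' to d
  have hdperm : StoryPermissible d := by
    intro j s hs1 hs2
    by_cases hnear : |j - i| ≤ (k : ℤ)
    · set t := j - i with htt
      have hj : j = i + t := by omega
      have hs2' : s ≤ d' (i' + t) := by
        rw [hag t (by rcases abs_cases t with ⟨h3, _⟩ | ⟨h3, _⟩ <;> omega), ← hj]
        exact hs2
      rcases hd'perm (i' + t) s hs1 hs2' with h | h
      · left; rw [hj]; intro hb
        exact h (blockedEast_shift hdk hagrev hnear hs1 hb)
      · right; rw [hj]; intro hb
        exact h (blockedWest_shift hdk hagrev hnear hs1 hb)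
    · have hji : j ≠ i := by
        rintro rfl
        simp at hnear
      have heq : ∀ m, m ≠ i → d m = c m := fun m hm => Function.update_of_ne hm _ _
      have hdi : d i ≤ k := hdk i
      have hfar : (k : ℤ) < |i - j| := by
        rw [abs_sub_comm]; omega
      have hdj : d j = c j := heq j hji
      rcases hcM.1 j s hs1 (by rw [← hdj]; exact hs2) with h | h
      · left; intro hb; exact h (blockedEast_congr heq hdi hfar hs1 hb)
      · right; intro hb; exact h (blockedWest_congr heq hdi hfar hs1 hb)
  exact hcM.2 i hi0 hin hciK hdperm

theorem story_state_determined_by_neighbors (k : ℕ) (hk : 1 ≤ k) (n n' : ℕ) (c c' : ℤ → ℕ)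
    (hc : StoryConfig k n c) (hcM : StoryMaximal k n c)
    (hc' : StoryConfig k n' c') (hc'M : StoryMaximal k n' c')
    (i i' : ℤ) (hi0 : 0 ≤ i) (hin : i < (n : ℤ)) (hi'0 : 0 ≤ i') (hi'n : i' < (n' : ℤ))
    (hagree : ∀ t : ℤ, 1 ≤ |t| → |t| ≤ 2 * (k : ℤ) → c (i + t) = c' (i' + t)) :
    c i = c' i' := by
  have h1 : ¬ (c i < c' i') :=
    story_key k n c c' hc.1 hc'.1 hcM hc'M.1 i i' hi0 hin hagree
  have h2 : ¬ (c' i' < c i) :=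
    story_key k n' c' c hc'.1 hc.1 hc'M hcM.1 i' i hi'0 hi'n
      (fun t h1 h2 => (hagree t h1 h2).symm)
  omega
end

section
/- Fix k ≥ 1 and let u : {0,…,4k} → {0,…,k} be a word of length 4k+1. If there exist n ∈ ℕ, a maximal k-story configuration c of length n and an index i with 0 ≤ i and i + 4k ≤ n − 1 such that c(i+t) = u(t) for all 0 ≤ t ≤ 4k, then there exists a maximal k-story configuration c' of length 8k+1 containing u as a contiguous substring, i.e. there is an index i' with 0 ≤ i', i' + 4k ≤ 8k, and c'(i'+t) = u(t) for all 0 ≤ t ≤ 4k. Moreover, if u occurs at the beginning of some maximal configuration (i = 0), then c' can be chosen so that u occurs at its beginning (i' = 0), and if u occurs at the end of some maximal configuration (i + 4k = n − 1), then c' can be chosen so that u occurs at its end (i' + 4k = 8k). -/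
lemma not_perm_iff (c : ℤ → ℕ) :
    ¬ StoryPermissible c ↔
      ∃ i : ℤ, ∃ s : ℕ, 1 ≤ s ∧ s ≤ c i ∧ BlockedEast c i s ∧ BlockedWest c i s := by
  unfold StoryPermissible
  push_neg
  rfl

/-- Impermissibility after adding a story is monotone under raising other lots. -/
lemma mono_notperm (c c₂ : ℤ → ℕ) (q : ℤ) (hle : ∀ x, c x ≤ c₂ x) (heq : c₂ q = c q)
    (h : ¬ StoryPermissible (Function.update c q (c q + 1))) :
    ¬ StoryPermissible (Function.update c₂ q (c₂ q + 1)) := by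
  rw [not_perm_iff] at h ⊢
  obtain ⟨i, s, h1, h2, ⟨jE, hE1, hE2⟩, ⟨jW, hW1, hW2⟩⟩ := h
  have hle' : ∀ x, Function.update c q (c q + 1) x ≤ Function.update c₂ q (c₂ q + 1) x := by
    intro x
    by_cases hx : x = q
    · subst hx; simp [heq]
    · simp only [Function.update_of_ne hx]; exact hle x
  refine ⟨i, s, h1, le_trans h2 (hle' i), ⟨jE, hE1, ?_⟩, ⟨jW, hW1, ?_⟩⟩
  · have hh := hle' jE
    have hh' : ((Function.update c q (c q + 1) jE : ℕ) : ℤ)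
        ≤ ((Function.update c₂ q (c₂ q + 1) jE : ℕ) : ℤ) := by exact_mod_cast hh
    linarith
  · have hh := hle' jW
    have hh' : ((Function.update c q (c q + 1) jW : ℕ) : ℤ)
        ≤ ((Function.update c₂ q (c₂ q + 1) jW : ℕ) : ℤ) := by exact_mod_cast hh
    linarith

/-- Permissibility descends to pointwise-smaller shifted configurations. -/
lemma perm_of_le_shift (c c₀ : ℤ → ℕ) (δ : ℤ) (hle : ∀ x, c₀ x ≤ c (x + δ))
    (h : StoryPermissible c) : StoryPermissible c₀ := by
  intro i s hs1 hsi
  rcases h (i + δ) s hs1 (le_trans hsi (hle i)) with hE | hW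
  · left
    rintro ⟨j, hj1, hj2⟩
    refine hE ⟨j + δ, by omega, ?_⟩
    have hh : ((c₀ j : ℕ) : ℤ) ≤ (c (j + δ) : ℤ) := by exact_mod_cast hle j
    have : (j + δ) - (i + δ) = j - i := by ring
    rw [this]
    linarith
  · right
    rintro ⟨j, hj1, hj2⟩
    refine hW ⟨j + δ, by omega, ?_⟩
    have hh : ((c₀ j : ℕ) : ℤ) ≤ (c (j + δ) : ℤ) := by exact_mod_cast hle j
    have : (i + δ) - (j + δ) = i - j := by ring
    rw [this]
    linarith

/-- Locality/transfer: whether adding a story at `pos` breaks permissibility depends only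
on the values within distance `2k` of `pos`. -/
lemma transfer (k : ℕ) (c c₂ : ℤ → ℕ) (pos δ : ℤ)
    (hck : ∀ x, c x ≤ k) (hperm : StoryPermissible c) (hcp : c (pos + δ) < k)
    (hagree : ∀ x : ℤ, pos - 2*(k:ℤ) ≤ x → x ≤ pos + 2*(k:ℤ) → c₂ x = c (x + δ))
    (hnot : ¬ StoryPermissible (Function.update c (pos + δ) (c (pos + δ) + 1))) :
    ¬ StoryPermissible (Function.update c₂ pos (c₂ pos + 1)) := by
  set p : ℤ := pos + δ with hp
  set f : ℤ → ℕ := Function.update c p (c p + 1) with hf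
  set g : ℤ → ℕ := Function.update c₂ pos (c₂ pos + 1) with hg
  have hk0 : (0:ℤ) ≤ (k:ℤ) := Int.natCast_nonneg k
  have hc2pos : c₂ pos = c p := by
    have := hagree pos (by omega) (by omega)
    rw [this]
  have hfk : ∀ x, f x ≤ k := by
    intro x
    by_cases hx : x = p
    · subst hx; rw [hf, Function.update_self]; omega
    · rw [hf, Function.update_of_ne hx]; exact hck x
  have hkey : ∀ x : ℤ, pos - 2*(k:ℤ) ≤ x → x ≤ pos + 2*(k:ℤ) → g x = f (x + δ) := by
    intro x h1 h2
    by_cases hx : x = pos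
    · rw [hx, hg, Function.update_self, hf, ← hp, Function.update_self, hc2pos]
    · have hxd : x + δ ≠ p := by intro h; apply hx; omega
      rw [hg, Function.update_of_ne hx, hf, Function.update_of_ne hxd, hagree x h1 h2]
  rw [not_perm_iff] at hnot
  obtain ⟨i, s, hs1, hsi, hBE, hBW⟩ := hnot
  have hs1' : (1:ℤ) ≤ (s:ℤ) := by exact_mod_cast hs1
  have hcp' : (c p : ℤ) < (k:ℤ) := by exact_mod_cast hcp
  -- localize the violated house near p
  have hip : p - (k:ℤ) ≤ i ∧ i ≤ p + (k:ℤ) := by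
    by_cases hi : i = p
    · subst hi; omega
    · have hfi : f i = c i := by rw [hf, Function.update_of_ne hi]
      rcases hperm i s hs1 (by rw [hfi] at hsi; exact hsi) with hnE | hnW
      · obtain ⟨j, hij, hj⟩ := hBE
        have hjp : j = p := by
          by_contra hne
          exact hnE ⟨j, hij, by rw [hf, Function.update_of_ne hne] at hj; exact hj⟩
        subst hjp
        rw [hf, Function.update_self] at hj
        have : ((c p + 1 : ℕ) : ℤ) = (c p : ℤ) + 1 := by push_cast; ring
        rw [this] at hj
        omega
      · obtain ⟨j, hij, hj⟩ := hBW
        have hjp : j = p := by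
          by_contra hne
          exact hnW ⟨j, hij, by rw [hf, Function.update_of_ne hne] at hj; exact hj⟩
        subst hjp
        rw [hf, Function.update_self] at hj
        have : ((c p + 1 : ℕ) : ℤ) = (c p : ℤ) + 1 := by push_cast; ring
        rw [this] at hj
        omega
  -- localize the blockers near i
  obtain ⟨jE, hiE, hjE⟩ := hBE
  have hjEk : (f jE : ℤ) ≤ (k:ℤ) := by exact_mod_cast hfk jE
  have hjEb : jE ≤ i + (k:ℤ) := by omega
  obtain ⟨jW, hiW, hjW⟩ := hBW
  have hjWk : (f jW : ℤ) ≤ (k:ℤ) := by exact_mod_cast hfk jW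
  have hjWb : i - (k:ℤ) ≤ jW := by omega
  -- rebuild the violation in g
  rw [not_perm_iff]
  refine ⟨i - δ, s, hs1, ?_, ⟨jE - δ, by omega, ?_⟩, ⟨jW - δ, by omega, ?_⟩⟩
  · have hkk := hkey (i - δ) (by omega) (by omega)
    rw [hkk, show i - δ + δ = i by ring]
    exact hsi
  · have hkk := hkey (jE - δ) (by omega) (by omega)
    rw [hkk, show jE - δ + δ = jE by ring, show (jE - δ) - (i - δ) = jE - i by ring]
    exact hjE
  · have hkk := hkey (jW - δ) (by omega) (by omega)
    rw [hkk, show jW - δ + δ = jW by ring, show (i - δ) - (jW - δ) = i - jW by ring]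
    exact hjW

lemma exists_addable (k n : ℕ) (d : ℤ → ℕ) (hperm : StoryPermissible d)
    (h : ¬ StoryMaximal k n d) :
    ∃ pos : ℤ, 0 ≤ pos ∧ pos < (n : ℤ) ∧ d pos < k ∧
      StoryPermissible (Function.update d pos (d pos + 1)) := by
  unfold StoryMaximal at h
  push_neg at h
  exact h hperm

/-- Greedy completion: any permissible configuration whose protected window is already
unaddable can be completed to a maximal configuration without touching the window. -/
lemma greedy (k : ℕ) (u : Fin (4*k+1) → Fin (k+1)) (i' : ℤ) :
    ∀ N : ℕ, ∀ d : ℤ → ℕ, StoryConfig k (8*k+1) d → StoryPermissible d →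
    (∀ t : Fin (4*k+1), d (i' + ((t:ℕ):ℤ)) = (u t : ℕ)) →
    (∀ pos : ℤ, i' ≤ pos → pos ≤ i' + 4*(k:ℤ) → d pos < k →
      ¬ StoryPermissible (Function.update d pos (d pos + 1))) →
    (∑ m ∈ Finset.range (8*k+1), (k - d ((m:ℕ):ℤ))) ≤ N →
    ∃ c', StoryConfig k (8*k+1) c' ∧ StoryMaximal k (8*k+1) c' ∧
      ∀ t : Fin (4*k+1), c' (i' + ((t:ℕ):ℤ)) = (u t : ℕ) := by
  intro N
  induction N with
  | zero =>
    intro d hconf hperm hu hprot hS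
    by_cases hM : StoryMaximal k (8*k+1) d
    · exact ⟨d, hconf, hM, hu⟩
    · exfalso
      obtain ⟨pos, hp0, hpn, hpk, _⟩ := exists_addable k (8*k+1) d hperm hM
      set m₀ : ℕ := pos.toNat with hm₀def
      have hm₀ : ((m₀:ℕ):ℤ) = pos := Int.toNat_of_nonneg hp0
      have hm₀mem : m₀ ∈ Finset.range (8*k+1) := by
        rw [Finset.mem_range]; omega
      have hle := Finset.single_le_sum (f := fun m => k - d ((m:ℕ):ℤ))
        (fun _ _ => Nat.zero_le _) hm₀mem
      have hle' : k - d pos ≤ ∑ m ∈ Finset.range (8*k+1), (k - d ((m:ℕ):ℤ)) := by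
        simpa [hm₀] using hle
      omega
  | succ N ih =>
    intro d hconf hperm hu hprot hS
    by_cases hM : StoryMaximal k (8*k+1) d
    · exact ⟨d, hconf, hM, hu⟩
    · obtain ⟨pos, hp0, hpn, hpk, hpP⟩ := exists_addable k (8*k+1) d hperm hM
      have hpn' : pos ≤ 8*(k:ℤ) := by push_cast at hpn; omega
      set d' : ℤ → ℕ := Function.update d pos (d pos + 1) with hd'
      have hout : ¬ (i' ≤ pos ∧ pos ≤ i' + 4*(k:ℤ)) := by
        rintro ⟨h1, h2⟩
        exact hprot pos h1 h2 hpk hpP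
      have hdle : ∀ x, d x ≤ d' x := by
        intro x
        by_cases hx : x = pos
        · subst hx; rw [hd', Function.update_self]; omega
        · rw [hd', Function.update_of_ne hx]
      have hconf' : StoryConfig k (8*k+1) d' := by
        constructor
        · intro j
          by_cases hj : j = pos
          · subst hj; rw [hd', Function.update_self]; omega
          · rw [hd', Function.update_of_ne hj]; exact hconf.1 j
        · intro j hj
          have hjp : j ≠ pos := by
            push_cast at hj
            rcases hj with h | h <;> omega
          rw [hd', Function.update_of_ne hjp]
          exact hconf.2 j hj
      have hu' : ∀ t : Fin (4*k+1), d' (i' + ((t:ℕ):ℤ)) = (u t : ℕ) := by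
        intro t
        have ht : ((t:ℕ):ℤ) ≤ 4*(k:ℤ) := by
          have := t.isLt
          push_cast
          omega
        have ht0 : (0:ℤ) ≤ ((t:ℕ):ℤ) := Int.natCast_nonneg _
        have hne : i' + ((t:ℕ):ℤ) ≠ pos := by
          intro h
          exact hout ⟨by omega, by omega⟩
        rw [hd', Function.update_of_ne hne]
        exact hu t
      have hprot' : ∀ q : ℤ, i' ≤ q → q ≤ i' + 4*(k:ℤ) → d' q < k →
          ¬ StoryPermissible (Function.update d' q (d' q + 1)) := by
        intro q h1 h2 hqk
        have hqne : q ≠ pos := by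
          intro h
          exact hout ⟨by omega, by omega⟩
        have hq : d' q = d q := by rw [hd', Function.update_of_ne hqne]
        exact mono_notperm d d' q hdle hq (hprot q h1 h2 (by rwa [hq] at hqk))
      refine ih d' hconf' hpP hu' hprot' ?_
      set m₀ : ℕ := pos.toNat with hm₀def
      have hm₀ : ((m₀:ℕ):ℤ) = pos := Int.toNat_of_nonneg hp0
      have hm₀mem : m₀ ∈ Finset.range (8*k+1) := by
        rw [Finset.mem_range]; omega
      have key : ∀ m ∈ Finset.range (8*k+1),
          (k - d ((m:ℕ):ℤ)) = (k - d' ((m:ℕ):ℤ)) + (if m = m₀ then 1 else 0) := by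
        intro m _
        by_cases hmm : m = m₀
        · subst hmm
          rw [hm₀, hd', Function.update_self, if_pos rfl]
          omega
        · have hne : ((m:ℕ):ℤ) ≠ pos := by
            rw [← hm₀]
            intro h
            exact hmm (by exact_mod_cast h)
          rw [hd', Function.update_of_ne hne, if_neg hmm]
          omega
      have hsum : (∑ m ∈ Finset.range (8*k+1), (k - d ((m:ℕ):ℤ)))
          = (∑ m ∈ Finset.range (8*k+1), (k - d' ((m:ℕ):ℤ))) + 1 := by
        rw [Finset.sum_congr rfl key, Finset.sum_add_distrib,
          Finset.sum_ite_eq' (Finset.range (8*k+1)) m₀ (fun _ => (1:ℕ)), if_pos hm₀mem]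
      omega

/-- Master lemma: any word occurring with suitable margins in a maximal configuration
occurs at position `i'` in some maximal configuration of length `8k+1`. -/
lemma master (k : ℕ) (u : Fin (4*k+1) → Fin (k+1)) (n : ℕ) (c : ℤ → ℕ) (i i' : ℤ)
    (hconf : StoryConfig k n c) (hmax : StoryMaximal k n c)
    (hi0 : 0 ≤ i) (hin : i + 4*(k:ℤ) ≤ (n:ℤ) - 1)
    (hu : ∀ t : Fin (4*k+1), c (i + ((t:ℕ):ℤ)) = (u t : ℕ))
    (hi'0 : 0 ≤ i') (hi'4 : i' + 4*(k:ℤ) ≤ 8*(k:ℤ))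
    (hA : ∀ x : ℤ, i' - 2*(k:ℤ) ≤ x → x ≤ i' + 6*(k:ℤ) → ¬(0 ≤ x ∧ x ≤ 8*(k:ℤ)) →
      c (x + (i - i')) = 0) :
    ∃ c', StoryConfig k (8*k+1) c' ∧ StoryMaximal k (8*k+1) c' ∧
      ∀ t : Fin (4*k+1), c' (i' + ((t:ℕ):ℤ)) = (u t : ℕ) := by
  have hk0 : (0:ℤ) ≤ (k:ℤ) := Int.natCast_nonneg k
  set δ : ℤ := i - i' with hδ
  set c₀ : ℤ → ℕ := fun x => if 0 ≤ x ∧ x ≤ 8*(k:ℤ) then c (x + δ) else 0 with hc₀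
  have hle : ∀ x, c₀ x ≤ c (x + δ) := by
    intro x
    rw [hc₀]
    dsimp only
    split
    · exact le_refl _
    · exact Nat.zero_le _
  have hwin : ∀ x : ℤ, 0 ≤ x → x ≤ 8*(k:ℤ) → c₀ x = c (x + δ) := by
    intro x h1 h2
    rw [hc₀]
    dsimp only
    rw [if_pos ⟨h1, h2⟩]
  have hagree : ∀ x : ℤ, i' - 2*(k:ℤ) ≤ x → x ≤ i' + 6*(k:ℤ) → c₀ x = c (x + δ) := by
    intro x h1 h2
    by_cases hx : 0 ≤ x ∧ x ≤ 8*(k:ℤ)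
    · exact hwin x hx.1 hx.2
    · rw [hc₀]
      dsimp only
      rw [if_neg hx]
      exact (hA x h1 h2 hx).symm
  have hconf₀ : StoryConfig k (8*k+1) c₀ := by
    constructor
    · intro j
      rw [hc₀]
      dsimp only
      split
      · exact hconf.1 _
      · exact Nat.zero_le _
    · intro j hj
      rw [hc₀]
      dsimp only
      rw [if_neg]
      push_cast at hj
      omega
  have hperm₀ : StoryPermissible c₀ := perm_of_le_shift c c₀ δ hle hmax.1
  have hu₀ : ∀ t : Fin (4*k+1), c₀ (i' + ((t:ℕ):ℤ)) = (u t : ℕ) := by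
    intro t
    have ht : ((t:ℕ):ℤ) ≤ 4*(k:ℤ) := by
      have := t.isLt
      push_cast
      omega
    have ht0 : (0:ℤ) ≤ ((t:ℕ):ℤ) := Int.natCast_nonneg _
    rw [hwin _ (by omega) (by omega), show i' + ((t:ℕ):ℤ) + δ = i + ((t:ℕ):ℤ) by rw [hδ]; ring]
    exact hu t
  have hprot₀ : ∀ pos : ℤ, i' ≤ pos → pos ≤ i' + 4*(k:ℤ) → c₀ pos < k →
      ¬ StoryPermissible (Function.update c₀ pos (c₀ pos + 1)) := by
    intro pos h1 h2 h3
    have hposwin : c₀ pos = c (pos + δ) := hwin pos (by omega) (by omega)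
    have hcp : c (pos + δ) < k := by rw [← hposwin]; exact h3
    have hnot := hmax.2 (pos + δ) (by omega) (by omega) hcp
    exact transfer k c c₀ pos δ hconf.1 hmax.1 hcp
      (fun x hx1 hx2 => hagree x (by omega) (by omega)) hnot
  exact greedy k u i' (∑ m ∈ Finset.range (8*k+1), (k - c₀ ((m:ℕ):ℤ))) c₀
    hconf₀ hperm₀ hu₀ hprot₀ le_rfl

theorem story_substring_in_maximal_of_length_8k1 (k : ℕ) (hk : 1 ≤ k)
    (u : Fin (4 * k + 1) → Fin (k + 1)) :
    ((∃ (n : ℕ) (c : ℤ → ℕ) (i : ℤ), StoryConfig k n c ∧ StoryMaximal k n c ∧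
        0 ≤ i ∧ i + 4 * k ≤ (n : ℤ) - 1 ∧
        ∀ t : Fin (4 * k + 1), c (i + ((t : ℕ) : ℤ)) = (u t : ℕ)) →
      ∃ c' : ℤ → ℕ, StoryConfig k (8 * k + 1) c' ∧ StoryMaximal k (8 * k + 1) c' ∧
        ∃ i' : ℤ, 0 ≤ i' ∧ i' + 4 * k ≤ 8 * k ∧
          ∀ t : Fin (4 * k + 1), c' (i' + ((t : ℕ) : ℤ)) = (u t : ℕ)) ∧
    ((∃ (n : ℕ) (c : ℤ → ℕ), StoryConfig k n c ∧ StoryMaximal k n c ∧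
        (0 : ℤ) + 4 * k ≤ (n : ℤ) - 1 ∧
        ∀ t : Fin (4 * k + 1), c (((t : ℕ) : ℤ)) = (u t : ℕ)) →
      ∃ c' : ℤ → ℕ, StoryConfig k (8 * k + 1) c' ∧ StoryMaximal k (8 * k + 1) c' ∧
        ∀ t : Fin (4 * k + 1), c' (((t : ℕ) : ℤ)) = (u t : ℕ)) ∧
    ((∃ (n : ℕ) (c : ℤ → ℕ) (i : ℤ), StoryConfig k n c ∧ StoryMaximal k n c ∧
        0 ≤ i ∧ i + 4 * k = (n : ℤ) - 1 ∧
        ∀ t : Fin (4 * k + 1), c (i + ((t : ℕ) : ℤ)) = (u t : ℕ)) →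
      ∃ c' : ℤ → ℕ, StoryConfig k (8 * k + 1) c' ∧ StoryMaximal k (8 * k + 1) c' ∧
        ∀ t : Fin (4 * k + 1), c' (4 * k + ((t : ℕ) : ℤ)) = (u t : ℕ)) := by
  have hk0 : (0:ℤ) ≤ (k:ℤ) := Int.natCast_nonneg k
  refine ⟨?_, ?_, ?_⟩
  · -- variant 1 : place u at i' = 2k
    rintro ⟨n, c, i, hconf, hmax, hi0, hin, hu⟩
    obtain ⟨c', h1, h2, h3⟩ := master k u n c i (2*(k:ℤ)) hconf hmax hi0 hin hu
      (by omega) (by omega)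
      (by
        intro x hx1 hx2 hx
        exact absurd ⟨by omega, by omega⟩ hx)
    exact ⟨c', h1, h2, 2*(k:ℤ), by omega, by push_cast; omega, h3⟩
  · -- variant 2 : u at the beginning, i = i' = 0
    rintro ⟨n, c, hconf, hmax, hin, hu⟩
    obtain ⟨c', h1, h2, h3⟩ := master k u n c 0 0 hconf hmax le_rfl (by push_cast at hin ⊢; omega)
      (by intro t; rw [show (0:ℤ) + ((t:ℕ):ℤ) = ((t:ℕ):ℤ) by ring]; exact hu t)
      le_rfl (by omega)
      (by
        intro x hx1 hx2 hx
        have hxneg : x < 0 := by omega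
        exact hconf.2 _ (Or.inl (by omega)))
    exact ⟨c', h1, h2, fun t => by
      have := h3 t
      rwa [show (0:ℤ) + ((t:ℕ):ℤ) = ((t:ℕ):ℤ) by ring] at this⟩
  · -- variant 3 : u at the end, i' = 4k
    rintro ⟨n, c, i, hconf, hmax, hi0, hend, hu⟩
    obtain ⟨c', h1, h2, h3⟩ := master k u n c i (4*(k:ℤ)) hconf hmax hi0 (by omega) hu
      (by omega) (by omega)
      (by
        intro x hx1 hx2 hx
        have hxbig : 8*(k:ℤ) < x := by omega
        exact hconf.2 _ (Or.inr (by omega)))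
    exact ⟨c', h1, h2, fun t => by
      have := h3 t
      rwa [show 4*(k:ℤ) + ((t:ℕ):ℤ) = (4:ℤ)*(k:ℤ) + ((t:ℕ):ℤ) by ring] at this⟩
end

section
/- Fix k ≥ 1. For every n ∈ ℕ, the number of maximal configurations of length n in the k-story Flory model equals the number of compositions of n + 2k + 1 into parts from {k+1, k+2, …, 2k+1}, i.e. the number of lists l of natural numbers with sum n + 2k + 1 all of whose entries p satisfy k+1 ≤ p ≤ 2k+1. -/
/-- Permissibility in the `k`-story Flory model: any two distinct occupied lots
are at distance at least `k + 1`. -/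
def FloryPermissible (k n : ℕ) (c : Fin n → Bool) : Prop :=
  ∀ i j : Fin n, c i = true → c j = true → i ≠ j →
    (k : ℤ) + 1 ≤ |((i : ℕ) : ℤ) - ((j : ℕ) : ℤ)|

/-- Maximality in the `k`-story Flory model. -/
def FloryMaximal (k n : ℕ) (c : Fin n → Bool) : Prop :=
  FloryPermissible k n c ∧
    ∀ j : Fin n, c j = false → ¬ FloryPermissible k n (Function.update c j true)

namespace FloryAux

def PP (k : ℕ) (a b : ℕ) : Prop := a + k + 1 ≤ b ∧ b ≤ a + 2*k + 1

def OKm (k M : ℕ) (o : List ℕ) : Prop :=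
  o.Chain' (PP k) ∧ (∀ x ∈ o, x + 2*k + 1 < M) ∧ (o = [] → M ≤ 2*k+1) ∧ k + 1 ≤ M ∧
  (∀ a ∈ o.head?, a ≤ k) ∧ (∀ a ∈ o.getLast?, M ≤ a + 3*k + 2)

def fB (k : ℕ) : List ℕ → List ℕ
  | [] => []
  | [_] => []
  | p :: q :: r => (p - (k+1)) :: (fB k (q :: r)).map (· + p)

def gB (k : ℕ) : ℕ → List ℕ → List ℕ
  | M, [] => [M]
  | M, a :: rest => (a + k + 1) :: gB k (M - (a+k+1)) (rest.map (· - (a+k+1)))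
  termination_by M o => o.length
  decreasing_by simp

lemma gB_ne_nil (k M : ℕ) (o : List ℕ) : gB k M o ≠ [] := by
  cases o <;> simp [gB]

lemma chain_lower_all {k : ℕ} : ∀ {a : ℕ} {t : List ℕ},
    List.Chain' (PP k) (a :: t) → ∀ x ∈ t, a + k + 1 ≤ x := by
  intro a t
  induction t generalizing a with
  | nil => simp
  | cons b t ih =>
    intro h x hx
    rcases List.isChain_cons_cons.1 h with ⟨hab, ht⟩
    rcases List.mem_cons.1 hx with rfl | hx
    · exact hab.1
    · have := ih ht x hx
      have := hab.1
      omega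


lemma le_getLast {k : ℕ} : ∀ {o : List ℕ}, List.Chain' (PP k) o →
    ∀ x ∈ o, ∀ a ∈ o.getLast?, x ≤ a := by
  intro o
  induction o with
  | nil => simp
  | cons b t ih =>
    intro h x hx a ha
    cases t with
    | nil => simp at hx ha; omega
    | cons c t' =>
      rw [List.getLast?_cons_cons] at ha
      rcases List.mem_cons.1 hx with rfl | hx
      · have hmem : a ∈ c :: t' := by
          have := List.mem_of_mem_getLast? ha
          exact this
        have := chain_lower_all h a hmem
        omega
      · exact ih h.tail x hx a ha

lemma chain'_and {R S : ℕ → ℕ → Prop} : ∀ (l : List ℕ),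
    List.Chain' (fun a b => R a b ∧ S a b) l ↔ (List.Chain' R l ∧ List.Chain' S l)
  | [] => by simp [List.Chain']
  | [a] => by simp [List.Chain']
  | a :: b :: t => by
    have hbt := chain'_and (R := R) (S := S) (b :: t)
    unfold List.Chain' at hbt ⊢
    rw [List.isChain_cons_cons, List.isChain_cons_cons, List.isChain_cons_cons, hbt]
    tauto

lemma chain'_map_add {k p : ℕ} {l : List ℕ} (h : List.Chain' (PP k) l) :
    List.Chain' (PP k) (l.map (· + p)) := by
  unfold List.Chain' at *
  rw [List.isChain_map]
  exact h.imp (fun a b hab => by unfold PP at *; omega)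

lemma chain'_map_sub {k s : ℕ} : ∀ (l : List ℕ), (∀ x ∈ l, s ≤ x) →
    List.Chain' (PP k) l → List.Chain' (PP k) (l.map (· - s))
  | [] => by simp
  | [a] => by simp [List.Chain']
  | a :: b :: t => fun hb h => by
    rcases List.isChain_cons_cons.1 h with ⟨hab, ht⟩
    rw [List.map_cons, List.map_cons]
    unfold List.Chain'
    rw [List.isChain_cons_cons]
    constructor
    · have ha := hb a (by simp); have hbb := hb b (by simp)
      unfold PP at *; omega
    · have := chain'_map_sub (b :: t) (fun x hx => hb x (List.mem_cons_of_mem _ hx)) ht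
      simpa [List.Chain'] using this

lemma okm_tail {k M a : ℕ} {rest : List ℕ} (h : OKm k M (a :: rest)) :
    OKm k (M - (a+k+1)) (rest.map (· - (a+k+1))) := by
  obtain ⟨hch, helts, -, -, hhead, hlast⟩ := h
  have hge : ∀ x ∈ rest, a + k + 1 ≤ x := chain_lower_all hch
  have haM : a + 2*k + 1 < M := helts a (by simp)
  refine ⟨chain'_map_sub rest hge hch.tail, ?_, ?_, by omega, ?_, ?_⟩
  · intro x hx
    simp only [List.mem_map] at hx
    obtain ⟨y, hy, rfl⟩ := hx
    have := helts y (by simp [hy]); have := hge y hy; omega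
  · intro hnil
    rw [List.map_eq_nil_iff] at hnil
    subst hnil
    have := hlast a (by simp)
    omega
  · cases rest with
    | nil => simp
    | cons b t =>
      intro x hx
      simp only [List.map_cons, List.head?_cons, Option.mem_def, Option.some.injEq] at hx
      subst hx
      have := (List.isChain_cons_cons.1 hch).1
      unfold PP at this; omega
  · cases rest with
    | nil => simp
    | cons b t =>
      intro x hx
      rw [List.getLast?_map] at hx
      simp only [Option.mem_map] at hx
      obtain ⟨y, hy, rfl⟩ := hx
      have hyl := hlast y (by rw [List.getLast?_cons_cons]; exact hy)
      have hymem : y ∈ b :: t := List.mem_of_mem_getLast? hy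
      have := hge y hymem
      omega


lemma gB_spec_aux {k : ℕ} : ∀ (N : ℕ) (o : List ℕ), o.length ≤ N → ∀ (M : ℕ), OKm k M o →
    (gB k M o).sum = M ∧ ∀ p ∈ gB k M o, k + 1 ≤ p ∧ p ≤ 2*k + 1 := by
  intro N
  induction N with
  | zero =>
    intro o ho M h
    have : o = [] := List.eq_nil_of_length_eq_zero (Nat.le_zero.1 ho)
    subst this
    obtain ⟨-, -, hnil, hM, -, -⟩ := h
    refine ⟨by simp [gB], ?_⟩
    intro p hp
    simp [gB] at hp
    subst hp
    exact ⟨hM, hnil rfl⟩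
  | succ N ihN =>
    intro o ho M h
    cases o with
    | nil =>
      obtain ⟨-, -, hnil, hM, -, -⟩ := h
      refine ⟨by simp [gB], ?_⟩
      intro p hp
      simp [gB] at hp
      subst hp
      exact ⟨hM, hnil rfl⟩
    | cons a rest =>
      have ht := okm_tail h
      have hlen : (rest.map (· - (a+k+1))).length ≤ N := by
        simp only [List.length_map]
        simp at ho; omega
      obtain ⟨hs, hb⟩ := ihN _ hlen _ ht
      obtain ⟨-, helts, -, -, hhead, -⟩ := h
      have haM : a + 2*k + 1 < M := helts a (by simp)
      have ha : a ≤ k := hhead a (by simp)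
      rw [gB]
      constructor
      · rw [List.sum_cons, hs]; omega
      · intro p hp
        rcases List.mem_cons.1 hp with rfl | hp
        · omega
        · exact hb p hp

lemma gB_spec {k : ℕ} (o : List ℕ) (M : ℕ) (h : OKm k M o) :
    (gB k M o).sum = M ∧ ∀ p ∈ gB k M o, k + 1 ≤ p ∧ p ≤ 2*k + 1 :=
  gB_spec_aux o.length o le_rfl M h

lemma fB_cons₂ {k p : ℕ} {L : List ℕ} (h : L ≠ []) :
    fB k (p :: L) = (p - (k+1)) :: (fB k L).map (· + p) := by
  cases L with
  | nil => exact absurd rfl h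
  | cons q r => rfl

lemma fB_spec {k : ℕ} : ∀ (l : List ℕ), l ≠ [] →
    (∀ p ∈ l, k + 1 ≤ p ∧ p ≤ 2*k + 1) → OKm k l.sum (fB k l)
  | [] => fun h => absurd rfl h
  | [p] => fun _ hb => by
    have hpp := hb p (by simp)
    have hsum : ([p] : List ℕ).sum = p := by simp
    refine ⟨by simp [fB, List.Chain'], by simp [fB], ?_, ?_, by simp [fB], by simp [fB]⟩
    · intro _; omega
    · omega
  | p :: q :: r => fun _ hb => by
    have hp := hb p (by simp)
    have hq := hb q (by simp)
    have ih := fB_spec (q :: r) (by simp) (fun x hx => hb x (List.mem_cons_of_mem _ hx))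
    obtain ⟨hch, helts, hnil, hM, hhead, hlast⟩ := ih
    have hS : (q :: r).sum ≥ k + 1 := by
      have : q ≤ (q :: r).sum := by rw [List.sum_cons]; omega
      omega
    rw [fB_cons₂ (by simp), List.sum_cons]
    set S := (q :: r).sum with hSdef
    set F := fB k (q :: r) with hFdef
    refine ⟨?_, ?_, by simp, by omega, ?_, ?_⟩
    · unfold List.Chain'
      rw [List.isChain_cons]
      refine ⟨?_, chain'_map_add hch⟩
      intro y hy
      rw [List.head?_map] at hy
      simp only [Option.mem_map] at hy
      obtain ⟨z, hz, rfl⟩ := hy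
      have := hhead z hz
      unfold PP; omega
    · intro x hx
      rcases List.mem_cons.1 hx with rfl | hx
      · omega
      · simp only [List.mem_map] at hx
        obtain ⟨y, hy, rfl⟩ := hx
        have := helts y hy; omega
    · simp; omega
    · cases hF : F with
      | nil =>
        have := hnil hF
        intro x hx
        simp at hx
        omega
      | cons h0 t0 =>
        intro x hx
        rw [List.map_cons, List.getLast?_cons_cons] at hx
        have he : (h0 + p) :: t0.map (· + p) = (h0 :: t0).map (· + p) := by simp
        rw [he, List.getLast?_map] at hx
        simp only [Option.mem_map] at hx
        obtain ⟨y, hy, rfl⟩ := hx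
        have := hlast y (by rw [hF]; exact hy)
        omega

lemma getLast?_cons_ne {x : ℕ} {L : List ℕ} (h : L ≠ []) :
    (x :: L).getLast? = L.getLast? := by
  cases L with
  | nil => exact absurd rfl h
  | cons a t => rw [List.getLast?_cons_cons]

lemma gB_fB {k : ℕ} : ∀ (l : List ℕ), l ≠ [] → (∀ p ∈ l, k + 1 ≤ p) →
    gB k l.sum (fB k l) = l
  | [] => fun h => absurd rfl h
  | [p] => fun _ _ => by simp [fB, gB]
  | p :: q :: r => fun _ hb => by
    have hp := hb p (by simp)
    have ih := gB_fB (q :: r) (by simp) (fun x hx => hb x (List.mem_cons_of_mem _ hx))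
    rw [fB_cons₂ (by simp), List.sum_cons, gB]
    have h1 : p - (k+1) + k + 1 = p := by omega
    rw [h1]
    congr 1
    have h2 : ((fB k (q :: r)).map (· + p)).map (· - p) = fB k (q :: r) := by
      rw [List.map_map]
      have hc : ((fun x => x - p) ∘ (fun x => x + p)) = id := by
        funext x
        show x + p - p = x
        omega
      rw [hc, List.map_id]
    rw [h2]
    have h3 : p + (q :: r).sum - p = (q :: r).sum := by omega
    rw [h3, ih]

lemma fB_gB_aux {k : ℕ} : ∀ (N : ℕ) (o : List ℕ), o.length ≤ N → ∀ (M : ℕ),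
    OKm k M o → fB k (gB k M o) = o := by
  intro N
  induction N with
  | zero =>
    intro o ho M _
    have : o = [] := List.eq_nil_of_length_eq_zero (Nat.le_zero.1 ho)
    subst this
    simp [gB, fB]
  | succ N ihN =>
    intro o ho M h
    cases o with
    | nil => simp [gB, fB]
    | cons a rest =>
      have ht := okm_tail h
      have hlen : (rest.map (· - (a+k+1))).length ≤ N := by
        simp only [List.length_map]
        simp at ho; omega
      have hge : ∀ x ∈ rest, a + k + 1 ≤ x := chain_lower_all h.1
      rw [gB, fB_cons₂ (gB_ne_nil _ _ _), ihN _ hlen _ ht]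
      have h1 : a + k + 1 - (k+1) = a := by omega
      rw [h1]
      congr 1
      rw [List.map_map]
      have hid : ∀ x ∈ rest, (x - (a+k+1)) + (a+k+1) = x := fun x hx => by
        have := hge x hx; omega
      calc rest.map (fun x => (x - (a+k+1)) + (a+k+1)) = rest.map id := List.map_congr_left hid
        _ = rest := List.map_id rest

lemma fB_gB {k : ℕ} (o : List ℕ) (M : ℕ) (h : OKm k M o) : fB k (gB k M o) = o :=
  fB_gB_aux o.length o le_rfl M h

def posList (n : ℕ) (c : Fin n → Bool) : List ℕ :=
  (List.range n).filter (fun j => if h : j < n then c ⟨j, h⟩ else false)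

def configOf (n : ℕ) (o : List ℕ) : Fin n → Bool := fun j => decide (j.val ∈ o)

lemma mem_posList {n : ℕ} {c : Fin n → Bool} {x : ℕ} :
    x ∈ posList n c ↔ ∃ h : x < n, c ⟨x, h⟩ = true := by
  unfold posList
  rw [List.mem_filter, List.mem_range]
  constructor
  · rintro ⟨h1, h2⟩
    rw [dif_pos h1] at h2
    exact ⟨h1, h2⟩
  · rintro ⟨h1, h2⟩
    exact ⟨h1, by rw [dif_pos h1]; exact h2⟩

lemma pairwise_posList {n : ℕ} {c : Fin n → Bool} : (posList n c).Pairwise (· < ·) :=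
  (List.pairwise_lt_range (n := n)).filter _

lemma configOf_posList {n : ℕ} (c : Fin n → Bool) : configOf n (posList n c) = c := by
  funext j
  unfold configOf
  rcases hc : c j with _ | _
  · simp only [decide_eq_false_iff_not]
    rw [mem_posList]
    rintro ⟨h, hcj⟩
    rw [Fin.eta] at hcj
    rw [hc] at hcj
    exact Bool.false_ne_true hcj
  · simp only [decide_eq_true_eq]
    rw [mem_posList]
    exact ⟨j.isLt, by rw [Fin.eta]; exact hc⟩

lemma posList_configOf {n : ℕ} {o : List ℕ} (hs : o.Pairwise (· < ·))
    (hb : ∀ x ∈ o, x < n) : posList n (configOf n o) = o := by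
  unfold posList configOf
  have h1 : (List.range n).filter
      (fun j => if h : j < n then decide (j ∈ o) else false) =
      (List.range n).filter (fun j => decide (j ∈ o)) := by
    apply List.filter_congr
    intro x hx
    rw [dif_pos (List.mem_range.1 hx)]
  rw [h1]
  haveI : IsAntisymm ℕ (· < ·) := ⟨fun a b h1 h2 => absurd h1 (asymm h2)⟩
  apply List.Perm.eq_of_pairwise (le := (· < ·)) (fun a b _ _ h1 h2 => absurd h1 (asymm h2))
    ((List.pairwise_lt_range (n := n)).filter _) hs
  apply List.perm_of_nodup_nodup_toFinset_eq
  · exact ((List.pairwise_lt_range (n := n)).filter _).imp ne_of_lt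
  · exact hs.imp ne_of_lt
  · ext x
    simp only [List.mem_toFinset, List.mem_filter, List.mem_range, decide_eq_true_eq]
    exact ⟨fun h => h.2, fun h => ⟨hb x h, h⟩⟩

lemma abs_helper {k x y : ℕ} (hxy : x ≠ y) :
    ((k:ℤ) + 1 ≤ |(x:ℤ) - (y:ℤ)|) ↔ ¬(x ≤ y + k ∧ y ≤ x + k) := by
  rw [le_abs]
  omega

lemma abs_helper' {k x y : ℕ} :
    (|(x:ℤ) - (y:ℤ)| < (k:ℤ) + 1) ↔ (x ≤ y + k ∧ y ≤ x + k) := by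
  rw [abs_lt]
  omega

lemma maximal_iff {k n : ℕ} {c : Fin n → Bool} :
    FloryMaximal k n c ↔ FloryPermissible k n c ∧
      ∀ j : Fin n, c j = false →
        ∃ i : Fin n, c i = true ∧ i.val ≤ j.val + k ∧ j.val ≤ i.val + k := by
  constructor
  · rintro ⟨hp, hm⟩
    refine ⟨hp, fun j hj => ?_⟩
    have hnp := hm j hj
    unfold FloryPermissible at hnp
    push_neg at hnp
    obtain ⟨a, b, ha, hb, hab, hd⟩ := hnp
    rw [Function.update_apply] at ha hb
    by_cases haj : a = j
    · have hbj : b ≠ j := fun h => hab (haj.trans h.symm)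
      rw [if_neg hbj] at hb
      rw [haj] at hd
      rw [abs_helper'] at hd
      exact ⟨b, hb, by omega, by omega⟩
    · by_cases hbj : b = j
      · rw [if_neg haj] at ha
        rw [hbj] at hd
        rw [abs_helper'] at hd
        exact ⟨a, ha, by omega, by omega⟩
      · rw [if_neg haj] at ha
        rw [if_neg hbj] at hb
        exact absurd (hp a b ha hb hab) (not_le.2 hd)
  · rintro ⟨hp, hf⟩
    refine ⟨hp, fun j hj hperm => ?_⟩
    obtain ⟨i, hi, h1, h2⟩ := hf j hj
    have hij : i ≠ j := fun h => by rw [h, hj] at hi; exact Bool.false_ne_true hi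
    have h3 : (k:ℤ) + 1 ≤ |((i.val : ℕ) : ℤ) - ((j.val : ℕ) : ℤ)| := by
      refine hperm i j ?_ ?_ hij
      · rw [Function.update_apply, if_neg hij]; exact hi
      · rw [Function.update_apply, if_pos rfl]
    rw [abs_helper (fun h => hij (Fin.ext h))] at h3
    exact h3 ⟨h1, h2⟩

lemma lower_all {k : ℕ} : ∀ {a : ℕ} {t : List ℕ},
    List.Chain' (fun a b => a + k + 1 ≤ b) (a :: t) → ∀ x ∈ t, a + k + 1 ≤ x := by
  intro a t
  induction t generalizing a with
  | nil => simp
  | cons b t ih =>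
    intro h x hx
    rcases List.isChain_cons_cons.1 h with ⟨hab, ht⟩
    rcases List.mem_cons.1 hx with rfl | hx
    · exact hab
    · have := ih ht x hx
      omega

lemma head_min {o : List ℕ} (hs : o.Pairwise (· < ·)) {a : ℕ} (ha : a ∈ o.head?) :
    ∀ x ∈ o, a ≤ x := by
  cases o with
  | nil => simp at ha
  | cons b t =>
    simp only [List.head?_cons, Option.mem_def, Option.some.injEq] at ha
    subst ha
    intro x hx
    rcases List.mem_cons.1 hx with rfl | hx
    · exact le_refl _
    · exact le_of_lt ((List.pairwise_cons.1 hs).1 x hx)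

lemma rel_of_pairwise {R : ℕ → ℕ → Prop} {o : List ℕ} (hR : o.Pairwise R)
    (hs : o.Pairwise (· < ·)) {x y : ℕ} (hx : x ∈ o) (hy : y ∈ o) (hxy : x < y) :
    R x y := by
  obtain ⟨ix, hix, rfl⟩ := List.getElem_of_mem hx
  obtain ⟨iy, hiy, rfl⟩ := List.getElem_of_mem hy
  rcases lt_trichotomy ix iy with h | h | h
  · exact List.pairwise_iff_getElem.1 hR ix iy hix hiy h
  · subst h; exact absurd hxy (lt_irrefl _)
  · exact absurd (List.pairwise_iff_getElem.1 hs iy ix hiy hix h) (by omega)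

lemma chain_pp_lt {k : ℕ} {o : List ℕ} (h : o.Chain' (PP k)) : o.Pairwise (· < ·) :=
  List.isChain_iff_pairwise.1 (h.imp fun {a b} hab => by unfold PP at hab; omega)

lemma L1 {k n : ℕ} : ∀ (o : List ℕ), o ≠ [] → List.Chain' (PP k) o →
    (∀ a ∈ o.getLast?, n ≤ a + k + 1) → ∀ j, j < n → j ∉ o →
    (∀ a ∈ o.head?, a ≤ j) → ∃ x ∈ o, x ≤ j + k ∧ j ≤ x + k
  | [] => fun h => absurd rfl h
  | [a] => fun _ _ hl j hj hjo hh => by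
    have ha : a ≤ j := hh a (by simp)
    have hla : n ≤ a + k + 1 := hl a (by simp)
    have : j ≠ a := fun h => hjo (h ▸ List.mem_singleton_self a)
    exact ⟨a, by simp, by omega, by omega⟩
  | a :: b :: t => fun _ hch hl j hj hjo hh => by
    rcases List.isChain_cons_cons.1 hch with ⟨hab, ht⟩
    have ha : a ≤ j := hh a (by simp)
    by_cases h1 : j ≤ a + k
    · exact ⟨a, by simp, by omega, by omega⟩
    · push_neg at h1
      by_cases h2 : j < b
      · refine ⟨b, by simp, ?_, by omega⟩
        unfold PP at hab; omega
      · push_neg at h2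
        have hl' : ∀ x ∈ (b :: t).getLast?, n ≤ x + k + 1 := by
          intro x hx
          exact hl x (by rw [List.getLast?_cons_cons]; exact hx)
        obtain ⟨x, hx, hx1, hx2⟩ := L1 (b :: t) (by simp) ht hl' j hj
          (fun hm => hjo (List.mem_cons_of_mem _ hm))
          (by intro x hx; simp at hx; omega)
        exact ⟨x, List.mem_cons_of_mem _ hx, hx1, hx2⟩

lemma L2 {k n : ℕ} : ∀ (o : List ℕ), List.Chain' (fun a b => a + k + 1 ≤ b) o →
    (∀ x ∈ o, x < n) →
    (∀ j, j < n → j ∉ o → (∀ a ∈ o.head?, a < j) → ∃ x ∈ o, x ≤ j + k ∧ j ≤ x + k) →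
    List.Chain' (fun a b => b ≤ a + 2*k + 1) o
  | [] => fun _ _ _ => by simp [List.Chain']
  | [a] => fun _ _ _ => by simp [List.Chain']
  | a :: b :: t => fun hch helts hfill => by
    rcases List.isChain_cons_cons.1 hch with ⟨hab, ht⟩
    unfold List.Chain'
    rw [List.isChain_cons_cons]
    constructor
    · by_contra hgt
      push_neg at hgt
      have hjb : a + k + 1 < b := by omega
      have hjn : a + k + 1 < n := lt_trans hjb (helts b (by simp))
      have hjo : a + k + 1 ∉ a :: b :: t := by
        intro hmem
        rcases List.mem_cons.1 hmem with heq | hmem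
        · omega
        rcases List.mem_cons.1 hmem with heq | hmem
        · omega
        · have := lower_all ht _ hmem
          omega
      obtain ⟨x, hx, hx1, hx2⟩ := hfill (a + k + 1) hjn hjo
        (by intro y hy; simp at hy; omega)
      rcases List.mem_cons.1 hx with rfl | hx
      · omega
      rcases List.mem_cons.1 hx with rfl | hx
      · omega
      · have := lower_all ht _ hx
        omega
    · refine L2 (b :: t) ht (fun x hx => helts x (List.mem_cons_of_mem _ hx)) ?_
      intro j hj hjo hhead
      have hbj : b < j := by
        have := hhead b (by simp)
        exact this
      have hjo' : j ∉ a :: b :: t := by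
        intro hm
        rcases List.mem_cons.1 hm with rfl | hm
        · omega
        · exact hjo hm
      obtain ⟨x, hx, hx1, hx2⟩ := hfill j hj hjo' (by intro y hy; simp at hy; omega)
      rcases List.mem_cons.1 hx with rfl | hx
      · omega
      · exact ⟨x, hx, hx1, hx2⟩

theorem maximal_iff_okm {k n : ℕ} (hk : 1 ≤ k) {c : Fin n → Bool} :
    FloryMaximal k n c ↔ OKm k (n + 2*k + 1) (posList n c) := by
  rw [maximal_iff]
  set o := posList n c with ho
  have hsort : o.Pairwise (· < ·) := pairwise_posList
  have hmem : ∀ x : ℕ, x ∈ o ↔ ∃ h : x < n, c ⟨x, h⟩ = true := fun x => mem_posList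
  have hlt : ∀ x ∈ o, x < n := by
    intro x hx
    obtain ⟨h, -⟩ := (hmem x).1 hx
    exact h
  constructor
  · rintro ⟨hp, hf⟩
    have hlow : o.Pairwise (fun a b => a + k + 1 ≤ b) := by
      rw [List.pairwise_iff_getElem]
      intro i j hi hj hij
      have hx : o[i] ∈ o := List.getElem_mem _
      have hy : o[j] ∈ o := List.getElem_mem _
      obtain ⟨hxn, hcx⟩ := (hmem _).1 hx
      obtain ⟨hyn, hcy⟩ := (hmem _).1 hy
      have hlt' : o[i] < o[j] := List.pairwise_iff_getElem.1 hsort i j hi hj hij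
      have hd := hp ⟨o[i], hxn⟩ ⟨o[j], hyn⟩ hcx hcy
        (Fin.ne_of_val_ne (ne_of_lt hlt'))
      rw [abs_helper (ne_of_lt hlt')] at hd
      omega
    have hlowc : o.Chain' (fun a b => a + k + 1 ≤ b) := hlow.isChain
    have hfillN : ∀ j, j < n → j ∉ o → ∃ x ∈ o, x ≤ j + k ∧ j ≤ x + k := by
      intro j hj hjo
      have hcj : c ⟨j, hj⟩ = false := by
        by_contra hne
        rw [Bool.not_eq_false] at hne
        exact hjo ((hmem j).2 ⟨hj, hne⟩)
      obtain ⟨i, hci, h1, h2⟩ := hf ⟨j, hj⟩ hcj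
      exact ⟨i.val, (hmem _).2 ⟨i.isLt, by rw [Fin.eta]; exact hci⟩, h1, h2⟩
    have hup : o.Chain' (fun a b => b ≤ a + 2*k + 1) :=
      L2 o hlowc hlt (fun j hj hjo _ => hfillN j hj hjo)
    have hchain : o.Chain' (PP k) := (chain'_and o).2 ⟨hlowc, hup⟩
    refine ⟨hchain, ?_, ?_, by omega, ?_, ?_⟩
    · intro x hx
      have := hlt x hx
      omega
    · intro hnil
      rcases Nat.eq_zero_or_pos n with rfl | hpos
      · omega
      · obtain ⟨x, hx, -, -⟩ := hfillN 0 hpos (by rw [hnil]; simp)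
        rw [hnil] at hx
        simp at hx
    · intro a hahead
      by_contra hgt
      push_neg at hgt
      have ham : a ∈ o := List.mem_of_mem_head? hahead
      have h0n : 0 < n := lt_of_le_of_lt (Nat.zero_le a) (hlt a ham)
      have h0o : 0 ∉ o := by
        intro h0
        have := head_min hsort hahead 0 h0
        omega
      obtain ⟨x, hx, h1, -⟩ := hfillN 0 h0n h0o
      have := head_min hsort hahead x hx
      omega
    · intro a halast
      by_contra hgt
      push_neg at hgt
      have ham := List.mem_of_mem_getLast? halast
      have hmax : ∀ x ∈ o, x ≤ a := fun x hx => le_getLast hchain x hx a halast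
      have hjn : n - 1 < n := by
        have := hlt a ham
        omega
      have hjo : n - 1 ∉ o := by
        intro hmem'
        have h1 := hmax _ hmem'
        have h2 := hlt a ham
        omega
      obtain ⟨x, hx, -, h2⟩ := hfillN (n - 1) hjn hjo
      have h3 := hmax x hx
      have h4 := hlt a ham
      omega
  · rintro ⟨hch, helts, hnil, -, hhead, hlast⟩
    have hlow : o.Chain' (fun a b => a + k + 1 ≤ b) := ((chain'_and o).1 hch).1
    have hlowpw : o.Pairwise (fun a b => a + k + 1 ≤ b) := by
      haveI : IsTrans ℕ (fun a b => a + k + 1 ≤ b) := ⟨fun a b c h1 h2 => by omega⟩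
      haveI : Trans (fun a b : ℕ => a + k + 1 ≤ b) (fun a b : ℕ => a + k + 1 ≤ b)
        (fun a b : ℕ => a + k + 1 ≤ b) := ⟨fun h1 h2 => by omega⟩
      exact List.isChain_iff_pairwise.1 hlow
    constructor
    · intro i j hi hj hij
      have hxi : i.val ∈ o := (hmem _).2 ⟨i.isLt, by rw [Fin.eta]; exact hi⟩
      have hxj : j.val ∈ o := (hmem _).2 ⟨j.isLt, by rw [Fin.eta]; exact hj⟩
      have hne : i.val ≠ j.val := fun h => hij (Fin.ext h)
      rw [abs_helper hne]
      rcases lt_or_gt_of_ne hne with h | h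
      · have := rel_of_pairwise hlowpw hsort hxi hxj h
        omega
      · have := rel_of_pairwise hlowpw hsort hxj hxi h
        omega
    · intro j hj
      have hjo : j.val ∉ o := by
        intro hm
        obtain ⟨h', hc⟩ := (hmem _).1 hm
        rw [Fin.eta] at hc
        rw [hj] at hc
        exact Bool.false_ne_true hc
      cases hoc : o with
      | nil =>
        exfalso
        rw [hoc] at hnil
        have := hnil rfl
        have := j.isLt
        omega
      | cons a t =>
        have ham : a ∈ o := by rw [hoc]; simp
        have han : a < n := hlt a ham
        by_cases hja : j.val < a
        · refine ⟨⟨a, han⟩, ?_, ?_, ?_⟩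
          · obtain ⟨h', hc⟩ := (hmem a).1 ham
            exact hc
          · have : a ≤ k := hhead a (by rw [hoc]; simp)
            show a ≤ j.val + k
            omega
          · show j.val ≤ a + k
            omega
        · push_neg at hja
          have hgl : ∀ b ∈ o.getLast?, n ≤ b + k + 1 := by
            intro b hb
            have := hlast b hb
            omega
          obtain ⟨x, hx, h1, h2⟩ := L1 o (by rw [hoc]; simp) hch hgl j.val j.isLt hjo
            (by rw [hoc]; intro b hb; simp at hb; omega)
          refine ⟨⟨x, hlt x hx⟩, ?_, h1, h2⟩
          obtain ⟨h', hc⟩ := (hmem x).1 hx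
          exact hc

end FloryAux

theorem floryCount_eq_compositionCount (k : ℕ) (hk : 1 ≤ k) (n : ℕ) :
    Nat.card {c : Fin n → Bool // FloryMaximal k n c} =
      Nat.card {l : List ℕ //
        l.sum = n + 2 * k + 1 ∧ ∀ p ∈ l, k + 1 ≤ p ∧ p ≤ 2 * k + 1} := by
  apply Nat.card_congr
  refine
    { toFun := fun cp => ⟨FloryAux.gB k (n + 2*k + 1) (FloryAux.posList n cp.1), ?_⟩
      invFun := fun lp => ⟨FloryAux.configOf n (FloryAux.fB k lp.1), ?_⟩
      left_inv := ?_
      right_inv := ?_ }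
  · obtain ⟨hs, hb⟩ := FloryAux.gB_spec _ _ ((FloryAux.maximal_iff_okm hk).1 cp.2)
    exact ⟨hs, hb⟩
  · obtain ⟨hsum, hparts⟩ := lp.2
    have hlne : lp.1 ≠ [] := by
      intro h
      rw [h] at hsum
      simp only [List.sum_nil] at hsum
      omega
    have hok : FloryAux.OKm k (n + 2*k + 1) (FloryAux.fB k lp.1) := by
      have := FloryAux.fB_spec lp.1 hlne hparts
      rwa [hsum] at this
    rw [FloryAux.maximal_iff_okm hk,
      FloryAux.posList_configOf (FloryAux.chain_pp_lt hok.1)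
        (fun x hx => by have := hok.2.1 x hx; omega)]
    exact hok
  · rintro ⟨c, hc⟩
    apply Subtype.ext
    show FloryAux.configOf n (FloryAux.fB k (FloryAux.gB k (n + 2*k + 1)
      (FloryAux.posList n c))) = c
    rw [FloryAux.fB_gB _ _ ((FloryAux.maximal_iff_okm hk).1 hc),
      FloryAux.configOf_posList]
  · rintro ⟨l, hsum, hparts⟩
    apply Subtype.ext
    have hlne : l ≠ [] := by
      intro h
      rw [h] at hsum
      simp only [List.sum_nil] at hsum
      omega
    have hok : FloryAux.OKm k (n + 2*k + 1) (FloryAux.fB k l) := by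
      have := FloryAux.fB_spec l hlne hparts
      rwa [hsum] at this
    show FloryAux.gB k (n + 2*k + 1) (FloryAux.posList n (FloryAux.configOf n
      (FloryAux.fB k l))) = l
    rw [FloryAux.posList_configOf (FloryAux.chain_pp_lt hok.1)
      (fun x hx => by have := hok.2.1 x hx; omega), ← hsum]
    exact FloryAux.gB_fB l hlne (fun p hp => (hparts p hp).1)
end

section
/- Fix k ≥ 1 and n ≥ 1. The set of pairs (L, c), where L ∈ ℕ and c is a maximal configuration of length L in the k-story Flory model having exactly n occupied lots, is finite and has cardinality (k+1)^{n+1}. -/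
namespace FloryAux

/-- positions of the houses determined by gap data `a` -/
def posk (k : ℕ) (a : ℕ → ℕ) : ℕ → ℕ
  | 0 => a 0
  | i + 1 => posk k a i + (k + 1) + a (i + 1)

lemma posk_succ (k : ℕ) (a : ℕ → ℕ) (i : ℕ) :
    posk k a (i + 1) = posk k a i + (k + 1) + a (i + 1) := rfl

lemma posk_lt (k : ℕ) (a : ℕ → ℕ) {i j : ℕ} (h : i < j) :
    posk k a i + (k + 1) ≤ posk k a j := by
  induction j with
  | zero => omega
  | succ j ih =>
    rw [posk_succ]
    rcases Nat.lt_succ_iff_lt_or_eq.mp h with h' | h'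
    · have := ih h'; omega
    · subst h'; omega

lemma posk_mono (k : ℕ) (a : ℕ → ℕ) {i j : ℕ} (h : i ≤ j) :
    posk k a i ≤ posk k a j := by
  rcases Nat.eq_or_lt_of_le h with rfl | h'
  · exact le_rfl
  · have := posk_lt k a h'; omega

/-- the encoded configuration -/
def enc (k m : ℕ) (a : ℕ → ℕ) : Σ L : ℕ, Fin L → Bool :=
  ⟨posk k a m + 1 + a (m + 1),
   fun j => decide (∃ i : Fin (m + 1), posk k a i = (j : ℕ))⟩

lemma enc_posk_lt (k m : ℕ) (a : ℕ → ℕ) {i : ℕ} (hi : i ≤ m) :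
    posk k a i < posk k a m + 1 + a (m + 1) := by
  have := posk_mono k a hi; omega

lemma cover (k m : ℕ) (a : ℕ → ℕ) (ha : ∀ i, a i ≤ k) {t : ℕ}
    (ht : t < posk k a m + 1 + a (m + 1)) :
    ∃ i ≤ m, posk k a i ≤ t + k ∧ t ≤ posk k a i + k := by
  by_cases h0 : t < posk k a 0
  · have h1 : posk k a 0 = a 0 := rfl
    have := ha 0
    exact ⟨0, Nat.zero_le m, by omega, by omega⟩
  push_neg at h0
  set P : ℕ → Prop := fun i => posk k a i ≤ t with hP
  set i := Nat.findGreatest P m with hi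
  have hspec : posk k a i ≤ t := Nat.findGreatest_spec (P := P) (Nat.zero_le m) h0
  have him : i ≤ m := Nat.findGreatest_le m
  by_cases hnear : t ≤ posk k a i + k
  · exact ⟨i, him, by omega, hnear⟩
  push_neg at hnear
  have hilt : i < m := by
    rcases Nat.eq_or_lt_of_le him with he | h'
    · exfalso
      have h2 := ha (m + 1)
      rw [he] at hnear
      omega
    · exact h'
  have hnotle : ¬ posk k a (i + 1) ≤ t :=
    Nat.findGreatest_is_greatest (P := P) (n := m) (by omega) (by omega)
  have hrec := posk_succ k a i
  have h3 := ha (i + 1)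
  exact ⟨i + 1, by omega, by omega, by omega⟩

lemma sigma_eq {L1 L2 : ℕ} (c1 : Fin L1 → Bool) (c2 : Fin L2 → Bool) (h : L1 = L2)
    (hc : ∀ j : Fin L1, c1 j = c2 (Fin.cast h j)) :
    (⟨L1, c1⟩ : Σ L : ℕ, Fin L → Bool) = ⟨L2, c2⟩ := by
  subst h
  exact congrArg (Sigma.mk L1) (funext fun j => (hc j).trans rfl)


lemma enc_true_iff (k m : ℕ) (a : ℕ → ℕ) (j : Fin (enc k m a).1) :
    (enc k m a).2 j = true ↔ ∃ i ≤ m, posk k a i = (j : ℕ) := by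
  show decide _ = true ↔ _
  rw [decide_eq_true_eq]
  constructor
  · rintro ⟨i, hi⟩; exact ⟨i.val, Nat.lt_succ_iff.mp i.isLt, hi⟩
  · rintro ⟨i, hi, he⟩; exact ⟨⟨i, Nat.lt_succ_of_le hi⟩, he⟩

lemma enc_max (k m : ℕ) (a : ℕ → ℕ) (ha : ∀ i, a i ≤ k) :
    FloryMaximal k (enc k m a).1 (enc k m a).2 := by
  have hperm : FloryPermissible k (enc k m a).1 (enc k m a).2 := by
    intro i j hi hj hne
    obtain ⟨p, hp, hpe⟩ := (enc_true_iff k m a i).1 hi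
    obtain ⟨q, hq, hqe⟩ := (enc_true_iff k m a j).1 hj
    have hvne : (i : ℕ) ≠ (j : ℕ) := fun h => hne (Fin.ext h)
    have hpq : p ≠ q := by rintro rfl; rw [hpe] at hqe; exact hvne hqe
    rcases hpq.lt_or_gt with h | h
    · have h2 := posk_lt k a h
      rw [le_abs]; right; omega
    · have h2 := posk_lt k a h
      rw [le_abs]; left; omega
  refine ⟨hperm, ?_⟩
  intro j hj hperm'
  obtain ⟨i, him, h1, h2⟩ := cover k m a ha j.isLt
  have hne : posk k a i ≠ (j : ℕ) := by
    intro h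
    have := (enc_true_iff k m a j).2 ⟨i, him, h⟩
    rw [hj] at this
    exact Bool.false_ne_true this
  set i0 : Fin (enc k m a).1 := ⟨posk k a i, enc_posk_lt k m a him⟩ with hi0
  have hval : (i0 : ℕ) = posk k a i := rfl
  have hi0j : i0 ≠ j := fun h => hne (congrArg Fin.val h)
  have ht1 : Function.update (enc k m a).2 j true i0 = true := by
    rw [Function.update_of_ne hi0j]
    exact (enc_true_iff k m a i0).2 ⟨i, him, rfl⟩
  have ht2 : Function.update (enc k m a).2 j true j = true := Function.update_self _ _ _
  have hcontra := hperm' i0 j ht1 ht2 hi0j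
  rcases abs_cases (((i0 : ℕ) : ℤ) - ((j : ℕ) : ℤ)) with ⟨he, _⟩ | ⟨he, _⟩ <;>
    rw [he] at hcontra <;> omega

lemma enc_card (k m : ℕ) (a : ℕ → ℕ) :
    (Finset.univ.filter fun j : Fin (enc k m a).1 => (enc k m a).2 j = true).card = m + 1 := by
  have hinj : Function.Injective
      (fun i : Fin (m + 1) =>
        (⟨posk k a i, enc_posk_lt k m a (Nat.lt_succ_iff.mp i.isLt)⟩ : Fin (enc k m a).1)) := by
    intro i i' h
    have h2 : posk k a i = posk k a i' := congrArg Fin.val h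
    by_contra hne
    have hne' : (i : ℕ) ≠ (i' : ℕ) := fun h => hne (Fin.ext h)
    rcases hne'.lt_or_gt with h' | h' <;> [have := posk_lt k a h'; have := posk_lt k a h'] <;> omega
  have h : (Finset.univ.filter fun j : Fin (enc k m a).1 => (enc k m a).2 j = true)
      = Finset.image (fun i : Fin (m + 1) =>
          (⟨posk k a i, enc_posk_lt k m a (Nat.lt_succ_iff.mp i.isLt)⟩ : Fin (enc k m a).1))
          Finset.univ := by
    ext j
    simp only [Finset.mem_filter, Finset.mem_univ, true_and, Finset.mem_image]
    rw [enc_true_iff]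
    constructor
    · rintro ⟨i, hi, he⟩
      exact ⟨⟨i, Nat.lt_succ_of_le hi⟩, Fin.ext he⟩
    · rintro ⟨i, rfl⟩
      exact ⟨i.val, Nat.lt_succ_iff.mp i.isLt, rfl⟩
  rw [h, Finset.card_image_of_injective _ hinj, Finset.card_univ, Fintype.card_fin]

lemma enc_occ_mono (k m : ℕ) (a a' : ℕ → ℕ) (h : enc k m a = enc k m a') :
    ∀ x : ℕ, (∃ i ≤ m, posk k a i = x) → (∃ i ≤ m, posk k a' i = x) := by
  rintro x ⟨i, hi, rfl⟩
  have h2 := congrArg (fun p : Σ L : ℕ, Fin L → Bool =>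
    ∃ j : Fin p.1, (j : ℕ) = posk k a i ∧ p.2 j = true) h
  rw [eq_iff_iff] at h2
  obtain ⟨j, hj1, hj2⟩ := h2.1
    ⟨⟨posk k a i, enc_posk_lt k m a hi⟩, rfl, (enc_true_iff k m a _).2 ⟨i, hi, rfl⟩⟩
  obtain ⟨i', hi', he⟩ := (enc_true_iff k m a' j).1 hj2
  exact ⟨i', hi', he.trans hj1⟩

lemma enc_inj (k m : ℕ) (a a' : ℕ → ℕ)
    (hz : ∀ i, m + 2 ≤ i → a i = 0) (hz' : ∀ i, m + 2 ≤ i → a' i = 0)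
    (h : enc k m a = enc k m a') : a = a' := by
  have hocc : ∀ x : ℕ, (∃ i ≤ m, posk k a i = x) ↔ (∃ i ≤ m, posk k a' i = x) :=
    fun x => ⟨enc_occ_mono k m a a' h x, enc_occ_mono k m a' a h.symm x⟩
  have hL : posk k a m + 1 + a (m + 1) = posk k a' m + 1 + a' (m + 1) :=
    congrArg Sigma.fst h
  set Fa := (Finset.range (m + 1)).image (posk k a) with hFa
  set Fa' := (Finset.range (m + 1)).image (posk k a') with hFa'
  have hFeq : Fa = Fa' := by
    ext x
    simp only [hFa, hFa', Finset.mem_image, Finset.mem_range, Nat.lt_succ_iff]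
    exact hocc x
  have hcard : Fa.card = m + 1 := by
    rw [hFa, Finset.card_image_of_injOn, Finset.card_range]
    intro i hi j hj hij
    simp only [Finset.coe_range, Set.mem_Iio] at hi hj
    by_contra hne
    rcases Nat.lt_or_ge i j with h' | h'
    · have := posk_lt k a h'; omega
    · have h'' : j < i := by omega
      have := posk_lt k a h''; omega
  have hmono : StrictMono (fun i : Fin (m + 1) => posk k a i.val) := by
    intro i j hij
    have := posk_lt k a (show (i : ℕ) < (j : ℕ) from hij)
    show posk k a (i : ℕ) < posk k a (j : ℕ)
    omega
  have hmono' : StrictMono (fun i : Fin (m + 1) => posk k a' i.val) := by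
    intro i j hij
    have := posk_lt k a' (show (i : ℕ) < (j : ℕ) from hij)
    show posk k a' (i : ℕ) < posk k a' (j : ℕ)
    omega
  have hmem : ∀ i : Fin (m + 1), posk k a i.val ∈ Fa := fun i =>
    Finset.mem_image.2 ⟨i.val, Finset.mem_range.2 i.isLt, rfl⟩
  have hmem' : ∀ i : Fin (m + 1), posk k a' i.val ∈ Fa := fun i => by
    rw [hFeq]
    exact Finset.mem_image.2 ⟨i.val, Finset.mem_range.2 i.isLt, rfl⟩
  have h1 := Finset.orderEmbOfFin_unique hcard hmem hmono
  have h2 := Finset.orderEmbOfFin_unique hcard hmem' hmono'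
  have hpp : ∀ i ≤ m, posk k a i = posk k a' i := by
    intro i hi
    exact congrFun (h1.trans h2.symm) ⟨i, Nat.lt_succ_of_le hi⟩
  funext i
  by_cases h0 : i = 0
  · subst h0
    exact hpp 0 (Nat.zero_le m)
  by_cases him : i ≤ m
  · obtain ⟨j, rfl⟩ : ∃ j, i = j + 1 := ⟨i - 1, by omega⟩
    have e1 := hpp j (by omega)
    have e2 := hpp (j + 1) him
    rw [posk_succ, posk_succ] at e2
    omega
  by_cases hm1 : i = m + 1
  · subst hm1
    have := hpp m le_rfl
    omega
  · rw [hz i (by omega), hz' i (by omega)]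

lemma sigma_eq' {p q : Σ L : ℕ, Fin L → Bool} (h : p.1 = q.1)
    (hc : ∀ j : Fin p.1, p.2 j = q.2 (Fin.cast h j)) : p = q := by
  obtain ⟨L1, c1⟩ := p
  obtain ⟨L2, c2⟩ := q
  exact sigma_eq c1 c2 h hc

lemma abs_iff (k p q : ℕ) :
    ((k : ℤ) + 1 ≤ |((p : ℕ) : ℤ) - ((q : ℕ) : ℤ)|) ↔ (p + (k + 1) ≤ q ∨ q + (k + 1) ≤ p) := by
  rcases abs_cases ((p : ℤ) - (q : ℤ)) with ⟨hh, _⟩ | ⟨hh, _⟩ <;> rw [hh] <;> omega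

lemma enc_surj (k m L : ℕ) (c : Fin L → Bool)
    (hmax : FloryMaximal k L c)
    (hcard : (Finset.univ.filter fun j : Fin L => c j = true).card = m + 1) :
    ∃ a : ℕ → ℕ, (∀ i, a i ≤ k) ∧ (∀ i, m + 2 ≤ i → a i = 0) ∧ enc k m a = ⟨L, c⟩ := by
  classical
  set e := (Finset.univ.filter fun j : Fin L => c j = true).orderEmbOfFin hcard with he
  have hmem : ∀ x : Fin L, c x = true ↔ ∃ i, e i = x := by
    intro x
    have h1 : x ∈ Set.range e ↔ c x = true := by
      rw [he, Finset.range_orderEmbOfFin, Finset.mem_coe, Finset.mem_filter]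
      simp
    rw [← h1, Set.mem_range]
  set idx : ℕ → Fin (m + 1) := fun i => ⟨min i m, by omega⟩ with hidxdef
  set v : ℕ → ℕ := fun i => ((e (idx i) : Fin L) : ℕ) with hvdef
  have hv_mono : ∀ i j : ℕ, i ≤ j → v i ≤ v j := by
    intro i j hij
    have h1 : idx i ≤ idx j := Fin.le_def.mpr (by simp only [hidxdef]; omega)
    exact Fin.le_def.mp (e.monotone h1)
  have hv_lt : ∀ i j : ℕ, j ≤ m → i < j → v i < v j := by
    intro i j hj hij
    have h1 : idx i < idx j := Fin.lt_def.mpr (by simp only [hidxdef]; omega)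
    exact Fin.lt_def.mp (e.strictMono h1)
  have hvL : ∀ i, v i < L := fun i => (e (idx i)).isLt
  have hocc : ∀ i : ℕ, c ⟨v i, hvL i⟩ = true := by
    intro i
    exact (hmem _).2 ⟨idx i, Fin.ext rfl⟩
  have hval_cases : ∀ z : Fin L, c z = true → ∃ i ≤ m, v i = (z : ℕ) := by
    intro z hz
    obtain ⟨i, rfl⟩ := (hmem z).1 hz
    refine ⟨i.val, Nat.lt_succ_iff.mp i.isLt, ?_⟩
    have h1 : idx i.val = i := Fin.ext (by simp only [hidxdef]; omega)
    simp only [hvdef]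
    rw [h1]
  have hkey : ∀ t : Fin L, c t = false → ∃ i ≤ m, v i ≤ (t : ℕ) + k ∧ (t : ℕ) ≤ v i + k := by
    intro t ht
    by_contra hcon
    push_neg at hcon
    apply hmax.2 t ht
    intro x y hx hy hxy
    have hfar : ∀ z : Fin L, c z = true → (k : ℤ) + 1 ≤ |((z : ℕ) : ℤ) - ((t : ℕ) : ℤ)| := by
      intro z hz
      obtain ⟨i, hi, hvi⟩ := hval_cases z hz
      have h2 : v i + k < (t : ℕ) ∨ (t : ℕ) + k < v i := by
        rcases le_or_gt (v i) ((t : ℕ) + k) with h' | h'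
        · exact Or.inl (hcon i hi h')
        · exact Or.inr h'
      rw [abs_iff]
      omega
    by_cases hxt : x = t
    · subst hxt
      have hy' : c y = true := by rwa [Function.update_of_ne (Ne.symm hxy)] at hy
      rw [abs_sub_comm]
      exact hfar y hy'
    by_cases hyt : y = t
    · subst hyt
      have hx' : c x = true := by rwa [Function.update_of_ne hxt] at hx
      exact hfar x hx'
    · have hx' : c x = true := by rwa [Function.update_of_ne hxt] at hx
      have hy' : c y = true := by rwa [Function.update_of_ne hyt] at hy
      exact hmax.1 x y hx' hy' hxy
  have hunocc : ∀ (w : ℕ) (hw : w < L), (∀ i, i ≤ m → v i ≠ w) → c ⟨w, hw⟩ = false := by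
    intro w hw hne
    cases hct : c ⟨w, hw⟩ with
    | false => rfl
    | true =>
      obtain ⟨i, hi, hvi⟩ := hval_cases _ hct
      exact absurd hvi (hne i hi)
  have h0 : v 0 ≤ k := by
    by_contra hgt
    push_neg at hgt
    have hw : v 0 - (k + 1) < L := by have := hvL 0; omega
    have hf : c ⟨v 0 - (k + 1), hw⟩ = false := hunocc _ hw (by
      intro i hi
      have := hv_mono 0 i (Nat.zero_le i)
      omega)
    obtain ⟨i, hi, h1, h2⟩ := hkey _ hf
    have hval : ((⟨v 0 - (k + 1), hw⟩ : Fin L) : ℕ) = v 0 - (k + 1) := rfl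
    have := hv_mono 0 i (Nat.zero_le i)
    omega
  have hgap_lo : ∀ i, i < m → v i + (k + 1) ≤ v (i + 1) := by
    intro i him
    have hlt := hv_lt i (i + 1) (by omega) (Nat.lt_succ_self i)
    have hne : (⟨v i, hvL i⟩ : Fin L) ≠ ⟨v (i + 1), hvL (i + 1)⟩ := by
      intro hq
      rw [Fin.mk.injEq] at hq
      omega
    have hp := hmax.1 _ _ (hocc i) (hocc (i + 1)) hne
    have hv1 : ((⟨v i, hvL i⟩ : Fin L) : ℕ) = v i := rfl
    have hv2 : ((⟨v (i + 1), hvL (i + 1)⟩ : Fin L) : ℕ) = v (i + 1) := rfl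
    rw [abs_iff] at hp
    omega
  have hgap_hi : ∀ i, i < m → v (i + 1) ≤ v i + (2 * k + 1) := by
    intro i him
    by_contra hgt
    push_neg at hgt
    have hw : v i + (k + 1) < L := by
      have := hvL (i + 1)
      omega
    have hf : c ⟨v i + (k + 1), hw⟩ = false := hunocc _ hw (by
      intro s hs
      rcases le_or_gt s i with h' | h'
      · have := hv_mono s i h'; omega
      · have := hv_mono (i + 1) s h'; omega)
    obtain ⟨s, hs, h1, h2⟩ := hkey _ hf
    have hval : ((⟨v i + (k + 1), hw⟩ : Fin L) : ℕ) = v i + (k + 1) := rfl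
    rcases le_or_gt s i with h' | h'
    · have := hv_mono s i h'; omega
    · have := hv_mono (i + 1) s h'; omega
  have hend : L ≤ v m + k + 1 := by
    by_contra hgt
    push_neg at hgt
    have hw : v m + k + 1 < L := by omega
    have hf : c ⟨v m + k + 1, hw⟩ = false := hunocc _ hw (by
      intro s hs
      have := hv_mono s m hs
      omega)
    obtain ⟨s, hs, h1, h2⟩ := hkey _ hf
    have hval : ((⟨v m + k + 1, hw⟩ : Fin L) : ℕ) = v m + k + 1 := rfl
    have := hv_mono s m hs
    omega
  set a : ℕ → ℕ := fun i => if i = 0 then v 0 else if i ≤ m then v i - v (i - 1) - (k + 1)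
    else if i = m + 1 then L - 1 - v m else 0 with hadef
  have ha0 : a 0 = v 0 := by simp [hadef]
  have haii : ∀ i, i < m → a (i + 1) = v (i + 1) - v i - (k + 1) := by
    intro i him
    simp only [hadef]
    rw [if_neg (by omega), if_pos (by omega), Nat.add_sub_cancel]
  have ham1 : a (m + 1) = L - 1 - v m := by
    simp only [hadef]
    rw [if_neg (by omega), if_neg (by omega)]
    simp
  have hale : ∀ i, a i ≤ k := by
    intro i
    by_cases h0' : i = 0
    · subst h0'; rw [ha0]; exact h0
    by_cases him : i ≤ m
    · obtain ⟨j, rfl⟩ : ∃ j, i = j + 1 := ⟨i - 1, by omega⟩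
      rw [haii j (by omega)]
      have := hgap_lo j (by omega)
      have := hgap_hi j (by omega)
      omega
    by_cases hm1 : i = m + 1
    · rw [hm1, ham1]
      have h2 := hvL m
      have h3 := hend
      omega
    · simp only [hadef]
      rw [if_neg h0', if_neg him, if_neg hm1]
      exact Nat.zero_le k
  have haz : ∀ i, m + 2 ≤ i → a i = 0 := by
    intro i hi
    simp only [hadef]
    rw [if_neg (by omega), if_neg (by omega), if_neg (by omega)]
  have hposk : ∀ i, i ≤ m → posk k a i = v i := by
    intro i
    induction i with
    | zero => exact fun _ => ha0
    | succ i ih =>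
      intro hi
      rw [posk_succ, ih (by omega), haii i (by omega)]
      have := hgap_lo i (by omega)
      omega
  have hLeq : (enc k m a).1 = L := by
    show posk k a m + 1 + a (m + 1) = L
    rw [hposk m le_rfl, ham1]
    have := hvL m
    omega
  refine ⟨a, hale, haz, sigma_eq' (q := ⟨L, c⟩) hLeq ?_⟩
  intro j
  have hjv : ((Fin.cast hLeq j : Fin L) : ℕ) = (j : ℕ) := rfl
  show (enc k m a).2 j = c (Fin.cast hLeq j)
  cases hc : c (Fin.cast hLeq j) with
  | true =>
    obtain ⟨i, hi, hvi⟩ := hval_cases _ hc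
    exact (enc_true_iff k m a j).2 ⟨i, hi, by rw [hposk i hi, hvi]; exact hjv⟩
  | false =>
    rw [Bool.eq_false_iff]
    intro htrue
    obtain ⟨i, hi, hpi⟩ := (enc_true_iff k m a j).1 htrue
    rw [hposk i hi] at hpi
    have heq : (⟨v i, hvL i⟩ : Fin L) = Fin.cast hLeq j := Fin.ext (hpi.trans hjv.symm)
    have h2 := hocc i
    rw [heq, hc] at h2
    exact Bool.false_ne_true h2

end FloryAux


theorem floryCount_fixed_houses (k : ℕ) (hk : 1 ≤ k) (n : ℕ) (hn : 1 ≤ n) :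
    {p : Σ L : ℕ, Fin L → Bool |
        FloryMaximal k p.1 p.2 ∧
          (Finset.univ.filter fun j : Fin p.1 => p.2 j = true).card = n}.Finite ∧
    {p : Σ L : ℕ, Fin L → Bool |
        FloryMaximal k p.1 p.2 ∧
          (Finset.univ.filter fun j : Fin p.1 => p.2 j = true).card = n}.ncard =
      (k + 1) ^ (n + 1) := by
  classical
  obtain ⟨m, rfl⟩ : ∃ m, n = m + 1 := ⟨n - 1, by omega⟩
  set f : (Fin (m + 2) → Fin (k + 1)) → Σ L : ℕ, Fin L → Bool :=
    fun v => FloryAux.enc k m (fun i => if h : i < m + 2 then (v ⟨i, h⟩ : ℕ) else 0) with hf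
  have hbd : ∀ v : Fin (m + 2) → Fin (k + 1), ∀ i : ℕ,
      (if h : i < m + 2 then ((v ⟨i, h⟩ : Fin (k + 1)) : ℕ) else 0) ≤ k := by
    intro v i
    split
    · exact Nat.lt_succ_iff.mp (v _).isLt
    · exact Nat.zero_le k
  have hz0 : ∀ v : Fin (m + 2) → Fin (k + 1), ∀ i : ℕ, m + 2 ≤ i →
      (if h : i < m + 2 then ((v ⟨i, h⟩ : Fin (k + 1)) : ℕ) else 0) = 0 := by
    intro v i hi
    rw [dif_neg (by omega)]
  have hinj : Function.Injective f := by
    intro v w h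
    have h2 := FloryAux.enc_inj k m _ _ (hz0 v) (hz0 w) h
    funext i
    have h3 := congrFun h2 i.val
    rw [dif_pos i.isLt, dif_pos i.isLt] at h3
    exact Fin.val_injective (by simpa using h3)
  have hset : {p : Σ L : ℕ, Fin L → Bool |
        FloryMaximal k p.1 p.2 ∧
          (Finset.univ.filter fun j : Fin p.1 => p.2 j = true).card = m + 1} = Set.range f := by
    ext p
    simp only [Set.mem_setOf_eq, Set.mem_range]
    constructor
    · rintro ⟨hmax, hcard⟩
      obtain ⟨a, ha, hz, henc⟩ := FloryAux.enc_surj k m p.1 p.2 hmax hcard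
      refine ⟨fun i => ⟨a i.val, Nat.lt_succ_of_le (ha i.val)⟩, ?_⟩
      have hfun : (fun i : ℕ => if h : i < m + 2 then
          (((fun i : Fin (m + 2) => (⟨a i.val, Nat.lt_succ_of_le (ha i.val)⟩ : Fin (k + 1))) ⟨i, h⟩ : Fin (k + 1)) : ℕ) else 0) = a := by
        funext i
        split
        · rfl
        · rw [hz i (by omega)]
      show FloryAux.enc k m _ = p
      rw [hfun, henc]
    · rintro ⟨v, rfl⟩
      exact ⟨FloryAux.enc_max k m _ (hbd v), FloryAux.enc_card k m _⟩
  rw [hset]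
  refine ⟨Set.finite_range f, ?_⟩
  rw [← Set.image_univ, Set.ncard_image_of_injective _ hinj, Set.ncard_univ]
  simp [Nat.card_eq_fintype_card, Fintype.card_fun]
end

section
/- For every n ≥ 1: (i) every permissible Riviera configuration of length n has at most ⌈2n/3⌉ occupied lots, and (ii) there exists a maximal Riviera configuration of length n with exactly ⌈2n/3⌉ occupied lots. Hence the largest possible number of occupied lots in a maximal Riviera configuration of length n is ⌈2n/3⌉. -/
/-- The number of occupied lots of a configuration of length `n`. -/
noncomputable def rivieraOccupancy (n : ℕ) (c : ℤ → Bool) : ℕ :=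
  ((Finset.Ico (0 : ℤ) (n : ℤ)).filter fun j => c j = true).card

/-!
Any three consecutive lots of a permissible configuration hold at most two houses, so cutting
`{0, …, n−1}` into blocks of three (plus a remainder of at most two lots) gives at most
`⌈2n/3⌉` houses. The bound is attained by occupying exactly the lots `j` with `j % 3 ≠ 2`: a
house on an empty lot `j` would complete the triple `j − 1, j, j + 1`, or `j − 2, j − 1, j` when
`j` is the last lot.
-/

open Finset

lemma natCeil_two_mul_div_three (n : ℕ) : ⌈(2 * n : ℚ) / 3⌉₊ = (2 * n + 2) / 3 := by
  apply le_antisymm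
  · rw [Nat.ceil_le, div_le_iff₀ three_pos]
    exact_mod_cast (by omega : 2 * n ≤ (2 * n + 2) / 3 * 3)
  · have hceil := Nat.le_ceil ((2 * n : ℚ) / 3)
    rw [div_le_iff₀ three_pos] at hceil
    have : 2 * n ≤ ⌈(2 * n : ℚ) / 3⌉₊ * 3 := by exact_mod_cast hceil
    omega

lemma RivieraPermissible.card_filter_Ico_three_le {c : ℤ → Bool} (hc : RivieraPermissible c)
    (a : ℤ) : #{j ∈ Ico a (a + 3) | c j = true} ≤ 2 := by
  obtain ⟨j, hj, hcj⟩ : ∃ j ∈ Ico a (a + 3), c j = false := by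
    by_contra! hall
    have hocc : ∀ k, a ≤ k → k < a + 3 → c k = true := fun k h₁ h₂ => by
      simpa using hall k (mem_Ico.mpr ⟨h₁, h₂⟩)
    exact hc ⟨a + 1, hocc _ (by omega) (by omega), hocc _ (by omega) (by omega),
      hocc _ (by omega) (by omega)⟩
  calc #{j ∈ Ico a (a + 3) | c j = true}
      ≤ #((Ico a (a + 3)).erase j) := card_le_card fun x hx => by
        rw [mem_filter] at hx
        exact mem_erase.mpr ⟨by rintro rfl; simp_all, hx.1⟩
    _ = 2 := by rw [card_erase_of_mem hj, Int.card_Ico]; omega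

lemma RivieraPermissible.rivieraOccupancy_le {c : ℤ → Bool} (hc : RivieraPermissible c)
    (n : ℕ) : rivieraOccupancy n c ≤ (2 * n + 2) / 3 := by
  induction n using Nat.strong_induction_on with
  | _ n ih =>
    rcases lt_or_ge n 3 with hn | hn
    · have : rivieraOccupancy n c ≤ n :=
        (card_filter_le _ _).trans (by simp)
      omega
    · obtain ⟨m, rfl⟩ := Nat.exists_eq_add_of_le' hn
      have hsplit : Ico (0 : ℤ) ((m + 3 : ℕ) : ℤ) = Ico 0 (m : ℤ) ∪ Ico (m : ℤ) (m + 3) := by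
        push_cast
        exact (Ico_union_Ico_eq_Ico (by omega) (by omega)).symm
      have hhead := ih m (by omega)
      have hblock := hc.card_filter_Ico_three_le m
      have : rivieraOccupancy (m + 3) c ≤ rivieraOccupancy m c + 2 := by
        rw [rivieraOccupancy, hsplit, filter_union]
        exact (card_union_le _ _).trans (Nat.add_le_add_left hblock _)
      omega

lemma card_filter_Ico_emod_three_ne_two (n : ℕ) :
    #{j ∈ Ico (0 : ℤ) n | j % 3 ≠ 2} = (2 * n + 2) / 3 := by
  induction n with
  | zero => simp
  | succ n ih =>
    have hinsert : Ico (0 : ℤ) ((n + 1 : ℕ) : ℤ) = insert (n : ℤ) (Ico 0 (n : ℤ)) := by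
      ext j
      simp only [mem_Ico, mem_insert]
      omega
    rw [hinsert, filter_insert]
    by_cases h : (n : ℤ) % 3 = 2
    · simp only [h, ne_eq, not_true_eq_false, if_false, ih]
      omega
    · rw [if_pos h, card_insert_of_notMem (by simp), ih]
      have : n % 3 = 0 ∨ n % 3 = 1 := by omega
      omega

def rivieraPattern (n : ℕ) (j : ℤ) : Bool :=
  decide (0 ≤ j ∧ j < n ∧ j % 3 ≠ 2)

lemma rivieraPattern_eq_true {n : ℕ} {j : ℤ} :
    rivieraPattern n j = true ↔ 0 ≤ j ∧ j < n ∧ j % 3 ≠ 2 := by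
  simp [rivieraPattern]

lemma rivieraConfig_rivieraPattern (n : ℕ) : RivieraConfig n (rivieraPattern n) := by
  intro j hj
  rw [← Bool.not_eq_true, rivieraPattern_eq_true]
  omega

lemma rivieraMaximal_rivieraPattern (n : ℕ) : RivieraMaximal n (rivieraPattern n) := by
  refine ⟨fun ⟨i, h₁, h₂, h₃⟩ => ?_, fun j hj₀ hjn hcj hperm => ?_⟩
  · rw [rivieraPattern_eq_true] at h₁ h₂ h₃
    omega
  rw [← Bool.not_eq_true, rivieraPattern_eq_true] at hcj
  have hj₂ : j % 3 = 2 := by omega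
  by_cases hlast : j + 1 < n
  · refine hperm ⟨j, ?_, Function.update_self .., ?_⟩
    · rw [Function.update_of_ne (by omega), rivieraPattern_eq_true]; omega
    · rw [Function.update_of_ne (by omega), rivieraPattern_eq_true]; omega
  · refine hperm ⟨j - 1, ?_, ?_, ?_⟩
    · rw [Function.update_of_ne (by omega), rivieraPattern_eq_true]; omega
    · rw [Function.update_of_ne (by omega), rivieraPattern_eq_true]; omega
    · rw [sub_add_cancel, Function.update_self]

lemma rivieraOccupancy_rivieraPattern (n : ℕ) :
    rivieraOccupancy n (rivieraPattern n) = (2 * n + 2) / 3 := by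
  rw [rivieraOccupancy, ← card_filter_Ico_emod_three_ne_two]
  congr 1
  refine filter_congr fun j hj => ?_
  rw [rivieraPattern_eq_true, mem_Ico] at *
  omega

theorem riviera_max_occupancy_general (n : ℕ) :
    (∀ c : ℤ → Bool, RivieraConfig n c → RivieraPermissible c →
      rivieraOccupancy n c ≤ ⌈(2 * n : ℚ) / 3⌉₊) ∧
    (∃ c : ℤ → Bool, RivieraConfig n c ∧ RivieraMaximal n c ∧
      rivieraOccupancy n c = ⌈(2 * n : ℚ) / 3⌉₊) := by
  rw [natCeil_two_mul_div_three]
  exact ⟨fun c _ hc => hc.rivieraOccupancy_le n,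
    ⟨rivieraPattern n, rivieraConfig_rivieraPattern n, rivieraMaximal_rivieraPattern n,
      rivieraOccupancy_rivieraPattern n⟩⟩

theorem riviera_max_occupancy (n : ℕ) (hn : 1 ≤ n) :
    (∀ c : ℤ → Bool, RivieraConfig n c → RivieraPermissible c →
      rivieraOccupancy n c ≤ ⌈(2 * n : ℚ) / 3⌉₊) ∧
    (∃ c : ℤ → Bool, RivieraConfig n c ∧ RivieraMaximal n c ∧
      rivieraOccupancy n c = ⌈(2 * n : ℚ) / 3⌉₊) :=
  riviera_max_occupancy_general n
end

section
/- Let n ∈ ℕ and let c be a Riviera configuration of length n. Define the Riviera configuration c' of length n + 7 by prefixing c with the word 0110 and suffixing it with the word 011 (that is, c'(0)=false, c'(1)=true, c'(2)=true, c'(3)=false, c'(j) = c(j−4) for 4 ≤ j ≤ n+3, c'(n+4)=false, c'(n+5)=true, c'(n+6)=true). Then c is maximal if and only if c' is maximal. Consequently, the map c ↦ c' is a bijection between the maximal Riviera configurations of length n and the maximal Riviera configurations of length n+7 that start with 0110 and end with 011. -/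
def extendConf (n : ℕ) (c : ℤ → Bool) : ℤ → Bool := fun j =>
  if j = 1 ∨ j = 2 then true
  else if 4 ≤ j ∧ j ≤ (n : ℤ) + 3 then c (j - 4)
  else if j = (n : ℤ) + 5 ∨ j = (n : ℤ) + 6 then true
  else false

lemma ec_mid (n : ℕ) (c : ℤ → Bool) {j : ℤ} (h4 : 4 ≤ j) (hn : j ≤ (n:ℤ)+3) :
    extendConf n c j = c (j - 4) := by
  simp only [extendConf]
  split_ifs with h1 h2 <;> first | rfl | omega

lemma ec_true (n : ℕ) (c : ℤ → Bool) {j : ℤ}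
    (h : j = 1 ∨ j = 2 ∨ j = (n:ℤ)+5 ∨ j = (n:ℤ)+6) : extendConf n c j = true := by
  simp only [extendConf]
  split_ifs with h1 h2 h3 <;> first | rfl | (exfalso; omega)

lemma ec_false (n : ℕ) (c : ℤ → Bool) {j : ℤ}
    (h : j < 0 ∨ j = 0 ∨ j = 3 ∨ j = (n:ℤ)+4 ∨ (n:ℤ)+7 ≤ j) : extendConf n c j = false := by
  simp only [extendConf]
  split_ifs with h1 h2 h3 <;> first | rfl | (exfalso; omega)

lemma ec_true_cases (n : ℕ) (c : ℤ → Bool) {j : ℤ} (h : extendConf n c j = true) :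
    j = 1 ∨ j = 2 ∨ j = (n:ℤ)+5 ∨ j = (n:ℤ)+6 ∨
      (4 ≤ j ∧ j ≤ (n:ℤ)+3 ∧ c (j-4) = true) := by
  simp only [extendConf] at h
  split_ifs at h with h1 h2 h3
  · tauto
  · exact Or.inr (Or.inr (Or.inr (Or.inr ⟨h2.1, h2.2, h⟩)))
  · tauto

lemma perm_up (n : ℕ) (c : ℤ → Bool) (hp : RivieraPermissible c) :
    RivieraPermissible (extendConf n c) := by
  rintro ⟨i, h1, h2, h3⟩
  rcases ec_true_cases n c h1 with h|h|h|h|⟨a1,b1,t1⟩ <;>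
    rcases ec_true_cases n c h2 with g|g|g|g|⟨a2,b2,t2⟩ <;>
      rcases ec_true_cases n c h3 with f|f|f|f|⟨a3,b3,t3⟩ <;> try omega
  exact hp ⟨i - 4, by rw [show i-4-1 = i-1-4 by ring]; exact t1, t2,
    by rw [show i-4+1 = i+1-4 by ring]; exact t3⟩

lemma perm_down (n : ℕ) (c : ℤ → Bool) (hc : RivieraConfig n c)
    (hp : RivieraPermissible (extendConf n c)) : RivieraPermissible c := by
  rintro ⟨i, h1, h2, h3⟩
  have b1 : ¬(i-1 < 0 ∨ (n:ℤ) ≤ i-1) := fun hh => by simp [hc _ hh] at h1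
  have b2 : ¬(i < 0 ∨ (n:ℤ) ≤ i) := fun hh => by simp [hc _ hh] at h2
  have b3 : ¬(i+1 < 0 ∨ (n:ℤ) ≤ i+1) := fun hh => by simp [hc _ hh] at h3
  exact hp ⟨i + 4,
    by rw [show i+4-1 = i+3 by ring, ec_mid n c (by omega) (by omega),
        show i+3-4 = i-1 by ring]; exact h1,
    by rw [ec_mid n c (by omega) (by omega), show i+4-4 = i by ring]; exact h2,
    by rw [show i+4+1 = i+5 by ring, ec_mid n c (by omega) (by omega),
        show i+5-4 = i+1 by ring]; exact h3⟩

lemma upd_up (n : ℕ) (c : ℤ → Bool) (hc : RivieraConfig n c) {k m : ℤ}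
    (hk0 : 0 ≤ k) (hkn : k < (n:ℤ))
    (hm : Function.update c k true m = true) :
    Function.update (extendConf n c) (k+4) true (m+4) = true := by
  rw [Function.update_apply] at hm ⊢
  by_cases h : m = k
  · rw [if_pos (by omega : m+4 = k+4)]
  · rw [if_neg h] at hm
    have hb : ¬(m < 0 ∨ (n:ℤ) ≤ m) := fun hh => by simp [hc m hh] at hm
    rw [if_neg (by omega : ¬ m+4 = k+4), ec_mid n c (by omega) (by omega),
      show m+4-4 = m by ring]
    exact hm

lemma max_up (n : ℕ) (c : ℤ → Bool) (hc : RivieraConfig n c)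
    (hm : RivieraMaximal n c) : RivieraMaximal (n+7) (extendConf n c) := by
  obtain ⟨hp, hadd⟩ := hm
  refine ⟨perm_up n c hp, ?_⟩
  intro j hj0 hjn hjf hperm
  push_cast at hjn
  have hne1 : j ≠ 1 := by rintro rfl; rw [ec_true n c (by omega)] at hjf; cases hjf
  have hne2 : j ≠ 2 := by rintro rfl; rw [ec_true n c (by omega)] at hjf; cases hjf
  have hne5 : j ≠ (n:ℤ)+5 := by rintro rfl; rw [ec_true n c (by omega)] at hjf; cases hjf
  have hne6 : j ≠ (n:ℤ)+6 := by rintro rfl; rw [ec_true n c (by omega)] at hjf; cases hjf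
  have hcase : j = 0 ∨ j = 3 ∨ j = (n:ℤ)+4 ∨ (4 ≤ j ∧ j ≤ (n:ℤ)+3) := by omega
  rcases hcase with rfl|rfl|rfl|⟨h4,hn3⟩
  · exact hperm ⟨1,
      by rw [show (1:ℤ)-1 = 0 by ring, Function.update_self],
      by rw [Function.update_apply, if_neg (by omega)]; exact ec_true n c (by omega),
      by rw [show (1:ℤ)+1 = 2 by ring, Function.update_apply, if_neg (by omega)];
         exact ec_true n c (by omega)⟩
  · exact hperm ⟨2,
      by rw [show (2:ℤ)-1 = 1 by ring, Function.update_apply, if_neg (by omega)];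
         exact ec_true n c (by omega),
      by rw [Function.update_apply, if_neg (by omega)]; exact ec_true n c (by omega),
      by rw [show (2:ℤ)+1 = 3 by ring, Function.update_self]⟩
  · exact hperm ⟨(n:ℤ)+5,
      by rw [show (n:ℤ)+5-1 = (n:ℤ)+4 by ring, Function.update_self],
      by rw [Function.update_apply, if_neg (by omega)]; exact ec_true n c (by omega),
      by rw [show (n:ℤ)+5+1 = (n:ℤ)+6 by ring, Function.update_apply, if_neg (by omega)];
         exact ec_true n c (by omega)⟩
  · have hcf : c (j-4) = false := by rw [← ec_mid n c h4 hn3]; exact hjf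
    refine hadd (j-4) (by omega) (by omega) hcf ?_
    rintro ⟨i, g1, g2, g3⟩
    have e4 : j - 4 + 4 = j := by ring
    refine hperm ⟨i+4, ?_, ?_, ?_⟩
    · have := upd_up n c hc (k := j-4) (by omega) (by omega) g1
      rw [e4, show i-1+4 = i+4-1 by ring] at this; exact this
    · have := upd_up n c hc (k := j-4) (by omega) (by omega) g2
      rw [e4] at this; exact this
    · have := upd_up n c hc (k := j-4) (by omega) (by omega) g3
      rw [e4, show i+1+4 = i+4+1 by ring] at this; exact this

lemma max_down (n : ℕ) (c : ℤ → Bool) (hc : RivieraConfig n c)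
    (hm : RivieraMaximal (n+7) (extendConf n c)) : RivieraMaximal n c := by
  obtain ⟨hp, hadd⟩ := hm
  refine ⟨perm_down n c hc hp, ?_⟩
  intro j hj0 hjn hjf hperm
  have hdf : extendConf n c (j+4) = false := by
    rw [ec_mid n c (by omega) (by omega), show j+4-4 = j by ring]; exact hjf
  have h2 := hadd (j+4) (by omega) (by push_cast; omega) hdf
  rw [RivieraPermissible, not_not] at h2
  obtain ⟨i, g1, g2, g3⟩ := h2
  have key : ∀ m : ℤ, Function.update (extendConf n c) (j+4) true m = true →
      m = 1 ∨ m = 2 ∨ m = (n:ℤ)+5 ∨ m = (n:ℤ)+6 ∨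
        (4 ≤ m ∧ m ≤ (n:ℤ)+3 ∧ Function.update c j true (m-4) = true) := by
    intro m hm
    rw [Function.update_apply] at hm
    by_cases h : m = j + 4
    · exact Or.inr (Or.inr (Or.inr (Or.inr ⟨by omega, by omega,
        by rw [Function.update_apply, if_pos (by omega : m-4 = j)]⟩)))
    · rw [if_neg h] at hm
      rcases ec_true_cases n c hm with h'|h'|h'|h'|⟨a,b,t⟩
      · tauto
      · tauto
      · tauto
      · tauto
      · exact Or.inr (Or.inr (Or.inr (Or.inr ⟨a, b,
          by rw [Function.update_apply, if_neg (by omega : ¬ m-4 = j)]; exact t⟩)))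
  rcases key _ g1 with h|h|h|h|⟨a1,b1,t1⟩ <;>
    rcases key _ g2 with g|g|g|g|⟨a2,b2,t2⟩ <;>
      rcases key _ g3 with f|f|f|f|⟨a3,b3,t3⟩ <;> try omega
  exact hperm ⟨i - 4, by rw [show i-4-1 = i-1-4 by ring]; exact t1, t2,
    by rw [show i-4+1 = i+1-4 by ring]; exact t3⟩

lemma config_up (n : ℕ) (c : ℤ → Bool) : RivieraConfig (n+7) (extendConf n c) := by
  intro j hj
  push_cast at hj
  exact ec_false n c (by omega)

theorem riviera_extend_bijection (n : ℕ) :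
    (∀ c : ℤ → Bool, RivieraConfig n c →
      (RivieraMaximal n c ↔ RivieraMaximal (n + 7) (extendConf n c))) ∧
    Set.BijOn (extendConf n)
      {c : ℤ → Bool | RivieraConfig n c ∧ RivieraMaximal n c}
      {d : ℤ → Bool | RivieraConfig (n + 7) d ∧ RivieraMaximal (n + 7) d ∧
        d 0 = false ∧ d 1 = true ∧ d 2 = true ∧ d 3 = false ∧
        d ((n : ℤ) + 4) = false ∧ d ((n : ℤ) + 5) = true ∧ d ((n : ℤ) + 6) = true} := by
  refine ⟨fun c hc => ⟨max_up n c hc, max_down n c hc⟩, ?_, ?_, ?_⟩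
  · rintro c ⟨hc, hm⟩
    exact ⟨config_up n c, max_up n c hc hm,
      ec_false n c (by omega), ec_true n c (by omega), ec_true n c (by omega),
      ec_false n c (by omega), ec_false n c (by omega), ec_true n c (by omega),
      ec_true n c (by omega)⟩
  · rintro c1 ⟨hc1, -⟩ c2 ⟨hc2, -⟩ heq
    funext i
    by_cases hi : 0 ≤ i ∧ i < (n:ℤ)
    · have := congrFun heq (i+4)
      rwa [ec_mid n c1 (by omega) (by omega), ec_mid n c2 (by omega) (by omega),
        show i+4-4 = i by ring] at this
    · rw [hc1 i (by omega), hc2 i (by omega)]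
  · rintro d ⟨hdc, hdm, e0, e1, e2, e3, e4, e5, e6⟩
    have hcc : RivieraConfig n (fun i => if 0 ≤ i ∧ i < (n:ℤ) then d (i+4) else false) := by
      intro j hj
      simp only
      rw [if_neg (by omega)]
    have heq : extendConf n (fun i => if 0 ≤ i ∧ i < (n:ℤ) then d (i+4) else false) = d := by
      funext j
      simp only [extendConf]
      by_cases h1 : j = 1 ∨ j = 2
      · rw [if_pos h1]
        rcases h1 with rfl|rfl
        exacts [e1.symm, e2.symm]
      rw [if_neg h1]
      by_cases h2 : 4 ≤ j ∧ j ≤ (n:ℤ)+3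
      · rw [if_pos h2, if_pos (⟨by omega, by omega⟩ : 0 ≤ j-4 ∧ j-4 < (n:ℤ)),
          show j-4+4 = j by ring]
      rw [if_neg h2]
      by_cases h3 : j = (n:ℤ)+5 ∨ j = (n:ℤ)+6
      · rw [if_pos h3]
        rcases h3 with rfl|rfl
        exacts [e5.symm, e6.symm]
      rw [if_neg h3]
      · have hcase : j < 0 ∨ ((n:ℤ)+7) ≤ j ∨ j = 0 ∨ j = 3 ∨ j = (n:ℤ)+4 := by omega
        rcases hcase with h|h|rfl|rfl|rfl
        · exact (hdc j (Or.inl h)).symm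
        · exact (hdc j (Or.inr (by push_cast; omega))).symm
        · exact e0.symm
        · exact e3.symm
        · exact e4.symm
    exact ⟨_, ⟨hcc, max_down n _ hcc (by rw [heq]; exact hdm)⟩, heq⟩
end
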